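/- arXiv:2304.02254 — 8 statements merged into one kernel-verified Lean document; each statement's English description precedes it below -/
import Mathlib

section
/- Let f_p : ℝ^J → ℝ be a homogeneous polynomial of degree p ≥ 3, and let w ∈ ℝ^J with ‖w‖ = 1 be a critical point of the restriction of f_p to the unit sphere such that f_p(w) > 0. Then for any constant c, the curve x(t) = (p(p−2) f_p(w) (t + c))^{−1/(p−2)} · w, defined for t + c > 0, solves the gradient flow equation x′(t) = −∇f_p(x(t)). -/
open Real Filter
open scoped RealInnerProductSpace

lemma grad_homog {J p : ℕ} (hp : 3 ≤ p)
    (f : EuclideanSpace ℝ (Fin J) → ℝ)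
    (hf : ContDiff ℝ (⊤ : ℕ∞) f)
    (hhom : ∀ (c : ℝ) (x : EuclideanSpace ℝ (Fin J)), f (c • x) = c ^ p * f x)
    {a : ℝ} (ha : 0 < a) (x : EuclideanSpace ℝ (Fin J)) :
    gradient f (a • x) = a ^ (p - 1) • gradient f x := by
  have hdiff : Differentiable ℝ f := hf.differentiable (by simp)
  have h1 : fderiv ℝ (fun y => f (a • y)) x = a • fderiv ℝ f (a • x) := by
    have := (hdiff (a • x)).hasFDerivAt.comp x
      ((hasFDerivAt_id x).const_smul a)
    have h2 : HasFDerivAt (fun y => f (a • y)) (a • fderiv ℝ f (a • x)) x := by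
      refine this.congr_fderiv ?_
      ext v
      simp [ContinuousLinearMap.map_smul]
    exact h2.fderiv
  have h2 : fderiv ℝ (fun y => f (a • y)) x = a ^ p • fderiv ℝ f x := by
    have : (fun y => f (a • y)) = fun y => a ^ p * f y := funext (hhom a)
    rw [this]
    ext v
    rw [fderiv_const_mul (hdiff x)]
  have key : fderiv ℝ f (a • x) = a ^ (p - 1) • fderiv ℝ f x := by
    have hne : a ≠ 0 := ha.ne'
    have hap : a ^ p = a * a ^ (p - 1) := by
      rw [← pow_succ']
      congr 1
      omega
    have := h1.symm.trans h2
    rw [hap, mul_smul] at this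
    exact smul_right_injective _ hne this
  simp only [gradient, key, map_smul]

/-- If `w` is a unit critical point of the restriction of a degree-`p`
homogeneous function `f` to the sphere (expressed via `∇f(w) = p f(w) • w`) with
`f w > 0`, then `x(t) = (p(p-2) f(w) (t+c))^{-1/(p-2)} • w` solves `x' = -∇f(x)`
for `t + c > 0`. -/
theorem radial_solution_gradient_flow
    (J p : ℕ) (hp : 3 ≤ p)
    (f : EuclideanSpace ℝ (Fin J) → ℝ)
    (hf : ContDiff ℝ (⊤ : ℕ∞) f)
    (hhom : ∀ (c : ℝ) (x : EuclideanSpace ℝ (Fin J)), f (c • x) = c ^ p * f x)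
    (w : EuclideanSpace ℝ (Fin J)) (hw : ‖w‖ = 1)
    (hcrit : gradient f w = ((p : ℝ) * f w) • w)
    (hpos : 0 < f w)
    (c : ℝ) :
    ∀ t : ℝ, 0 < t + c →
      HasDerivAt
        (fun s : ℝ =>
          (((p : ℝ) * ((p : ℝ) - 2) * f w * (s + c)) ^ (-(1 : ℝ) / ((p : ℝ) - 2))) • w)
        (-(gradient f
          ((((p : ℝ) * ((p : ℝ) - 2) * f w * (t + c)) ^ (-(1 : ℝ) / ((p : ℝ) - 2))) • w)))
        t := by
  intro t ht
  set A : ℝ := (p : ℝ) * ((p : ℝ) - 2) * f w with hA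
  set r : ℝ := -(1 : ℝ) / ((p : ℝ) - 2) with hr
  have hp2 : (0:ℝ) < (p : ℝ) - 2 := by
    have : (3:ℝ) ≤ p := by exact_mod_cast hp
    linarith
  have hppos : (0:ℝ) < (p:ℝ) := by linarith
  have hApos : 0 < A := by positivity
  have hX : 0 < A * (t + c) := mul_pos hApos ht
  -- derivative of the scalar factor
  have hinner : HasDerivAt (fun s : ℝ => A * (s + c)) A t := by
    simpa using ((hasDerivAt_id t).add_const c).const_mul A
  have hd : HasDerivAt (fun s : ℝ => (A * (s + c)) ^ r) (A * r * (A * (t + c)) ^ (r - 1)) t :=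
    hinner.rpow_const (Or.inl hX.ne')
  have hd2 := hd.smul_const w
  -- identify the derivative vector
  set a : ℝ := (A * (t + c)) ^ r with ha
  have hapos : 0 < a := rpow_pos_of_pos hX r
  have hgrad : gradient f (a • w) = a ^ (p - 1) • gradient f w :=
    grad_homog hp f hf hhom hapos w
  have hscal : A * r * (A * (t + c)) ^ (r - 1) = -(a ^ (p - 1) * ((p : ℝ) * f w)) := by
    have h1 : a ^ (p - 1) = (A * (t + c)) ^ (r * ((p:ℝ) - 1)) := by
      rw [ha, ← rpow_natCast _ (p-1), ← rpow_mul hX.le]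
      congr 1
      push_cast [Nat.cast_sub (by omega : 1 ≤ p)]
      ring
    have h2 : r * ((p:ℝ) - 1) = r - 1 := by
      have hr2 : r * ((p:ℝ) - 2) = -1 := by rw [hr, div_mul_cancel₀ _ hp2.ne']
      linear_combination hr2
    rw [h1, h2]
    have hAr : A * r = -((p:ℝ) * f w) := by
      have hr2 : r * ((p:ℝ) - 2) = -1 := by rw [hr, div_mul_cancel₀ _ hp2.ne']
      rw [hA]
      linear_combination ((p:ℝ) * f w) * hr2
    rw [hAr]
    ring
  have : -(gradient f (a • w)) = (A * r * (A * (t + c)) ^ (r - 1)) • w := by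
    rw [hgrad, hcrit, hscal, smul_smul]
    simp [neg_smul]
  rw [this]
  exact hd2
end

section
/- (Merle–Zaag ODE lemma, dichotomy form) Let X₊, X₀, X₋ : [0,∞) → [0,∞) be absolutely continuous functions with X₊(t)+X₀(t)+X₋(t) > 0 for all t ≥ 0 and liminf_{t→∞} X₊(t) = 0. Suppose there are b > 0 and functions Y₊, Y₀, Y₋ with Y₊(t)² + Y₀(t)² + Y₋(t)² = o(1)·(X₊(t)² + X₀(t)² + X₋(t)²) as t → ∞, such that X₊′(t) − bX₊(t) ≥ Y₊(t), |X₀′(t)| ≤ Y₀(t), and X₋′(t) + bX₋(t) ≤ Y₋(t) for a.e. t. Then either X₊(t) + X₋(t) = o(1)·X₀(t), or X₊(t) + X₀(t) = o(1)·X₋(t) as t → ∞. -/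
open Real Filter MeasureTheory
open scoped RealInnerProductSpace

open intervalIntegral

lemma intcmp (g : ℝ → ℝ) (hg : ∀ s t : ℝ, IntervalIntegrable g volume s t)
    (f : ℝ → ℝ) (hf : Continuous f) (κ a : ℝ)
    (hbound : ∀ᵐ u ∂volume, a ≤ u → κ * f u ≤ g u) :
    ∀ s t : ℝ, a ≤ s → s ≤ t → κ * ∫ x in s..t, f x ≤ ∫ x in s..t, g x := by
  intro s t has hst
  rw [← intervalIntegral.integral_const_mul]
  apply intervalIntegral.integral_mono_ae_restrict hst
    ((hf.const_smul κ).intervalIntegrable s t) (hg s t)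
  have h1 : ∀ᵐ u ∂(volume.restrict (Set.Icc s t)), a ≤ u → κ * f u ≤ g u :=
    ae_restrict_of_ae hbound
  have h2 : ∀ᵐ u ∂(volume.restrict (Set.Icc s t)), u ∈ Set.Icc s t :=
    ae_restrict_mem measurableSet_Icc
  filter_upwards [h1, h2] with u hu hmem
  exact hu (has.trans hmem.1)

lemma lemA_pos (g : ℝ → ℝ) (hg : ∀ s t : ℝ, IntervalIntegrable g volume s t)
    (a c κ : ℝ) (hc : 0 ≤ c) (hκ : 0 ≤ κ)
    (hbound : ∀ᵐ u ∂volume, a ≤ u → κ * (c + ∫ x in a..u, g x) ≤ g u) :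
    ∀ t, a ≤ t → c ≤ c + ∫ x in a..t, g x := by
  set f : ℝ → ℝ := fun u => c + ∫ x in a..u, g x with hfdef
  have hfc : Continuous f :=
    continuous_const.add (intervalIntegral.continuous_primitive hg a)
  have hcmp := intcmp g hg f hfc κ a hbound
  have key : ∀ t, a ≤ t → c + κ * ∫ x in a..t, f x ≤ f t := by
    intro t hat
    have := hcmp a t le_rfl hat
    simp only [hfdef]
    linarith
  set Φ : ℝ → ℝ := fun u => ∫ x in a..u, f x with hΦdef
  have hΦd : ∀ u : ℝ, HasDerivAt Φ (f u) u := fun u =>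
    intervalIntegral.integral_hasDerivAt_right
      (hfc.intervalIntegrable a u)
      hfc.aestronglyMeasurable.stronglyMeasurableAtFilter hfc.continuousAt
  set G : ℝ → ℝ := fun u => Real.exp (-κ * u) * Φ u with hGdef
  have hGd : ∀ u : ℝ, HasDerivAt G (Real.exp (-κ * u) * (f u - κ * Φ u)) u := by
    intro u
    have h0 : HasDerivAt (fun u : ℝ => -κ * u) (-κ) u := by
      simpa using (hasDerivAt_id u).const_mul (-κ)
    have h1 : HasDerivAt (fun u : ℝ => Real.exp (-κ * u)) (Real.exp (-κ * u) * (-κ)) u := h0.exp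
    have : HasDerivAt (fun u => Real.exp (-κ * u) * Φ u) _ u := h1.mul (hΦd u)
    convert this using 1
    ring
  have hmono : MonotoneOn G (Set.Ici a) := by
    apply monotoneOn_of_deriv_nonneg (convex_Ici a)
    · exact (Differentiable.continuous (fun u => (hGd u).differentiableAt)).continuousOn
    · exact fun u _ => (hGd u).differentiableAt.differentiableWithinAt
    · intro u hu
      rw [interior_Ici] at hu
      rw [(hGd u).deriv]
      have h2 := key u (le_of_lt hu)
      have h3 : 0 ≤ f u - κ * Φ u := by simp only [hΦdef]; linarith
      positivity
  intro t hat
  have hGa : G a = 0 := by simp [hGdef, hΦdef]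
  have hGt := hmono Set.self_mem_Ici (Set.mem_Ici.mpr hat) hat
  rw [hGa] at hGt
  simp only [hGdef] at hGt
  have hΦt : 0 ≤ Φ t := nonneg_of_mul_nonneg_right hGt (Real.exp_pos _)
  have := key t hat
  simp only [hfdef] at this ⊢
  nlinarith [mul_nonneg hκ hΦt]

lemma lemA_neg (g : ℝ → ℝ) (hg : ∀ s t : ℝ, IntervalIntegrable g volume s t)
    (a c κ : ℝ) (hc : 0 ≤ c) (hκ : κ ≤ 0)
    (hbound : ∀ᵐ u ∂volume, a ≤ u → κ * (c + ∫ x in a..u, g x) ≤ g u) :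
    ∀ t, a ≤ t → 0 ≤ c + ∫ x in a..t, g x := by
  set f : ℝ → ℝ := fun u => c + ∫ x in a..u, g x with hfdef
  have hfc : Continuous f :=
    continuous_const.add (intervalIntegral.continuous_primitive hg a)
  have hcmp := intcmp g hg f hfc κ a hbound
  have hfa : f a = c := by simp [hfdef]
  have hdiff : ∀ s t : ℝ, f t - f s = ∫ x in s..t, g x := by
    intro s t
    simp only [hfdef]
    have := intervalIntegral.integral_add_adjacent_intervals (hg a s) (hg s t)
    linarith
  intro t₁ hat₁
  by_contra hneg
  push_neg at hneg
  have hft₁ : f t₁ < 0 := hneg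
  set A : Set ℝ := Set.Icc a t₁ ∩ {u | 0 ≤ f u} with hAdef
  have hAc : IsCompact A := isCompact_Icc.inter_right (isClosed_le continuous_const hfc)
  have hAne : A.Nonempty := ⟨a, ⟨le_rfl, hat₁⟩, by simp [hfa, hc]⟩
  set s := sSup A with hsdef
  have hsA : s ∈ A := hAc.sSup_mem hAne
  have hsub : ∀ u ∈ A, u ≤ s := fun u hu => le_csSup hAc.bddAbove hu
  have hst₁ : s ≤ t₁ := hsA.1.2
  have has : a ≤ s := hsA.1.1
  have hfs : 0 ≤ f s := hsA.2
  have hslt : s < t₁ := lt_of_le_of_ne hst₁ (fun h => by rw [h] at hfs; linarith)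
  have hltneg : ∀ u, s < u → u ≤ t₁ → f u < 0 := by
    intro u hsu hut
    by_contra h
    push_neg at h
    exact absurd (hsub u ⟨⟨has.trans hsu.le, hut⟩, h⟩) (not_le.mpr hsu)
  have hfs0 : f s = 0 := by
    refine le_antisymm ?_ hfs
    by_contra h
    push_neg at h
    have hev : ∀ᶠ u in nhds s, 0 < f u :=
      (hfc.continuousAt (x := s)).eventually_const_lt h
    have hev2 : ∀ᶠ u in nhdsWithin s (Set.Ioi s), 0 < f u := hev.filter_mono nhdsWithin_le_nhds
    have hev3 : ∀ᶠ u in nhdsWithin s (Set.Ioi s), u ∈ Set.Ioo s t₁ :=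
      Ioo_mem_nhdsGT_of_mem ⟨le_rfl, hslt⟩
    obtain ⟨u, hu1, hu2⟩ := (hev2.and hev3).exists
    exact absurd (hltneg u hu2.1 hu2.2.le) (not_lt.mpr hu1.le)
  have hnonpos : ∀ u ∈ Set.Icc s t₁, f u ≤ 0 := by
    intro u hu
    rcases eq_or_lt_of_le hu.1 with h | h
    · rw [← h, hfs0]
    · exact (hltneg u h hu.2).le
  have hint_nonpos : ∫ x in s..t₁, f x ≤ 0 := by
    have : 0 ≤ ∫ x in s..t₁, -f x :=
      intervalIntegral.integral_nonneg hslt.le (fun u hu => by linarith [hnonpos u hu])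
    rw [intervalIntegral.integral_neg] at this
    linarith
  have := hcmp s t₁ has hslt.le
  rw [← hdiff s t₁] at this
  nlinarith [mul_nonneg (neg_nonneg.mpr hκ) (neg_nonneg.mpr hint_nonpos)]

lemma rep_lemma (X D : ℝ → ℝ) (hInt : ∀ t, IntervalIntegrable D volume 0 t)
    (hFTC : ∀ t, 0 ≤ t → X t = X 0 + ∫ s in (0:ℝ)..t, D s) :
    ∀ s t : ℝ, 0 ≤ s → 0 ≤ t → X t - X s = ∫ u in s..t, D u := by
  intro s t hs ht
  have hst : IntervalIntegrable D volume s t := (hInt s).symm.trans (hInt t)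
  have := intervalIntegral.integral_add_adjacent_intervals (hInt s) hst
  rw [hFTC t ht, hFTC s hs]
  linarith

set_option maxHeartbeats 4000000 in
/-- Merle–Zaag ODE lemma, dichotomy form.  Absolute continuity of
`X₊, X₀, X₋` is encoded by the existence of locally integrable derivatives
`D₊, D₀, D₋` satisfying the fundamental theorem of calculus.  Under the stated
differential inequalities (a.e.) and the smallness of `Y₊, Y₀, Y₋` relative to
`X₊, X₀, X₋`, either `X₊ + X₋ = o(1) X₀` or `X₊ + X₀ = o(1) X₋` as `t → ∞`. -/
theorem merle_zaag_dichotomy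
    (Xp X0 Xm Yp Y0 Ym Dp D0 Dm : ℝ → ℝ) (b : ℝ) (hb : 0 < b)
    (hXp_nonneg : ∀ t, 0 ≤ t → 0 ≤ Xp t)
    (hX0_nonneg : ∀ t, 0 ≤ t → 0 ≤ X0 t)
    (hXm_nonneg : ∀ t, 0 ≤ t → 0 ≤ Xm t)
    (hpos : ∀ t, 0 ≤ t → 0 < Xp t + X0 t + Xm t)
    (hliminf : ∀ ε > (0:ℝ), ∀ T : ℝ, ∃ t, T ≤ t ∧ 0 ≤ t ∧ Xp t < ε)
    (hIntp : ∀ t, IntervalIntegrable Dp volume 0 t)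
    (hInt0 : ∀ t, IntervalIntegrable D0 volume 0 t)
    (hIntm : ∀ t, IntervalIntegrable Dm volume 0 t)
    (hFTCp : ∀ t, 0 ≤ t → Xp t = Xp 0 + ∫ s in (0:ℝ)..t, Dp s)
    (hFTC0 : ∀ t, 0 ≤ t → X0 t = X0 0 + ∫ s in (0:ℝ)..t, D0 s)
    (hFTCm : ∀ t, 0 ≤ t → Xm t = Xm 0 + ∫ s in (0:ℝ)..t, Dm s)
    (hY : ∀ ε > (0:ℝ), ∃ T : ℝ, ∀ t, T ≤ t →
      Yp t ^ 2 + Y0 t ^ 2 + Ym t ^ 2 ≤ ε * (Xp t ^ 2 + X0 t ^ 2 + Xm t ^ 2))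
    (hineq : ∀ᵐ t ∂volume, 0 ≤ t →
      (Yp t ≤ Dp t - b * Xp t ∧ |D0 t| ≤ Y0 t ∧ Dm t + b * Xm t ≤ Ym t)) :
    (∀ ε > (0:ℝ), ∃ T : ℝ, ∀ t, T ≤ t → Xp t + Xm t ≤ ε * X0 t) ∨
    (∀ ε > (0:ℝ), ∃ T : ℝ, ∀ t, T ≤ t → Xp t + X0 t ≤ ε * Xm t) := by
  -- interval integrability on arbitrary intervals
  have hIp : ∀ s t : ℝ, IntervalIntegrable Dp volume s t :=
    fun s t => (hIntp s).symm.trans (hIntp t)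
  have hI0 : ∀ s t : ℝ, IntervalIntegrable D0 volume s t :=
    fun s t => (hInt0 s).symm.trans (hInt0 t)
  have hIm : ∀ s t : ℝ, IntervalIntegrable Dm volume s t :=
    fun s t => (hIntm s).symm.trans (hIntm t)
  have hdp := rep_lemma Xp Dp hIntp hFTCp
  have hd0 := rep_lemma X0 D0 hInt0 hFTC0
  have hdm := rep_lemma Xm Dm hIntm hFTCm
  -- continuity of Xm on [0,∞)
  have hXmc : ContinuousOn Xm (Set.Ici (0:ℝ)) := by
    have : Continuous (fun t => Xm 0 + ∫ u in (0:ℝ)..t, Dm u) :=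
      continuous_const.add (intervalIntegral.continuous_primitive hIm 0)
    exact this.continuousOn.congr (fun t ht => hFTCm t ht)
  -- |Y| bounds
  have hYabs : ∀ δ : ℝ, 0 < δ → ∃ T : ℝ, 0 ≤ T ∧ ∀ t, T ≤ t →
      |Yp t| ≤ δ * (Xp t + X0 t + Xm t) ∧ |Y0 t| ≤ δ * (Xp t + X0 t + Xm t) ∧
      |Ym t| ≤ δ * (Xp t + X0 t + Xm t) := by
    intro δ hδ
    obtain ⟨T, hT⟩ := hY (δ^2) (by positivity)
    refine ⟨max T 0, le_max_right _ _, fun t ht => ?_⟩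
    have ht0 : (0:ℝ) ≤ t := le_trans (le_max_right T 0) ht
    have h1 := hT t (le_trans (le_max_left T 0) ht)
    have hp := hXp_nonneg t ht0
    have hq := hX0_nonneg t ht0
    have hr := hXm_nonneg t ht0
    have hσ : 0 < Xp t + X0 t + Xm t := hpos t ht0
    have hsq : Xp t^2 + X0 t^2 + Xm t^2 ≤ (Xp t + X0 t + Xm t)^2 := by nlinarith
    have key : ∀ y : ℝ, y^2 ≤ δ^2 * (Xp t + X0 t + Xm t)^2 → |y| ≤ δ * (Xp t + X0 t + Xm t) := by
      intro y hy
      have h2 : 0 < δ * (Xp t + X0 t + Xm t) := by positivity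
      rcases abs_cases y with ⟨h3, _⟩ | ⟨h3, _⟩ <;> nlinarith [abs_nonneg y]
    refine ⟨key _ (by nlinarith [sq_nonneg (Y0 t), sq_nonneg (Ym t)]),
            key _ (by nlinarith [sq_nonneg (Yp t), sq_nonneg (Ym t)]),
            key _ (by nlinarith [sq_nonneg (Yp t), sq_nonneg (Y0 t)])⟩
  -- CLAIM 1
  have hC1 : ∀ ε : ℝ, 0 < ε → ∃ T, 0 ≤ T ∧ ∀ t, T ≤ t → Xp t ≤ ε * (X0 t + Xm t) := by
    intro ε hε
    have h2ε : (0:ℝ) < 2*(1+2*ε) := by linarith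
    set δ := min b (b*ε) / (2*(1+2*ε)) with hδdef
    have hδ : 0 < δ := div_pos (lt_min hb (by positivity)) h2ε
    have hδ1 : (1+2*ε)*δ ≤ b/2 := by
      have hm : min b (b*ε) ≤ b := min_le_left _ _
      have he : (1+2*ε)*(min b (b*ε)/(2*(1+2*ε))) = min b (b*ε)/2 := by
        field_simp
      rw [hδdef, he]
      linarith
    have hδ2 : (1+2*ε)*δ ≤ b*ε/2 := by
      have hm : min b (b*ε) ≤ b*ε := min_le_right _ _
      have he : (1+2*ε)*(min b (b*ε)/(2*(1+2*ε))) = min b (b*ε)/2 := by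
        field_simp
      rw [hδdef, he]
      linarith
    obtain ⟨TY, hTY0, hTY⟩ := hYabs δ hδ
    refine ⟨TY, hTY0, ?_⟩
    by_contra hcon
    push_neg at hcon
    obtain ⟨t₀, ht₀, hgt⟩ := hcon
    have ht₀0 : (0:ℝ) ≤ t₀ := hTY0.trans ht₀
    have hκ : 0 < b - (1+2*ε)*δ := by linarith
    set g : ℝ → ℝ := fun u => Dp u - ε * D0 u - ε * Dm u with hgdef
    have hgint : ∀ s t : ℝ, IntervalIntegrable g volume s t :=
      fun s t => ((hIp s t).sub ((hI0 s t).const_mul ε)).sub ((hIm s t).const_mul ε)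
    have hc : 0 < Xp t₀ - ε*(X0 t₀ + Xm t₀) := by linarith
    have hrep : ∀ u, t₀ ≤ u →
        (Xp t₀ - ε*(X0 t₀ + Xm t₀)) + ∫ x in t₀..u, g x = Xp u - ε*(X0 u + Xm u) := by
      intro u hu
      have hu0 : (0:ℝ) ≤ u := ht₀0.trans hu
      have e1 : ∫ x in t₀..u, g x
          = ((∫ x in t₀..u, Dp x) - ε * ∫ x in t₀..u, D0 x) - ε * ∫ x in t₀..u, Dm x := by
        simp only [hgdef]
        rw [intervalIntegral.integral_sub ((hIp t₀ u).sub ((hI0 t₀ u).const_mul ε))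
              ((hIm t₀ u).const_mul ε),
            intervalIntegral.integral_sub (hIp t₀ u) ((hI0 t₀ u).const_mul ε),
            intervalIntegral.integral_const_mul, intervalIntegral.integral_const_mul]
      rw [e1, ← hdp t₀ u ht₀0 hu0, ← hd0 t₀ u ht₀0 hu0, ← hdm t₀ u ht₀0 hu0]
      ring
    have hbound : ∀ᵐ u ∂volume, t₀ ≤ u →
        (b - (1+2*ε)*δ) * ((Xp t₀ - ε*(X0 t₀ + Xm t₀)) + ∫ x in t₀..u, g x) ≤ g u := by
      filter_upwards [hineq] with u hu hu'
      have hu0 : (0:ℝ) ≤ u := ht₀0.trans hu'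
      obtain ⟨hi1, hi2, hi3⟩ := hu hu0
      obtain ⟨hYpb, hY0b, hYmb⟩ := hTY u (ht₀.trans hu')
      rw [hrep u hu']
      simp only [hgdef]
      have hp := hXp_nonneg u hu0
      have hq := hX0_nonneg u hu0
      have hr := hXm_nonneg u hu0
      have ha1 : -(δ*(Xp u + X0 u + Xm u)) ≤ Yp u := (abs_le.mp hYpb).1
      have ha2 := abs_le.mp (hi2.trans ((le_abs_self (Y0 u)).trans hY0b))
      have ha3 : Ym u ≤ δ*(Xp u + X0 u + Xm u) := (le_abs_self (Ym u)).trans hYmb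
      have hDp : b*Xp u - δ*(Xp u + X0 u + Xm u) ≤ Dp u := by linarith
      have m1 : ε*D0 u ≤ ε*(δ*(Xp u + X0 u + Xm u)) :=
        mul_le_mul_of_nonneg_left ha2.2 hε.le
      have m2 : ε*Dm u ≤ ε*(δ*(Xp u + X0 u + Xm u) - b*Xm u) :=
        mul_le_mul_of_nonneg_left (by linarith) hε.le
      have hco1 : 0 ≤ (b - (1+2*ε)*δ)*ε - (1+2*ε)*δ := by
        linarith [mul_le_mul_of_nonneg_right hδ1 hε.le, hδ2]
      have hco2 : 0 ≤ ε*b + ((b - (1+2*ε)*δ)*ε - (1+2*ε)*δ) := by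
        linarith [hco1, (mul_pos hε hb).le]
      linarith [hDp, m1, m2, mul_nonneg hco1 hq, mul_nonneg hco2 hr]
    have h1 := lemA_pos g hgint t₀ (Xp t₀ - ε*(X0 t₀ + Xm t₀)) (b - (1+2*ε)*δ)
      hc.le hκ.le hbound
    have hreg : ∀ t, t₀ ≤ t →
        Xp t₀ - ε*(X0 t₀ + Xm t₀) ≤ Xp t - ε*(X0 t + Xm t) := by
      intro t htt
      rw [← hrep t htt]
      exact h1 t htt
    have hbound2 : ∀ᵐ u ∂volume, t₀ ≤ u →
        (0:ℝ) * (Xp t₀ + ∫ x in t₀..u, Dp x) ≤ Dp u := by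
      filter_upwards [hineq] with u hu hu'
      have hu0 : (0:ℝ) ≤ u := ht₀0.trans hu'
      obtain ⟨hi1, hi2, hi3⟩ := hu hu0
      obtain ⟨hYpb, hY0b, hYmb⟩ := hTY u (ht₀.trans hu')
      have hp := hXp_nonneg u hu0
      have hq := hX0_nonneg u hu0
      have hr := hXm_nonneg u hu0
      have ha1 : -(δ*(Xp u + X0 u + Xm u)) ≤ Yp u := (abs_le.mp hYpb).1
      have hDp : b*Xp u - δ*(Xp u + X0 u + Xm u) ≤ Dp u := by linarith
      have hregu := hreg u hu'
      have hεXX : ε*(X0 u + Xm u) ≤ Xp u := by linarith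
      rw [zero_mul]
      have h8 : 0 ≤ ε * Dp u := by
        linarith [mul_le_mul_of_nonneg_left hDp hε.le,
          mul_le_mul_of_nonneg_left hεXX hδ.le,
          mul_le_mul_of_nonneg_right hδ2 hp,
          mul_nonneg (mul_nonneg hε.le hδ.le) hp,
          mul_nonneg (mul_nonneg hb.le hε.le) hp]
      exact nonneg_of_mul_nonneg_right h8 hε
    have h2 := lemA_pos Dp hIp t₀ (Xp t₀) 0 (hXp_nonneg t₀ ht₀0) le_rfl hbound2
    have hXpt₀ : 0 < Xp t₀ := by
      nlinarith [mul_nonneg hε.le (add_nonneg (hX0_nonneg t₀ ht₀0) (hXm_nonneg t₀ ht₀0))]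
    obtain ⟨t, htt₀, ht0', hlt⟩ := hliminf (Xp t₀) hXpt₀ t₀
    have h3 := h2 t htt₀
    have h4 := hdp t₀ t ht₀0 ht0'
    linarith
  -- INVARIANCE of {c Xm ≤ X0}
  have hInv : ∀ c : ℝ, 0 < c → ∃ T, 0 ≤ T ∧ ∀ t₀, T ≤ t₀ → c * Xm t₀ ≤ X0 t₀ →
      ∀ t, t₀ ≤ t → c * Xm t ≤ X0 t := by
    intro c hc
    obtain ⟨T₁, hT₁0, hT₁⟩ := hC1 1 one_pos
    have h1c : (0:ℝ) < 1 + c := by linarith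
    set δ := c*b/(4*(1+c)^2) with hδdef
    have hδ : 0 < δ := by positivity
    have hδc : 4*(1+c)^2*δ = c*b := by
      rw [hδdef]
      field_simp
    obtain ⟨TY, hTY0, hTY⟩ := hYabs δ hδ
    refine ⟨max T₁ TY, le_trans hT₁0 (le_max_left _ _), ?_⟩
    intro t₀ ht₀ hent t htt
    have ht₀T₁ : T₁ ≤ t₀ := le_trans (le_max_left _ _) ht₀
    have ht₀TY : TY ≤ t₀ := le_trans (le_max_right _ _) ht₀
    have ht₀0 : (0:ℝ) ≤ t₀ := hTY0.trans ht₀TY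
    set g : ℝ → ℝ := fun u => D0 u - c * Dm u with hgdef
    have hgint : ∀ s t : ℝ, IntervalIntegrable g volume s t :=
      fun s t => (hI0 s t).sub ((hIm s t).const_mul c)
    have hrep : ∀ u, t₀ ≤ u →
        (X0 t₀ - c*Xm t₀) + ∫ x in t₀..u, g x = X0 u - c*Xm u := by
      intro u hu
      have hu0 : (0:ℝ) ≤ u := ht₀0.trans hu
      have e1 : ∫ x in t₀..u, g x
          = (∫ x in t₀..u, D0 x) - c * ∫ x in t₀..u, Dm x := by
        simp only [hgdef]
        rw [intervalIntegral.integral_sub (hI0 t₀ u) ((hIm t₀ u).const_mul c),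
            intervalIntegral.integral_const_mul]
      rw [e1, ← hd0 t₀ u ht₀0 hu0, ← hdm t₀ u ht₀0 hu0]
      ring
    have hbound : ∀ᵐ u ∂volume, t₀ ≤ u →
        (-(2*(1+c)*δ)) * ((X0 t₀ - c*Xm t₀) + ∫ x in t₀..u, g x) ≤ g u := by
      filter_upwards [hineq] with u hu hu'
      have hu0 : (0:ℝ) ≤ u := ht₀0.trans hu'
      obtain ⟨hi1, hi2, hi3⟩ := hu hu0
      obtain ⟨hYpb, hY0b, hYmb⟩ := hTY u (ht₀TY.trans hu')
      rw [hrep u hu']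
      simp only [hgdef]
      have hp := hXp_nonneg u hu0
      have hq := hX0_nonneg u hu0
      have hr := hXm_nonneg u hu0
      have ha2 := abs_le.mp (hi2.trans ((le_abs_self (Y0 u)).trans hY0b))
      have ha3 : Ym u ≤ δ*(Xp u + X0 u + Xm u) := (le_abs_self (Ym u)).trans hYmb
      have hσ : Xp u + X0 u + Xm u ≤ 2*(X0 u + Xm u) := by
        have := hT₁ u (ht₀T₁.trans hu')
        linarith
      have m2 : c*Dm u ≤ c*(δ*(Xp u + X0 u + Xm u) - b*Xm u) :=
        mul_le_mul_of_nonneg_left (by linarith) hc.le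
      have m3 : (1+c)*(δ*(Xp u + X0 u + Xm u)) ≤ (1+c)*(δ*(2*(X0 u + Xm u))) :=
        mul_le_mul_of_nonneg_left (mul_le_mul_of_nonneg_left hσ hδ.le) h1c.le
      have hδcXm : 4*(1+c)^2*(δ*Xm u) = c*b*Xm u := by
        rw [← mul_assoc, hδc]
      have hcb : 0 ≤ c*b*Xm u := by positivity
      linarith [ha2.1, m2, m3, hδcXm, hcb,
        mul_nonneg (mul_nonneg hc.le hb.le) hr]
    have h1 := lemA_neg g hgint t₀ (X0 t₀ - c*Xm t₀) (-(2*(1+c)*δ))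
      (by linarith) (neg_nonpos.mpr (by positivity)) hbound
    have := h1 t htt
    rw [hrep t htt] at this
    linarith
  -- CASE B workhorse
  have hB : ∀ c₀ : ℝ, 0 < c₀ → (∃ T₀, 0 ≤ T₀ ∧ ∀ t, T₀ ≤ t → X0 t < c₀ * Xm t) →
      ∀ c : ℝ, 0 < c → ∃ T, ∀ t, T ≤ t → X0 t < c * Xm t := by
    rintro c₀ hc₀ ⟨T₀, hT₀0, hT₀⟩ c hc
    by_contra hcon
    push_neg at hcon
    obtain ⟨T₁, hT₁0, hT₁⟩ := hC1 1 one_pos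
    obtain ⟨Ti, hTi0, hTi⟩ := hInv c hc
    have h1c : (0:ℝ) < 1 + c := by linarith
    have h1c₀ : (0:ℝ) < 1 + c₀ := by linarith
    set δ := min (c*b/(8*(1+c)*(1+c₀))) (b/(8*(1+c₀))) with hδdef
    have hδ : 0 < δ := lt_min (by positivity) (by positivity)
    have hδ1 : 2*(1+c)*(1+c₀)*δ ≤ c*b/2 := by
      have h := mul_le_mul_of_nonneg_left (min_le_left (c*b/(8*(1+c)*(1+c₀)))
        (b/(8*(1+c₀)))) (by positivity : (0:ℝ) ≤ 2*(1+c)*(1+c₀))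
      have he : 2*(1+c)*(1+c₀)*(c*b/(8*(1+c)*(1+c₀))) = c*b/4 := by
        field_simp
        ring
      rw [← hδdef] at h
      rw [he] at h
      linarith [mul_pos hc hb]
    have hδ2 : 2*(1+c₀)*δ ≤ b/2 := by
      have h := mul_le_mul_of_nonneg_left (min_le_right (c*b/(8*(1+c)*(1+c₀)))
        (b/(8*(1+c₀)))) (by positivity : (0:ℝ) ≤ 2*(1+c₀))
      have he : 2*(1+c₀)*(b/(8*(1+c₀))) = b/4 := by
        field_simp
        ring
      rw [← hδdef] at h
      rw [he] at h
      linarith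
    obtain ⟨TY, hTY0, hTY⟩ := hYabs δ hδ
    obtain ⟨t₀, ht₀, hent⟩ := hcon (max (max T₁ Ti) (max TY T₀))
    have ht₀T₁ : T₁ ≤ t₀ := le_trans (le_trans (le_max_left _ _) (le_max_left _ _)) ht₀
    have ht₀Ti : Ti ≤ t₀ := le_trans (le_trans (le_max_right _ _) (le_max_left _ _)) ht₀
    have ht₀TY : TY ≤ t₀ := le_trans (le_trans (le_max_left _ _) (le_max_right _ _)) ht₀
    have ht₀T₀ : T₀ ≤ t₀ := le_trans (le_trans (le_max_right _ _) (le_max_right _ _)) ht₀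
    have ht₀0 : (0:ℝ) ≤ t₀ := hT₁0.trans ht₀T₁
    have hinv : ∀ t, t₀ ≤ t → c * Xm t ≤ X0 t := hTi t₀ ht₀Ti hent
    have hfacts : ∀ u, t₀ ≤ u → 0 ≤ X0 u ∧ 0 ≤ Xm u ∧ X0 u < c₀ * Xm u ∧ 0 < Xm u ∧
        Xp u + X0 u + Xm u ≤ 2*(1+c₀) * Xm u := by
      intro u hu
      have hu0 : (0:ℝ) ≤ u := ht₀0.trans hu
      have hq := hX0_nonneg u hu0
      have hr := hXm_nonneg u hu0
      have h0c := hT₀ u (ht₀T₀.trans hu)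
      have hXmu : 0 < Xm u := by nlinarith
      have hσ : Xp u + X0 u + Xm u ≤ 2*(1+c₀) * Xm u := by
        have := hT₁ u (ht₀T₁.trans hu)
        nlinarith
      exact ⟨hq, hr, h0c, hXmu, hσ⟩
    set g : ℝ → ℝ := fun u => D0 u - c * Dm u with hgdef
    have hgint : ∀ s t : ℝ, IntervalIntegrable g volume s t :=
      fun s t => (hI0 s t).sub ((hIm s t).const_mul c)
    have hgrow : ∀ᵐ u ∂volume, t₀ ≤ u → c*b/2 * Xm u ≤ g u := by
      filter_upwards [hineq] with u hu hu'
      have hu0 : (0:ℝ) ≤ u := ht₀0.trans hu'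
      obtain ⟨hi1, hi2, hi3⟩ := hu hu0
      obtain ⟨hYpb, hY0b, hYmb⟩ := hTY u (ht₀TY.trans hu')
      obtain ⟨hq, hr, h0c, hXmu, hσ⟩ := hfacts u hu'
      simp only [hgdef]
      have ha2 := abs_le.mp (hi2.trans ((le_abs_self (Y0 u)).trans hY0b))
      have ha3 : Ym u ≤ δ*(Xp u + X0 u + Xm u) := (le_abs_self (Ym u)).trans hYmb
      have m2 : c*Dm u ≤ c*(δ*(Xp u + X0 u + Xm u) - b*Xm u) :=
        mul_le_mul_of_nonneg_left (by linarith) hc.le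
      have m3 : (1+c)*(δ*(Xp u + X0 u + Xm u)) ≤ (1+c)*(δ*(2*(1+c₀) * Xm u)) :=
        mul_le_mul_of_nonneg_left (mul_le_mul_of_nonneg_left hσ hδ.le) h1c.le
      have m4 : (2*(1+c)*(1+c₀)*δ) * Xm u ≤ (c*b/2) * Xm u :=
        mul_le_mul_of_nonneg_right hδ1 hr
      linarith [ha2.1, m2, m3, m4]
    have hXmint : ∀ s t : ℝ, t₀ ≤ s → s ≤ t → IntervalIntegrable Xm volume s t := by
      intro s t hs hst
      apply ContinuousOn.intervalIntegrable
      apply hXmc.mono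
      intro x hx
      rw [Set.uIcc_of_le hst] at hx
      exact le_trans (ht₀0.trans hs) hx.1
    have hgrow' : ∀ s t : ℝ, t₀ ≤ s → s ≤ t →
        (X0 s - c*Xm s) + (c*b/2) * ∫ x in s..t, Xm x ≤ X0 t - c*Xm t := by
      intro s t hs hst
      have hs0 : (0:ℝ) ≤ s := ht₀0.trans hs
      have ht0 : (0:ℝ) ≤ t := hs0.trans hst
      have hcmp : (c*b/2) * ∫ x in s..t, Xm x ≤ ∫ x in s..t, g x := by
        rw [← intervalIntegral.integral_const_mul]
        apply intervalIntegral.integral_mono_ae_restrict hst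
          ((hXmint s t hs hst).const_mul _) (hgint s t)
        have hg1 : ∀ᵐ u ∂(volume.restrict (Set.Icc s t)), t₀ ≤ u → c*b/2 * Xm u ≤ g u :=
          ae_restrict_of_ae hgrow
        have hg2 : ∀ᵐ u ∂(volume.restrict (Set.Icc s t)), u ∈ Set.Icc s t :=
          ae_restrict_mem measurableSet_Icc
        filter_upwards [hg1, hg2] with u h1 h2
        exact h1 (hs.trans h2.1)
      have heq : ∫ x in s..t, g x = (X0 t - c*Xm t) - (X0 s - c*Xm s) := by
        have e1 : ∫ x in s..t, g x = (∫ x in s..t, D0 x) - c * ∫ x in s..t, Dm x := by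
          simp only [hgdef]
          rw [intervalIntegral.integral_sub (hI0 s t) ((hIm s t).const_mul c),
              intervalIntegral.integral_const_mul]
        rw [e1, ← hd0 s t hs0 ht0, ← hdm s t hs0 ht0]
        ring
      linarith [hcmp, heq.le, heq.ge]
    have hXmpos : 0 < ∫ x in t₀..(t₀+1), Xm x := by
      apply intervalIntegral.intervalIntegral_pos_of_pos_on
        (hXmint t₀ (t₀+1) le_rfl (by linarith)) _ (by linarith)
      intro x hx
      exact (hfacts x hx.1.le).2.2.2.1
    have hF1 : 0 < X0 (t₀+1) - c*Xm (t₀+1) := by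
      have h := hgrow' t₀ (t₀+1) le_rfl (by linarith)
      have hcb2 : (0:ℝ) < c*b/2 := by positivity
      nlinarith [mul_pos hcb2 hXmpos]
    have hfmono : ∀ u, t₀+1 ≤ u → X0 (t₀+1) - c*Xm (t₀+1) ≤ X0 u - c*Xm u := by
      intro u hu
      have h := hgrow' (t₀+1) u (by linarith) hu
      have hnn : 0 ≤ ∫ x in (t₀+1)..u, Xm x :=
        intervalIntegral.integral_nonneg hu
          (fun x hx => (hfacts x (by linarith [hx.1])).2.1)
      nlinarith [mul_nonneg (by positivity : (0:ℝ) ≤ c*b/2) hnn]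
    set β := b*(X0 (t₀+1) - c*Xm (t₀+1))/(2*c₀) with hβdef
    have hβ : 0 < β := by
      rw [hβdef]
      positivity
    have hdecay : ∀ᵐ u ∂volume, t₀+1 ≤ u → Dm u ≤ -β := by
      filter_upwards [hineq] with u hu hu'
      have hu0 : (0:ℝ) ≤ u := le_trans (by linarith) hu'
      obtain ⟨hi1, hi2, hi3⟩ := hu hu0
      have htu : t₀ ≤ u := by linarith
      obtain ⟨hYpb, hY0b, hYmb⟩ := hTY u (ht₀TY.trans htu)
      obtain ⟨hq, hr, h0c, hXmu, hσ⟩ := hfacts u htu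
      have ha3 : Ym u ≤ δ*(Xp u + X0 u + Xm u) := (le_abs_self (Ym u)).trans hYmb
      have m3 : δ*(Xp u + X0 u + Xm u) ≤ δ*(2*(1+c₀) * Xm u) :=
        mul_le_mul_of_nonneg_left hσ hδ.le
      have m4 : (2*(1+c₀)*δ) * Xm u ≤ (b/2) * Xm u :=
        mul_le_mul_of_nonneg_right hδ2 hr
      -- Dm u ≤ δσ - b Xm u ≤ -(b/2) Xm u
      have h5 : Dm u ≤ -(b/2) * Xm u := by linarith
      -- Xm u ≥ (X0 (t₀+1) - c Xm (t₀+1))/c₀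
      have h6 := hfmono u hu'
      have h7 : X0 (t₀+1) - c*Xm (t₀+1) ≤ c₀ * Xm u := by
        nlinarith [mul_nonneg hc.le hr]
      have h8 : (b/2) * (X0 (t₀+1) - c*Xm (t₀+1)) ≤ (b/2) * (c₀ * Xm u) :=
        mul_le_mul_of_nonneg_left h7 (by positivity)
      have h9 : β * c₀ = (b/2) * (X0 (t₀+1) - c*Xm (t₀+1)) := by
        rw [hβdef]
        field_simp
      nlinarith [mul_le_mul_of_nonneg_right h5 (le_of_lt hc₀)]
    set t₂ := t₀ + 1 + (Xm (t₀+1) + 1)/β with ht₂def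
    have ht₂1 : t₀ + 1 ≤ t₂ := by
      rw [ht₂def]
      have : 0 ≤ (Xm (t₀+1) + 1)/β := by
        apply div_nonneg _ hβ.le
        linarith [(hfacts (t₀+1) (by linarith)).2.1]
      linarith
    have ht₂0 : (0:ℝ) ≤ t₂ := by linarith
    have hint2 : ∫ x in (t₀+1)..t₂, Dm x ≤ -β * (t₂ - (t₀+1)) := by
      have h := intervalIntegral.integral_mono_ae_restrict ht₂1 (hIm (t₀+1) t₂)
        (_root_.intervalIntegrable_const (c := -β)) ?_
      · rw [intervalIntegral.integral_const, smul_eq_mul] at h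
        linarith
      · have hg1 : ∀ᵐ u ∂(volume.restrict (Set.Icc (t₀+1) t₂)), t₀+1 ≤ u → Dm u ≤ -β :=
          ae_restrict_of_ae hdecay
        have hg2 : ∀ᵐ u ∂(volume.restrict (Set.Icc (t₀+1) t₂)), u ∈ Set.Icc (t₀+1) t₂ :=
          ae_restrict_mem measurableSet_Icc
        filter_upwards [hg1, hg2] with u h1 h2
        exact h1 h2.1
    have hβt : β * (t₂ - (t₀+1)) = Xm (t₀+1) + 1 := by
      rw [ht₂def]
      field_simp
      ring
    have hXmeq := hdm (t₀+1) t₂ (by linarith) ht₂0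
    have := hXm_nonneg t₂ ht₂0
    nlinarith [hint2, hXmeq, hβt]
  -- dichotomy
  by_cases H : ∀ c : ℝ, 0 < c → ∀ T : ℝ, ∃ t, T ≤ t ∧ c * Xm t ≤ X0 t
  · left
    intro ε hε
    obtain ⟨T₁, hT₁0, hT₁⟩ := hC1 (ε/4) (by positivity)
    have hcc : (0:ℝ) < max (4/ε) 1 := lt_of_lt_of_le one_pos (le_max_right _ _)
    obtain ⟨Ti, hTi0, hTi⟩ := hInv (max (4/ε) 1) hcc
    obtain ⟨t₀, ht₀TT, hent⟩ := H (max (4/ε) 1) hcc (max Ti T₁)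
    refine ⟨t₀, fun t ht => ?_⟩
    have ht0 : (0:ℝ) ≤ t := le_trans hTi0 (le_trans (le_max_left Ti T₁) (le_trans ht₀TT ht))
    have h1 : max (4/ε) 1 * Xm t ≤ X0 t :=
      hTi t₀ (le_trans (le_max_left Ti T₁) ht₀TT) hent t ht
    have h2 : Xp t ≤ (ε/4) * (X0 t + Xm t) :=
      hT₁ t (le_trans (le_max_right Ti T₁) (le_trans ht₀TT ht))
    have hq := hX0_nonneg t ht0
    have hr := hXm_nonneg t ht0
    have h3 : Xm t ≤ X0 t := by
      have := le_max_right (4/ε) 1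
      nlinarith
    have h4 : 4 * Xm t ≤ ε * X0 t := by
      have h5 : 4/ε ≤ max (4/ε) 1 := le_max_left _ _
      have h6 : (4/ε) * Xm t ≤ X0 t := by nlinarith
      have h6' := mul_le_mul_of_nonneg_left h6 hε.le
      have h7 : ε * (4/ε * Xm t) = 4 * Xm t := by field_simp
      linarith
    nlinarith
  · right
    push_neg at H
    obtain ⟨c₀, hc₀, T₀, hT₀⟩ := H
    have hT₀' : ∃ T₀', 0 ≤ T₀' ∧ ∀ t, T₀' ≤ t → X0 t < c₀ * Xm t :=
      ⟨max T₀ 0, le_max_right _ _, fun t ht => hT₀ t (le_trans (le_max_left T₀ 0) ht)⟩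
    intro ε hε
    have hc₀1 : (0:ℝ) < 1 + c₀ := by linarith
    obtain ⟨T₁, hT₁0, hT₁⟩ := hC1 (ε/(2*(1+c₀))) (by positivity)
    obtain ⟨Tc, hTc⟩ := hB c₀ hc₀ hT₀' (ε/2) (by positivity)
    obtain ⟨T₀', hT₀'0, hT₀'⟩ := hT₀'
    refine ⟨max (max T₁ Tc) T₀', fun t ht => ?_⟩
    have h1 := hT₁ t (le_trans (le_trans (le_max_left _ _) (le_max_left _ _)) ht)
    have h2 := hTc t (le_trans (le_trans (le_max_right _ _) (le_max_left _ _)) ht)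
    have h3 := hT₀' t (le_trans (le_max_right _ _) ht)
    have ht0 : (0:ℝ) ≤ t := le_trans hT₁0 (le_trans (le_trans (le_max_left _ _) (le_max_left _ _)) ht)
    have hq := hX0_nonneg t ht0
    have hr := hXm_nonneg t ht0
    -- Xp t ≤ (ε/(2(1+c₀)))(X0+Xm) ≤ (ε/(2(1+c₀)))(1+c₀)Xm = (ε/2) Xm
    have h4 : Xp t ≤ (ε/2) * Xm t := by
      have h5 : X0 t + Xm t ≤ (1+c₀) * Xm t := by nlinarith
      have h6 : (ε/(2*(1+c₀))) * (X0 t + Xm t) ≤ (ε/(2*(1+c₀))) * ((1+c₀) * Xm t) := by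
        apply mul_le_mul_of_nonneg_left h5 (by positivity)
      have h7 : (ε/(2*(1+c₀))) * ((1+c₀) * Xm t) = (ε/2) * Xm t := by field_simp
      linarith
    linarith
end

section
/- (Merle–Zaag ODE lemma, decay in the dominated-by-X₋ case) In the setting of the Merle–Zaag ODE lemma, if the second alternative X₊(t) + X₀(t) = o(1)·X₋(t) holds, then for every ε > 0 one has limsup_{t→∞} e^{(b−ε)t}(X₊(t) + X₀(t) + X₋(t)) = 0; i.e. the total sum decays exponentially at every rate slower than e^{−bt}. -/
open Real Filter MeasureTheory intervalIntegral

/-- Grönwall-type lemma: if `X` is continuous, `X t = X T + ∫_T^t D`, and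
a.e. `D + c X ≤ 0` on `[T, ∞)`, then `X t ≤ X T e^{-c(t-T)}` for `t ≥ T`. -/
lemma my_gronwall (X D : ℝ → ℝ) (c T : ℝ) (hc : 0 < c) (hX : Continuous X)
    (hD : ∀ a b, IntervalIntegrable D volume a b)
    (hFTC : ∀ t, X t = X T + ∫ s in T..t, D s)
    (hae : ∀ᵐ s ∂volume, T ≤ s → D s + c * X s ≤ 0) :
    ∀ t, T ≤ t → X t ≤ X T * Real.exp (-c * (t - T)) := by
  set K := X T with hK
  set f : ℝ → ℝ := fun s => D s + c * X s with hf
  have hfInt : ∀ a b, IntervalIntegrable f volume a b := fun a b =>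
    (hD a b).add ((continuous_const.mul hX).intervalIntegrable a b)
  set w : ℝ → ℝ := fun t => ∫ s in T..t, f s with hw
  have hw_cont : Continuous w := intervalIntegral.continuous_primitive hfInt T
  have hw_anti : ∀ t₁ t₂, T ≤ t₁ → t₁ ≤ t₂ → w t₂ ≤ w t₁ := by
    intro t₁ t₂ h1 h12
    have hsub : w t₂ - w t₁ = ∫ s in t₁..t₂, f s :=
      integral_interval_sub_left (hfInt T t₂) (hfInt T t₁)
    have hnp : (∫ s in t₁..t₂, f s) ≤ ∫ s in t₁..t₂, (0:ℝ) := by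
      refine integral_mono_ae_restrict h12 (hfInt t₁ t₂) intervalIntegrable_const ?_
      filter_upwards [hae.filter_mono (ae_mono Measure.restrict_le_self),
        ae_restrict_mem measurableSet_Icc] with s hs hmem
      exact hs (le_trans h1 hmem.1)
    simp only [intervalIntegral.integral_zero] at hnp
    linarith [hsub ▸ hnp]
  have hwT : w T = 0 := intervalIntegral.integral_same
  have hw_nonpos : ∀ t, T ≤ t → w t ≤ 0 := fun t ht => hwT ▸ hw_anti T t le_rfl ht
  set A : ℝ → ℝ := fun t => ∫ s in T..t, X s with hA
  have hXeq : ∀ t, X t = K + w t - c * A t := by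
    intro t
    have : w t = (∫ s in T..t, D s) + c * A t := by
      rw [hw]
      simp only [hf]
      rw [intervalIntegral.integral_add (g := fun s => c * X s) (hD T t)
        ((continuous_const.mul hX).intervalIntegrable T t),
        intervalIntegral.integral_const_mul]
    rw [this, hFTC t]; ring
  have hA_deriv : ∀ t, HasDerivAt A (X t) t := fun t =>
    integral_hasDerivAt_right (hX.intervalIntegrable T t)
      (hX.stronglyMeasurableAtFilter _ _) hX.continuousAt
  set B : ℝ → ℝ := fun t => Real.exp (c * t) * A t with hB
  have hexp : ∀ t : ℝ, HasDerivAt (fun s => Real.exp (c * s)) (Real.exp (c * t) * c) t :=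
    fun t => (HasDerivAt.exp (by simpa using (hasDerivAt_id t).const_mul c))
  have hB_deriv : ∀ t, HasDerivAt B (Real.exp (c * t) * (K + w t)) t := by
    intro t
    have h := (hexp t).mul (hA_deriv t)
    have heq : Real.exp (c * t) * c * A t + Real.exp (c * t) * X t
        = Real.exp (c * t) * (K + w t) := by
      rw [hXeq t]; ring
    exact heq ▸ h
  have hint_cont : Continuous fun s => Real.exp (c * s) * (K + w s) :=
    (Real.continuous_exp.comp (continuous_const.mul continuous_id)).mul
      (continuous_const.add hw_cont)
  intro t ht
  have hB_eq : B t = ∫ s in T..t, Real.exp (c * s) * (K + w s) := by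
    have := intervalIntegral.integral_eq_sub_of_hasDerivAt
      (f := B) (f' := fun s => Real.exp (c * s) * (K + w s))
      (fun s _ => hB_deriv s) (hint_cont.intervalIntegrable T t)
    have hBT : B T = 0 := by simp [hB, hA]
    rw [this, hBT, sub_zero]
  -- lower bound on B t
  have hmono : (∫ s in T..t, Real.exp (c * s) * (K + w t))
      ≤ ∫ s in T..t, Real.exp (c * s) * (K + w s) := by
    refine integral_mono_on ht
      ((Continuous.intervalIntegrable (by fun_prop) T t) :
        IntervalIntegrable (fun s => Real.exp (c * s) * (K + w t)) volume T t)
      (hint_cont.intervalIntegrable T t) ?_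
    intro s hs
    have : w t ≤ w s := hw_anti s t hs.1 hs.2
    have := Real.exp_nonneg (c * s)
    nlinarith
  have hexp_int : (∫ s in T..t, Real.exp (c * s))
      = Real.exp (c * t) / c - Real.exp (c * T) / c := by
    refine intervalIntegral.integral_eq_sub_of_hasDerivAt
      (f := fun s => Real.exp (c * s) / c) (fun s _ => ?_)
      ((Real.continuous_exp.comp (continuous_const.mul continuous_id)).intervalIntegrable T t)
    have := (hexp s).div_const c
    simpa [mul_div_assoc, mul_comm, mul_div_cancel_right₀, ne_of_gt hc] using this
  have hlhs : (∫ s in T..t, Real.exp (c * s) * (K + w t))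
      = (K + w t) * (Real.exp (c * t) / c - Real.exp (c * T) / c) := by
    rw [← hexp_int, ← intervalIntegral.integral_const_mul]
    apply intervalIntegral.integral_congr
    intro s _; ring
  have hBt : (K + w t) * (Real.exp (c * t) / c - Real.exp (c * T) / c) ≤ B t := by
    rw [hB_eq]; rw [← hlhs]; exact hmono
  -- conclude
  set E : ℝ := Real.exp (c * t) with hE
  set E0 : ℝ := Real.exp (c * T) with hE0
  have hEpos : 0 < E := Real.exp_pos _
  have hE0pos : 0 < E0 := Real.exp_pos _
  have hexpeq : Real.exp (-c * (t - T)) = E0 / E := by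
    rw [hE0, hE, ← Real.exp_sub]; congr 1; ring
  have hBA : B t = E * A t := rfl
  have hwt : w t ≤ 0 := hw_nonpos t ht
  rw [hXeq t, hexpeq]
  rw [show K * (E0 / E) = K * E0 / E by ring, le_div_iff₀ hEpos]
  have hkey : (K + w t) * (E - E0) ≤ c * (E * A t) := by
    have h2 : c * ((K + w t) * (E / c - E0 / c)) ≤ c * (E * A t) := by
      rw [← hBA]
      exact mul_le_mul_of_nonneg_left hBt hc.le
    have h3 : (K + w t) * (E - E0) = c * ((K + w t) * (E / c - E0 / c)) := by
      field_simp
    linarith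
  nlinarith [hkey, mul_nonpos_of_nonpos_of_nonneg hwt hE0pos.le]

/-- Merle–Zaag ODE lemma, decay in the dominated-by-`X₋` case.
In the Merle–Zaag setting (absolute continuity encoded via FTC with locally
integrable derivatives), if `X₊ + X₀ = o(1) X₋`, then for every `ε > 0`,
`limsup_{t→∞} e^{(b-ε)t}(X₊ + X₀ + X₋) = 0`. -/
theorem merle_zaag_exponential_decay
    (Xp X0 Xm Yp Y0 Ym Dp D0 Dm : ℝ → ℝ) (b : ℝ) (hb : 0 < b)
    (hXp_nonneg : ∀ t, 0 ≤ t → 0 ≤ Xp t)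
    (hX0_nonneg : ∀ t, 0 ≤ t → 0 ≤ X0 t)
    (hXm_nonneg : ∀ t, 0 ≤ t → 0 ≤ Xm t)
    (hpos : ∀ t, 0 ≤ t → 0 < Xp t + X0 t + Xm t)
    (hliminf : ∀ ε > (0:ℝ), ∀ T : ℝ, ∃ t, T ≤ t ∧ 0 ≤ t ∧ Xp t < ε)
    (hIntp : ∀ t, IntervalIntegrable Dp volume 0 t)
    (hInt0 : ∀ t, IntervalIntegrable D0 volume 0 t)
    (hIntm : ∀ t, IntervalIntegrable Dm volume 0 t)
    (hFTCp : ∀ t, 0 ≤ t → Xp t = Xp 0 + ∫ s in (0:ℝ)..t, Dp s)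
    (hFTC0 : ∀ t, 0 ≤ t → X0 t = X0 0 + ∫ s in (0:ℝ)..t, D0 s)
    (hFTCm : ∀ t, 0 ≤ t → Xm t = Xm 0 + ∫ s in (0:ℝ)..t, Dm s)
    (hY : ∀ ε > (0:ℝ), ∃ T : ℝ, ∀ t, T ≤ t →
      Yp t ^ 2 + Y0 t ^ 2 + Ym t ^ 2 ≤ ε * (Xp t ^ 2 + X0 t ^ 2 + Xm t ^ 2))
    (hineq : ∀ᵐ t ∂volume, 0 ≤ t →
      (Yp t ≤ Dp t - b * Xp t ∧ |D0 t| ≤ Y0 t ∧ Dm t + b * Xm t ≤ Ym t))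
    (halt : ∀ ε > (0:ℝ), ∃ T : ℝ, ∀ t, T ≤ t → Xp t + X0 t ≤ ε * Xm t) :
    ∀ ε > (0:ℝ),
      Filter.limsup (fun t => Real.exp ((b - ε) * t) * (Xp t + X0 t + Xm t)) atTop = 0 := by
  intro ε hε
  set m := min ε b with hmdef
  have hm0 : 0 < m := lt_min hε hb
  have hmb : m ≤ b := min_le_right _ _
  have hmε : m ≤ ε := min_le_left _ _
  set c := b - m / 2 with hcdef
  have hc : 0 < c := by rw [hcdef]; linarith
  obtain ⟨T₁, hT₁⟩ := halt 1 one_pos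
  obtain ⟨T₂, hT₂⟩ := hY ((m / 8) ^ 2) (by positivity)
  set T := max (max T₁ T₂) 0 with hTdef
  have hT0 : (0:ℝ) ≤ T := le_max_right _ _
  have hTT₁ : T₁ ≤ T := le_trans (le_max_left _ _) (le_max_left _ _)
  have hTT₂ : T₂ ≤ T := le_trans (le_max_right _ _) (le_max_left _ _)
  have hDInt : ∀ a b', IntervalIntegrable Dm volume a b' := fun a b' =>
    (hIntm a).symm.trans (hIntm b')
  set X' : ℝ → ℝ := fun t => Xm 0 + ∫ s in (0:ℝ)..t, Dm s with hX'def
  have hX'cont : Continuous X' :=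
    continuous_const.add (intervalIntegral.continuous_primitive hDInt 0)
  have hX'eq : ∀ t, 0 ≤ t → X' t = Xm t := fun t ht => (hFTCm t ht).symm
  have hX'FTC : ∀ t, X' t = X' T + ∫ s in T..t, Dm s := by
    intro t
    have h := intervalIntegral.integral_interval_sub_left (hIntm t) (hIntm T)
    simp only [hX'def]
    linarith [h]
  have hae : ∀ᵐ s ∂volume, T ≤ s → Dm s + c * X' s ≤ 0 := by
    filter_upwards [hineq] with s hs hsT
    have hs0 : 0 ≤ s := le_trans hT0 hsT
    obtain ⟨_, _, h3⟩ := hs hs0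
    have hXpn := hXp_nonneg s hs0
    have hX0n := hX0_nonneg s hs0
    have hXmn := hXm_nonneg s hs0
    have h1 : Xp s + X0 s ≤ 1 * Xm s := hT₁ s (le_trans hTT₁ hsT)
    have h2 := hT₂ s (le_trans hTT₂ hsT)
    have hsq : Xp s ^ 2 + X0 s ^ 2 + Xm s ^ 2 ≤ (2 * Xm s) ^ 2 := by nlinarith
    have hYm2 : Ym s ^ 2 ≤ ((m / 4) * Xm s) ^ 2 := by
      nlinarith [sq_nonneg (Yp s), sq_nonneg (Y0 s)]
    have hYm : Ym s ≤ (m / 4) * Xm s :=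
      (abs_le_of_sq_le_sq' hYm2 (by positivity)).2
    rw [hX'eq s hs0, hcdef]
    nlinarith
  have key := my_gronwall X' Dm c T hc hX'cont hDInt hX'FTC hae
  have hXmT : X' T = Xm T := hX'eq T hT0
  have htend : Tendsto (fun t => Real.exp ((b - ε) * t) * (Xp t + X0 t + Xm t))
      atTop (nhds 0) := by
    have hub : ∀ t, T ≤ t → Real.exp ((b - ε) * t) * (Xp t + X0 t + Xm t)
        ≤ (2 * Xm T * Real.exp (c * T)) * Real.exp ((m / 2 - ε) * t) := by
      intro t ht
      have ht0 : 0 ≤ t := le_trans hT0 ht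
      have h1 : Xp t + X0 t ≤ 1 * Xm t := hT₁ t (le_trans hTT₁ ht)
      have h2 : Xm t ≤ Xm T * Real.exp (-c * (t - T)) := by
        rw [← hX'eq t ht0, ← hXmT]; exact key t ht
      have hS : Xp t + X0 t + Xm t ≤ 2 * (Xm T * Real.exp (-c * (t - T))) := by linarith
      have hcomb : Real.exp ((b - ε) * t) * Real.exp (-c * (t - T))
          = Real.exp (c * T) * Real.exp ((m / 2 - ε) * t) := by
        rw [← Real.exp_add, ← Real.exp_add]
        congr 1
        rw [hcdef]; ring
      calc Real.exp ((b - ε) * t) * (Xp t + X0 t + Xm t)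
          ≤ Real.exp ((b - ε) * t) * (2 * (Xm T * Real.exp (-c * (t - T)))) :=
            mul_le_mul_of_nonneg_left hS (Real.exp_nonneg _)
        _ = (Real.exp ((b - ε) * t) * Real.exp (-c * (t - T))) * (2 * Xm T) := by ring
        _ = (2 * Xm T * Real.exp (c * T)) * Real.exp ((m / 2 - ε) * t) := by
            rw [hcomb]; ring
    have hneg : m / 2 - ε < 0 := by linarith
    have hlin : Tendsto (fun t : ℝ => (m / 2 - ε) * t) atTop atBot :=
      (tendsto_const_mul_atBot_of_neg hneg).2 tendsto_id
    have hg : Tendsto (fun t => (2 * Xm T * Real.exp (c * T))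
        * Real.exp ((m / 2 - ε) * t)) atTop (nhds 0) := by
      have := (Real.tendsto_exp_atBot.comp hlin).const_mul (2 * Xm T * Real.exp (c * T))
      simpa only [Function.comp_def, mul_zero] using this
    refine tendsto_of_tendsto_of_tendsto_of_le_of_le' tendsto_const_nhds hg ?_ ?_
    · filter_upwards [eventually_ge_atTop (0:ℝ)] with t ht
      exact mul_nonneg (Real.exp_nonneg _) (hpos t ht).le
    · filter_upwards [eventually_ge_atTop T] with t ht
      exact hub t ht
  exact htend.limsup_eq
end

section
/- (Lemma 7.1: infimum of tangential gradient along perturbed gradient flow) Let f : ℝ^J → ℝ be analytic with f(0)=0, ∇f(0)=0, ∇²f(0)=0, and lowest-order homogeneous part f_p of degree p ≥ 3 in its Taylor expansion (f = Σ_{j≥p} f_j with f_p ≢ 0). Let z : [0,∞) → ℝ^J solve z′ + ∇f(z) = G with ‖G(t)‖ ≤ C‖z(t)‖^{p−ε} for constants C < ∞, ε ∈ (0,1/2), and suppose z(t) → 0 as t → ∞ with z(t) ≠ 0 for all t. Let θ(t) = z(t)/‖z(t)‖ and let ∇^S f̂_p denote the tangential gradient of f_p on the unit sphere. Then liminf_{t→∞}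 ‖∇^S f̂_p(θ(t))‖ = 0. -/
open Real Filter
open scoped RealInnerProductSpace

set_option linter.unusedSectionVars false
set_option linter.unusedVariables false

section Prelim
open Finset Fintype ContinuousLinearMap



variable {E F : Type*} [NormedAddCommGroup E] [NormedSpace ℝ E]
  [NormedAddCommGroup F] [NormedSpace ℝ F]

/-- derivative of the diagonal restriction of a continuous multilinear map -/
lemma diag_hasFDerivAt {m : ℕ} (M : ContinuousMultilinearMap ℝ (fun _ : Fin m => E) F) (x : E) :
    HasFDerivAt (fun z => M (fun _ => z))
      (∑ i : Fin m, M.toContinuousLinearMap (fun _ => x) i) x := by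
  classical
  have h := HasFDerivAt.multilinear_comp M (g := fun _ z => z)
    (g' := fun _ => ContinuousLinearMap.id ℝ E) (x := x) (fun i => hasFDerivAt_id x)
  simpa using h

lemma toCLM_apply {m : ℕ} (M : ContinuousMultilinearMap ℝ (fun _ : Fin m => E) F) (x w : E)
    (i : Fin m) :
    M.toContinuousLinearMap (fun _ => x) i w = M (Function.update (fun _ => x) i w) := by
  simp [ContinuousMultilinearMap.toContinuousLinearMap]

lemma derivSeries_apply' (q : FormalMultilinearSeries ℝ E F) (n : ℕ) (x w : E) :
    q.derivSeries n (fun _ ↦ x) w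
      = ∑ i : Fin (1 + n), q (1 + n) (Function.update (fun _ ↦ x) i w) := by
  classical
  simp only [FormalMultilinearSeries.derivSeries,
    ContinuousLinearMap.compFormalMultilinearSeries_apply,
    FormalMultilinearSeries.changeOriginSeries,
    ContinuousLinearMap.compContinuousMultilinearMap_coe, ContinuousLinearEquiv.coe_coe,
    LinearIsometryEquiv.coe_coe, Function.comp_apply, ContinuousMultilinearMap.sum_apply, map_sum,
    ContinuousLinearMap.coe_sum', Finset.sum_apply,
    continuousMultilinearCurryFin1_apply, Matrix.zero_empty]
  simp only [Fin.snoc_zero, FormalMultilinearSeries.changeOriginSeriesTerm_apply]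
  refine (Fintype.sum_bijective
    (fun i : Fin (1 + n) => (⟨({i}ᶜ : Finset (Fin (1 + n))), by
      rw [Finset.card_compl, Fintype.card_fin, Finset.card_singleton, Nat.add_sub_cancel_left]⟩ :
      { s : Finset (Fin (1 + n)) // s.card = n })) ?_ _ _ fun i ↦ ?_).symm
  · constructor
    · intro a b hab
      exact Finset.singleton_injective (compl_injective (Subtype.ext_iff.mp hab))
    · rintro ⟨s, hs⟩
      have h : #sᶜ = 1 := by rw [Finset.card_compl, hs, Fintype.card_fin, Nat.add_sub_cancel]
      obtain ⟨a, ha⟩ := Finset.card_eq_one.mp h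
      exact ⟨a, Subtype.ext (compl_eq_comm.mp ha)⟩
  · congr 1
    ext j
    by_cases hj : j = i
    · subst hj
      rw [Finset.piecewise_eq_of_notMem]
      · simp
      · simp
    · rw [Finset.piecewise_eq_of_mem, Function.update_of_ne hj]
      simp [hj]

lemma diag_deriv_sum_eq_zero {m : ℕ} (M : ContinuousMultilinearMap ℝ (fun _ : Fin m => E) F)
    (hdiag : ∀ y, M (fun _ => y) = 0) (x w : E) :
    ∑ i : Fin m, M (Function.update (fun _ => x) i w) = 0 := by
  classical
  have h1 := diag_hasFDerivAt M x
  have h2 : HasFDerivAt (fun z => M (fun _ => z)) (0 : E →L[ℝ] F) x := by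
    have : (fun z => M (fun _ : Fin m => z)) = fun _ => (0 : F) := funext hdiag
    rw [this]; exact hasFDerivAt_const 0 x
  have h3 := h1.unique h2
  calc ∑ i : Fin m, M (Function.update (fun _ => x) i w)
      = (∑ i : Fin m, M.toContinuousLinearMap (fun _ => x) i) w := by
        rw [ContinuousLinearMap.sum_apply]
        exact Finset.sum_congr rfl fun i _ => (toCLM_apply M x w i).symm
    _ = 0 := by rw [h3]; rfl

section Analytic

variable {m : ℕ} {f fp : E → ℝ}

lemma fderiv_sub_fp_littleO
    (hf : AnalyticAt ℝ f 0)
    (hfp : fp = fun z => ((1 + m).factorial : ℝ)⁻¹ *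
      iteratedFDeriv ℝ (1 + m) f 0 (fun _ => z))
    (hlow : ∀ j < 1 + m, iteratedFDeriv ℝ j f 0 = 0) :
    (fun x => fderiv ℝ f x - fderiv ℝ fp x) =o[nhds 0] fun x => ‖x‖ ^ m := by
  classical
  obtain ⟨q, hq⟩ := hf
  obtain ⟨r, hqr⟩ := hq
  -- diagonal coefficients vanish below 1 + m
  have hdiag : ∀ j, j < 1 + m → ∀ y, q j (fun _ => y) = (0 : ℝ) := by
    intro j hj y
    have h1 := hqr.factorial_smul y j
    rw [hlow j hj] at h1
    simp only [ContinuousMultilinearMap.zero_apply, nsmul_eq_mul] at h1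
    have h2 : (j.factorial : ℝ) ≠ 0 := Nat.cast_ne_zero.mpr j.factorial_ne_zero
    have := mul_eq_zero.mp h1
    tauto
  -- fp equals diagonal of the (1+m)-th coefficient
  have hfp_eq : ∀ y, fp y = q (1 + m) (fun _ => y) := by
    intro y
    have h1 := hqr.factorial_smul y (1 + m)
    simp only [nsmul_eq_mul] at h1
    rw [hfp]
    have h2 : ((1 + m).factorial : ℝ) ≠ 0 := Nat.cast_ne_zero.mpr (1 + m).factorial_ne_zero
    simp only [← h1]
    field_simp
  -- fp differentiability
  have hfpd : ∀ x : E, HasFDerivAt fp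
      (∑ i : Fin (1 + m), (q (1 + m)).toContinuousLinearMap (fun _ => x) i) x := by
    intro x
    have h1 := diag_hasFDerivAt (q (1 + m)) x
    have h2 : (fun z => q (1 + m) (fun _ : Fin (1 + m) => z)) = fp :=
      funext fun y => (hfp_eq y).symm
    rwa [h2] at h1
  -- partial sum identification
  have hps : ∀ y : E, q.derivSeries.partialSum (1 + m) y = fderiv ℝ fp y := by
    intro y
    ext w
    rw [FormalMultilinearSeries.partialSum, ContinuousLinearMap.sum_apply]
    rw [Nat.add_comm 1 m, Finset.sum_range_succ]
    have hzero : ∀ j ∈ Finset.range m,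
        (q.derivSeries j (fun _ => y)) w = 0 := by
      intro j hj
      have hj' := Finset.mem_range.mp hj
      rw [derivSeries_apply']
      exact diag_deriv_sum_eq_zero _ (hdiag (1 + j) (by omega)) y w
    rw [Finset.sum_congr rfl hzero, Finset.sum_const, smul_zero, zero_add]
    rw [derivSeries_apply']
    rw [(hfpd y).fderiv, ContinuousLinearMap.sum_apply]
    exact Finset.sum_congr rfl fun i _ => (toCLM_apply _ y w i)
  -- big-O from partial sums
  have hO := hqr.fderiv.hasFPowerSeriesAt.isBigO_sub_partialSum_pow (1 + m)
  simp only [zero_add, hps] at hO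
  -- ‖x‖ ^ (1 + m) is little-o of ‖x‖ ^ m
  have hoo : (fun x : E => ‖x‖ ^ (1 + m)) =o[nhds 0] fun x => ‖x‖ ^ m := by
    rw [Asymptotics.isLittleO_iff]
    intro c hc
    filter_upwards [Metric.ball_mem_nhds (0 : E) hc] with x hx
    simp only [Metric.mem_ball, dist_zero_right] at hx
    have hx2 : ‖x‖ ^ (1 + m) = ‖x‖ * ‖x‖ ^ m := by ring
    rw [Real.norm_eq_abs, abs_of_nonneg (by positivity), hx2, Real.norm_eq_abs,
      abs_of_nonneg (by positivity)]
    exact mul_le_mul_of_nonneg_right hx.le (by positivity)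
  exact hO.trans_isLittleO hoo

end Analytic

end Prelim


section Homog

variable {H : Type*} [NormedAddCommGroup H] [InnerProductSpace ℝ H] [CompleteSpace H]
variable {m : ℕ} {c : ℝ} {M : ContinuousMultilinearMap ℝ (fun _ : Fin (1 + m) => H) ℝ}
  {fp : H → ℝ}

-- reuse from acc: diag_hasFDerivAt, toCLM_apply
lemma diag_hasFDerivAt' {n : ℕ} (M : ContinuousMultilinearMap ℝ (fun _ : Fin n => H) ℝ) (x : H) :
    HasFDerivAt (fun z => M (fun _ => z))
      (∑ i : Fin n, M.toContinuousLinearMap (fun _ => x) i) x := by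
  classical
  have h := HasFDerivAt.multilinear_comp M (g := fun _ z => z)
    (g' := fun _ => ContinuousLinearMap.id ℝ H) (x := x) (fun i => hasFDerivAt_id x)
  simpa using h

lemma fp_hasFDerivAt (hsm : fp = fun z => c * M (fun _ => z)) (x : H) :
    HasFDerivAt fp (c • ∑ i : Fin (1 + m), M.toContinuousLinearMap (fun _ => x) i) x := by
  rw [hsm]
  exact (diag_hasFDerivAt' M x).const_mul c

lemma fp_smul (hsm : fp = fun z => c * M (fun _ => z)) (t : ℝ) (x : H) :
    fp (t • x) = t ^ (1 + m) * fp x := by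
  rw [hsm]
  have h := M.map_smul_univ (fun _ => t) (fun _ => x)
  simp only [smul_eq_mul, Finset.prod_const, Finset.card_univ, Fintype.card_fin] at h
  simp only [h]
  ring

lemma gradient_fp_homog (hsm : fp = fun z => c * M (fun _ => z)) {t : ℝ} (ht : 0 < t) (x : H) :
    gradient fp (t • x) = t ^ m • gradient fp x := by
  have hA : HasFDerivAt (fun z => fp (t • z)) ((fderiv ℝ fp (t • x)).comp
      (t • ContinuousLinearMap.id ℝ H)) x := by
    have h1 : HasFDerivAt (fun z : H => t • z) (t • ContinuousLinearMap.id ℝ H) x :=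
      (hasFDerivAt_id x).const_smul t
    have h2 := (fp_hasFDerivAt hsm (t • x)).comp x h1
    rw [(fp_hasFDerivAt hsm (t • x)).fderiv]
    exact h2
  have hB : HasFDerivAt (fun z => fp (t • z)) ((t ^ (1 + m)) • fderiv ℝ fp x) x := by
    have h2 : (fun z => fp (t • z)) = fun z => t ^ (1 + m) • fp z := by
      funext z; rw [fp_smul hsm, smul_eq_mul]
    rw [h2]
    rw [(fp_hasFDerivAt hsm x).fderiv]
    exact ((fp_hasFDerivAt hsm x).const_smul (t ^ (1 + m)))
  have h3 := hA.unique hB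
  have h4 : t • fderiv ℝ fp (t • x) = t ^ (1 + m) • fderiv ℝ fp x := by
    ext w
    have := congrArg (fun (L : H →L[ℝ] ℝ) => L w) h3
    simpa [ContinuousLinearMap.smul_apply, mul_comm] using this
  have h5 : fderiv ℝ fp (t • x) = t ^ m • fderiv ℝ fp x := by
    have ht' : t ≠ 0 := ne_of_gt ht
    have h6 := congrArg (fun L : H →L[ℝ] ℝ => t⁻¹ • L) h4
    simp only [smul_smul, inv_mul_cancel₀ ht', one_smul] at h6
    rw [h6]
    congr 1
    rw [pow_add, pow_one]
    field_simp
  unfold gradient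
  rw [h5, map_smul]

example : True := trivial

lemma norm_gradient_fp_le (hsm : fp = fun z => c * M (fun _ => z)) (x : H) :
    ‖gradient fp x‖ ≤ |c| * (1 + m) * ‖M‖ * ‖x‖ ^ m := by
  classical
  have h1 : fderiv ℝ fp x = c • ∑ i : Fin (1 + m), M.toContinuousLinearMap (fun _ => x) i :=
    (fp_hasFDerivAt hsm x).fderiv
  have h2 : ‖gradient fp x‖ = ‖fderiv ℝ fp x‖ := by
    unfold gradient
    rw [LinearIsometryEquiv.norm_map]
  rw [h2, h1]
  have h3 : ∀ i : Fin (1 + m), ‖M.toContinuousLinearMap (fun _ => x) i‖ ≤ ‖M‖ * ‖x‖ ^ m := by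
    intro i
    apply ContinuousLinearMap.opNorm_le_bound _ (by positivity)
    intro w
    have h4 : M.toContinuousLinearMap (fun _ => x) i w
        = M (Function.update (fun _ => x) i w) := by
      simp [ContinuousMultilinearMap.toContinuousLinearMap]
    rw [h4]
    calc ‖M (Function.update (fun _ => x) i w)‖
        ≤ ‖M‖ * ∏ j : Fin (1 + m), ‖Function.update (fun _ => x) i w j‖ :=
          M.le_opNorm _
      _ = ‖M‖ * (‖w‖ * ∏ j ∈ Finset.univ.erase i, ‖x‖) := by
          rw [← Finset.mul_prod_erase Finset.univ _ (Finset.mem_univ i)]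
          congr 1
          · congr 1
            · simp
            · exact Finset.prod_congr rfl fun j hj => by
                rw [Function.update_of_ne (Finset.ne_of_mem_erase hj)]
      _ = ‖M‖ * ‖x‖ ^ m * ‖w‖ := by
          rw [Finset.prod_const]
          have : (Finset.univ.erase i).card = m := by
            rw [Finset.card_erase_of_mem (Finset.mem_univ i), Finset.card_univ,
              Fintype.card_fin]
            omega
          rw [this]; ring
  calc ‖c • ∑ i : Fin (1 + m), M.toContinuousLinearMap (fun _ => x) i‖
      ≤ |c| * ∑ i : Fin (1 + m), ‖M.toContinuousLinearMap (fun _ => x) i‖ := by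
        calc ‖c • ∑ i : Fin (1 + m), M.toContinuousLinearMap (fun _ => x) i‖
            ≤ ‖c‖ * ‖∑ i : Fin (1 + m), M.toContinuousLinearMap (fun _ => x) i‖ :=
              ContinuousLinearMap.opNorm_smul_le c _
          _ ≤ |c| * ∑ i : Fin (1 + m), ‖M.toContinuousLinearMap (fun _ => x) i‖ := by
              rw [Real.norm_eq_abs]
              exact mul_le_mul_of_nonneg_left (norm_sum_le _ _) (abs_nonneg c)
    _ ≤ |c| * ((1 + m) * (‖M‖ * ‖x‖ ^ m)) := by
        apply mul_le_mul_of_nonneg_left _ (abs_nonneg c)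
        calc (∑ i : Fin (1 + m), ‖M.toContinuousLinearMap (fun _ => x) i‖)
            ≤ ∑ _i : Fin (1 + m), ‖M‖ * ‖x‖ ^ m := Finset.sum_le_sum fun i _ => h3 i
          _ = (1 + m) * (‖M‖ * ‖x‖ ^ m) := by
              rw [Finset.sum_const, Finset.card_univ, Fintype.card_fin, nsmul_eq_mul]
              push_cast; ring
    _ = |c| * (1 + m) * ‖M‖ * ‖x‖ ^ m := by push_cast; ring

lemma abs_fp_le (hsm : fp = fun z => c * M (fun _ => z)) (x : H) :
    |fp x| ≤ |c| * ‖M‖ * ‖x‖ ^ (1 + m) := by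
  rw [hsm]
  calc |c * M (fun _ => x)| = |c| * ‖M (fun _ : Fin (1 + m) => x)‖ := by
        rw [abs_mul]; rfl
    _ ≤ |c| * (‖M‖ * ∏ _j : Fin (1 + m), ‖x‖) :=
        mul_le_mul_of_nonneg_left (M.le_opNorm _) (abs_nonneg c)
    _ = |c| * ‖M‖ * ‖x‖ ^ (1 + m) := by
        rw [Finset.prod_const, Finset.card_univ, Fintype.card_fin]; ring

end Homog


section Helpers
variable {H : Type*} [NormedAddCommGroup H] [InnerProductSpace ℝ H] [CompleteSpace H]

lemma gradient_sub_littleO {f fp : H → ℝ} {m : ℕ}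
    (h : (fun x => fderiv ℝ f x - fderiv ℝ fp x) =o[nhds 0] fun x => ‖x‖ ^ m) :
    (fun x => gradient f x - gradient fp x) =o[nhds 0] fun x => ‖x‖ ^ m := by
  rw [Asymptotics.isLittleO_iff] at h ⊢
  intro c hc
  filter_upwards [h hc] with x hx
  have he : gradient f x - gradient fp x
      = (InnerProductSpace.toDual ℝ H).symm (fderiv ℝ f x - fderiv ℝ fp x) := by
    unfold gradient
    rw [map_sub]
  rw [he, LinearIsometryEquiv.norm_map]
  exact hx

lemma hasDerivAt_norm {z : ℝ → H} {v : H} {t : ℝ} (hz : HasDerivAt z v t) (hne : z t ≠ 0) :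
    HasDerivAt (fun s => ‖z s‖) (⟪z t, v⟫ / ‖z t‖) t := by
  have h1 : HasDerivAt (fun s => ⟪z s, z s⟫) (⟪z t, v⟫ + ⟪v, z t⟫) t :=
    hz.inner ℝ hz
  have h2 : ⟪z t, z t⟫ ≠ 0 := by
    simpa [real_inner_self_eq_norm_mul_norm] using
      mul_ne_zero (norm_ne_zero_iff.mpr hne) (norm_ne_zero_iff.mpr hne)
  have h3 : HasDerivAt (fun s => Real.sqrt ⟪z s, z s⟫)
      (1 / (2 * Real.sqrt ⟪z t, z t⟫) * (⟪z t, v⟫ + ⟪v, z t⟫)) t :=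
    (Real.hasDerivAt_sqrt h2).comp t h1
  have h4 : (fun s => Real.sqrt ⟪z s, z s⟫) = fun s => ‖z s‖ := by
    funext s
    rw [real_inner_self_eq_norm_mul_norm, Real.sqrt_mul_self (norm_nonneg _)]
  rw [h4] at h3
  convert h3 using 1
  rw [real_inner_self_eq_norm_mul_norm, Real.sqrt_mul_self (norm_nonneg _),
    real_inner_comm v (z t)]
  have : ‖z t‖ ≠ 0 := norm_ne_zero_iff.mpr hne
  field_simp
  ring

end Helpers


section KeyIneq
variable {H : Type*} [NormedAddCommGroup H] [InnerProductSpace ℝ H]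

lemma key_ineq (a θv Gv Rv z0 w : H) (r δ U0 ε₁ : ℝ) (k : ℕ)
    (hr : 0 < r) (hθ : ‖θv‖ = 1)
    (hz0 : z0 = r • θv)
    (hw : w = Gv - Rv - (r ^ (k + 1)) • a)
    (hVle : ‖a - ⟪a, θv⟫ • θv‖ ≤ U0) (hVge : δ ≤ ‖a - ⟪a, θv⟫ • θv‖) (hδ : 0 < δ)
    (hGb : ‖Gv‖ ≤ ε₁ * r ^ (k + 1)) (hRb : ‖Rv‖ ≤ ε₁ * r ^ (k + 1))
    (hsmall : ε₁ * (U0 + 1) ≤ δ ^ 2 / 4) (hε₁ : 0 ≤ ε₁) :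
    ⟪a, r⁻¹ • w + (-(⟪z0, w⟫ / r) / r ^ 2) • z0⟫ ≤ -(δ ^ 2 / 2) * r ^ k := by
  have hrne : r ≠ 0 := ne_of_gt hr
  set b := ⟪a, θv⟫ with hb
  set V := a - b • θv with hV
  have haw : ⟪a, w⟫ = ⟪a, Gv - Rv⟫ - r ^ (k + 1) * ⟪a, a⟫ := by
    rw [hw]
    rw [show Gv - Rv - (r ^ (k + 1)) • a = (Gv - Rv) - (r ^ (k + 1)) • a from rfl,
      inner_sub_right, real_inner_smul_right]
  have hθw : ⟪θv, w⟫ = ⟪θv, Gv - Rv⟫ - r ^ (k + 1) * b := by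
    rw [hw, inner_sub_right, real_inner_smul_right, hb, real_inner_comm a θv]
  have hz0w : ⟪z0, w⟫ = r * ⟪θv, w⟫ := by
    rw [hz0, real_inner_smul_left]
  have haz0 : ⟪a, z0⟫ = r * b := by
    rw [hz0, real_inner_smul_right]
  have hθ2 : ⟪θv, θv⟫ = 1 := by
    rw [real_inner_self_eq_norm_sq, hθ]; norm_num
  have hVnorm : ⟪a, a⟫ - b ^ 2 = ‖V‖ ^ 2 := by
    have h1 : ‖V‖ ^ 2 = ⟪V, V⟫ := (real_inner_self_eq_norm_sq V).symm
    rw [h1, hV]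
    simp only [inner_sub_left, inner_sub_right, real_inner_smul_left, real_inner_smul_right,
      hθ2, real_inner_comm θv a, ← hb]
    rw [real_inner_self_eq_norm_sq a, real_inner_comm a θv, ← hb]
    ring
  have hVG : ⟪V, Gv - Rv⟫ = ⟪a, Gv - Rv⟫ - b * ⟪θv, Gv - Rv⟫ := by
    rw [hV, inner_sub_left, real_inner_smul_left]
  have hmain : ⟪a, r⁻¹ • w + (-(⟪z0, w⟫ / r) / r ^ 2) • z0⟫
      = r⁻¹ * ⟪V, Gv - Rv⟫ - r ^ k * ‖V‖ ^ 2 := by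
    rw [inner_add_right, real_inner_smul_right, real_inner_smul_right, haz0, hz0w, hθw, haw,
      hVG, ← hVnorm]
    field_simp
    ring
  rw [hmain]
  have hrk : (0:ℝ) < r ^ k := pow_pos hr k
  have hVGb : |⟪V, Gv - Rv⟫| ≤ U0 * (2 * ε₁ * r ^ (k + 1)) := by
    calc |⟪V, Gv - Rv⟫| ≤ ‖V‖ * ‖Gv - Rv‖ := abs_real_inner_le_norm _ _
      _ ≤ U0 * (2 * ε₁ * r ^ (k + 1)) := by
          apply mul_le_mul hVle _ (norm_nonneg _) (le_trans (norm_nonneg V) hVle)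
          calc ‖Gv - Rv‖ ≤ ‖Gv‖ + ‖Rv‖ := norm_sub_le _ _
            _ ≤ 2 * ε₁ * r ^ (k + 1) := by linarith
  have hterm1 : r⁻¹ * ⟪V, Gv - Rv⟫ ≤ 2 * (U0 * ε₁) * r ^ k := by
    have h2 : r⁻¹ * ⟪V, Gv - Rv⟫ ≤ r⁻¹ * (U0 * (2 * ε₁ * r ^ (k + 1))) := by
      apply mul_le_mul_of_nonneg_left _ (le_of_lt (inv_pos.mpr hr))
      exact le_trans (le_abs_self _) hVGb
    calc r⁻¹ * ⟪V, Gv - Rv⟫ ≤ r⁻¹ * (U0 * (2 * ε₁ * r ^ (k + 1))) := h2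
      _ = 2 * (U0 * ε₁) * r ^ k := by
          rw [pow_succ]
          field_simp
  have hV2 : δ ^ 2 ≤ ‖V‖ ^ 2 := by
    apply pow_le_pow_left₀ (le_of_lt hδ) hVge
  have hU0 : 0 ≤ U0 := le_trans (norm_nonneg V) hVle
  have hsmall2 : U0 * ε₁ ≤ δ ^ 2 / 4 := by nlinarith
  nlinarith [mul_le_mul_of_nonneg_right hV2 (le_of_lt hrk),
    mul_le_mul_of_nonneg_right hsmall2 (le_of_lt hrk)]

lemma rd_bound (a θv Gv Rv z0 w : H) (r CC Mg ε₁ : ℝ) (m : ℕ)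
    (hr : 0 < r) (hθ : ‖θv‖ = 1)
    (hz0 : z0 = r • θv)
    (hw : w = Gv - Rv - (r ^ m) • a)
    (hGb : ‖Gv‖ ≤ CC * r ^ m) (hRb : ‖Rv‖ ≤ ε₁ * r ^ m)
    (hab : ‖a‖ ≤ Mg) :
    |⟪z0, w⟫ / r| ≤ (CC + ε₁ + Mg) * r ^ m := by
  have hrne : r ≠ 0 := ne_of_gt hr
  have hz0w : ⟪z0, w⟫ = r * ⟪θv, w⟫ := by rw [hz0, real_inner_smul_left]
  have h1 : |⟪z0, w⟫ / r| = |⟪θv, w⟫| := by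
    rw [hz0w, mul_comm, mul_div_assoc, div_self hrne, mul_one]
  rw [h1]
  have hrm : (0:ℝ) ≤ r ^ m := le_of_lt (pow_pos hr m)
  calc |⟪θv, w⟫| ≤ ‖θv‖ * ‖w‖ := abs_real_inner_le_norm _ _
    _ = ‖w‖ := by rw [hθ, one_mul]
    _ ≤ ‖Gv‖ + ‖Rv‖ + ‖(r ^ m) • a‖ := by
        rw [hw]
        exact le_trans (norm_sub_le _ _) (add_le_add_left (norm_sub_le _ _) _)
    _ ≤ CC * r ^ m + ε₁ * r ^ m + r ^ m * Mg := by
        have h3 : ‖(r ^ m) • a‖ = r ^ m * ‖a‖ := by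
          rw [norm_smul, Real.norm_eq_abs, abs_of_nonneg hrm]
        rw [h3]
        have := mul_le_mul_of_nonneg_left hab hrm
        linarith
    _ = (CC + ε₁ + Mg) * r ^ m := by ring

end KeyIneq

set_option maxHeartbeats 1000000 in
/-- Lemma 7.1: along a perturbed gradient flow `z' + ∇f(z) = G`
with `‖G(t)‖ ≤ C ‖z(t)‖^{p-ε}` converging to `0`, the tangential gradient of
the lowest-order homogeneous part `f_p` (here realized as the degree-`p` Taylor
term `fp z = (p!)⁻¹ D^p f(0)[z,…,z]`, all lower-order terms vanishing) along
the secant `θ(t) = z(t)/‖z(t)‖` has `liminf_{t→∞} ‖∇^S f_p(θ(t))‖ = 0`. -/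
theorem liminf_tangential_gradient_zero
    (J p : ℕ) (hp : 3 ≤ p)
    (f fp : EuclideanSpace ℝ (Fin J) → ℝ)
    (hf : ∀ x, AnalyticAt ℝ f x)
    (hfp : fp = fun z => (p.factorial : ℝ)⁻¹ *
      iteratedFDeriv ℝ p f 0 (fun _ => z))
    (hlow : ∀ j < p, iteratedFDeriv ℝ j f 0 = 0)
    (hfp_ne : fp ≠ 0)
    (z G : ℝ → EuclideanSpace ℝ (Fin J))
    (C ε : ℝ) (hε : 0 < ε) (hε' : ε < 1 / 2)
    (hODE : ∀ t : ℝ, 0 ≤ t → HasDerivAt z (G t - gradient f (z t)) t)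
    (hG : ∀ t : ℝ, 0 ≤ t → ‖G t‖ ≤ C * ‖z t‖ ^ ((p : ℝ) - ε))
    (hzne : ∀ t : ℝ, 0 ≤ t → z t ≠ 0)
    (hz0 : Tendsto z atTop (nhds 0)) :
    Filter.liminf
      (fun t : ℝ =>
        ‖gradient fp (‖z t‖⁻¹ • z t) -
          ⟪gradient fp (‖z t‖⁻¹ • z t), ‖z t‖⁻¹ • z t⟫ • (‖z t‖⁻¹ • z t)‖)
      atTop = 0 := by
  classical
  obtain ⟨k, rfl⟩ : ∃ k, p = 1 + (k + 1) := ⟨p - 2, by omega⟩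
  have hk1 : 1 ≤ k := by omega
  set M := iteratedFDeriv ℝ (1 + (k + 1)) f 0 with hMdef
  set c : ℝ := (((1 + (k + 1)).factorial : ℕ) : ℝ)⁻¹ with hcdef
  have hsm : fp = fun y => c * M (fun _ => y) := hfp
  set θ : ℝ → EuclideanSpace ℝ (Fin J) := fun t => ‖z t‖⁻¹ • z t with hθdef
  set u : ℝ → ℝ := fun t =>
    ‖gradient fp (θ t) - ⟪gradient fp (θ t), θ t⟫ • θ t‖ with hudef
  show liminf u atTop = 0
  -- norm of θ
  have hθle : ∀ t, ‖θ t‖ ≤ 1 := by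
    intro t
    by_cases h : z t = 0
    · simp [hθdef, h]
    · rw [hθdef]
      simp only
      rw [norm_smul, Real.norm_eq_abs, abs_of_nonneg (inv_nonneg.2 (norm_nonneg _)),
        inv_mul_cancel₀ (norm_ne_zero_iff.2 h)]
  have hθunit : ∀ t : ℝ, z t ≠ 0 → ‖θ t‖ = 1 := by
    intro t h
    rw [hθdef]
    simp only
    rw [norm_smul, Real.norm_eq_abs, abs_of_nonneg (inv_nonneg.2 (norm_nonneg _)),
      inv_mul_cancel₀ (norm_ne_zero_iff.2 h)]
  -- uniform bounds for gradient fp on the unit ball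
  set Mg : ℝ := |c| * (1 + ((k + 1 : ℕ) : ℝ)) * ‖M‖ with hMgdef
  have hMg0 : 0 ≤ Mg := by positivity
  have hMgb : ∀ x : EuclideanSpace ℝ (Fin J), ‖x‖ ≤ 1 → ‖gradient fp x‖ ≤ Mg := by
    intro x hx
    refine le_trans (norm_gradient_fp_le hsm x) ?_
    rw [hMgdef]
    have h1 : ‖x‖ ^ (k + 1) ≤ 1 := pow_le_one₀ (norm_nonneg x) hx
    have h2 : (0:ℝ) ≤ |c| * (1 + ((k + 1 : ℕ) : ℝ)) * ‖M‖ := by positivity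
    calc |c| * (1 + ((k + 1 : ℕ) : ℝ)) * ‖M‖ * ‖x‖ ^ (k + 1)
        ≤ |c| * (1 + ((k + 1 : ℕ) : ℝ)) * ‖M‖ * 1 := by
          exact mul_le_mul_of_nonneg_left h1 h2
      _ = |c| * (1 + ((k + 1 : ℕ) : ℝ)) * ‖M‖ := mul_one _
  set U0 : ℝ := 2 * Mg with hU0def
  have hU00 : 0 ≤ U0 := by rw [hU0def]; linarith
  have hu_le : ∀ t, u t ≤ U0 := by
    intro t
    rw [hudef]
    simp only
    have h1 : ‖gradient fp (θ t)‖ ≤ Mg := hMgb _ (hθle t)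
    have h2 : ‖⟪gradient fp (θ t), θ t⟫ • θ t‖ ≤ Mg := by
      rw [norm_smul, Real.norm_eq_abs]
      calc |⟪gradient fp (θ t), θ t⟫| * ‖θ t‖
          ≤ (‖gradient fp (θ t)‖ * ‖θ t‖) * ‖θ t‖ :=
            mul_le_mul_of_nonneg_right (abs_real_inner_le_norm _ _) (norm_nonneg _)
        _ ≤ (Mg * 1) * 1 := by
            apply mul_le_mul _ (hθle t) (norm_nonneg _) (by positivity)
            exact mul_le_mul h1 (hθle t) (norm_nonneg _) hMg0
        _ = Mg := by ring
    calc ‖gradient fp (θ t) - ⟪gradient fp (θ t), θ t⟫ • θ t‖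
        ≤ ‖gradient fp (θ t)‖ + ‖⟪gradient fp (θ t), θ t⟫ • θ t‖ := norm_sub_le _ _
      _ ≤ Mg + Mg := add_le_add h1 h2
      _ = U0 := by rw [hU0def]; ring
  -- liminf reduction
  have hbdd_le : IsBoundedUnder (· ≤ ·) atTop u :=
    Filter.isBoundedUnder_of ⟨U0, fun t => hu_le t⟩
  have hbdd_ge : IsBoundedUnder (· ≥ ·) atTop u :=
    Filter.isBoundedUnder_of ⟨0, fun t => norm_nonneg _⟩
  have hcob_ge : IsCoboundedUnder (· ≥ ·) atTop u := hbdd_le.isCoboundedUnder_ge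
  have h0 : 0 ≤ liminf u atTop :=
    Filter.le_liminf_of_le hcob_ge (Eventually.of_forall fun t => norm_nonneg _)
  by_contra hne
  have hpos : 0 < liminf u atTop := lt_of_le_of_ne h0 (Ne.symm hne)
  set δ : ℝ := liminf u atTop / 2 with hδdef
  have hδ : 0 < δ := by rw [hδdef]; linarith
  have hev : ∀ᶠ t in atTop, δ < u t := by
    apply Filter.eventually_lt_of_lt_liminf _ hbdd_ge
    rw [hδdef]; linarith
    -- small parameter
  set ε₁ : ℝ := δ ^ 2 / (4 * (U0 + 1)) with hε₁def
  have hε₁ : 0 < ε₁ := by rw [hε₁def]; positivity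
  have hsmall : ε₁ * (U0 + 1) ≤ δ ^ 2 / 4 := by
    rw [hε₁def]
    rw [div_mul_eq_mul_div, div_le_div_iff₀ (by positivity) (by norm_num)]
    nlinarith
  -- little-o data
  have hlo := gradient_sub_littleO (fderiv_sub_fp_littleO (m := k + 1) (hf 0) hfp hlow)
  rw [Asymptotics.isLittleO_iff] at hlo
  have hball0 := hlo hε₁
  rw [Metric.eventually_nhds_iff] at hball0
  obtain ⟨ρ0, hρ0, hball⟩ := hball0
  set ρ : ℝ := min ρ0 1 with hρdef
  have hρ : 0 < ρ := lt_min hρ0 one_pos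
  have hRbnd : ∀ x : EuclideanSpace ℝ (Fin J), ‖x‖ < ρ →
      ‖gradient f x - gradient fp x‖ ≤ ε₁ * ‖x‖ ^ (k + 1) := by
    intro x hx
    have h1 := hball (show dist x 0 < ρ0 by
      rw [dist_zero_right]; exact lt_of_lt_of_le hx (min_le_left _ _))
    rwa [Real.norm_eq_abs, abs_of_nonneg (by positivity)] at h1
  -- C is nonnegative
  have hC0 : 0 ≤ C := by
    have h1 := hG 0 le_rfl
    have h2 : (0:ℝ) < ‖z 0‖ ^ (((1 + (k + 1) : ℕ) : ℝ) - ε) :=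
      Real.rpow_pos_of_pos (norm_pos_iff.mpr (hzne 0 le_rfl)) _
    have h3 : 0 ≤ C * ‖z 0‖ ^ (((1 + (k + 1) : ℕ) : ℝ) - ε) :=
      le_trans (norm_nonneg _) h1
    exact (mul_nonneg_iff_of_pos_right h2).mp h3
  -- eventualities
  have hrtend : Tendsto (fun t => ‖z t‖) atTop (nhds 0) := by
    have := hz0.norm; simpa using this
  have e2 : ∀ᶠ t in atTop, ‖z t‖ < ρ := hrtend.eventually_lt_const hρ
  have e3 : ∀ᶠ t in atTop, C * ‖z t‖ ^ ((1:ℝ) - ε) < ε₁ := by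
    have hcont : ContinuousAt (fun x : ℝ => x ^ ((1:ℝ) - ε)) 0 :=
      Real.continuousAt_rpow_const 0 _ (Or.inr (by linarith))
    have h1 : Tendsto (fun t => ‖z t‖ ^ ((1:ℝ) - ε)) atTop (nhds ((0:ℝ) ^ ((1:ℝ) - ε))) :=
      hcont.tendsto.comp hrtend
    rw [Real.zero_rpow (by linarith : (1:ℝ) - ε ≠ 0)] at h1
    have h2 : Tendsto (fun t => C * ‖z t‖ ^ ((1:ℝ) - ε)) atTop (nhds 0) := by
      simpa using h1.const_mul C
    exact h2.eventually_lt_const hε₁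
  obtain ⟨T₀, hT₀⟩ := eventually_atTop.mp ((hev.and e2).and e3)
  set T : ℝ := max T₀ 1 with hTdef
  have hT1 : (1:ℝ) ≤ T := le_max_right _ _
  have hTfacts : ∀ t, T ≤ t → (δ < u t ∧ ‖z t‖ < ρ) ∧ C * ‖z t‖ ^ ((1:ℝ) - ε) < ε₁ :=
    fun t ht => hT₀ t (le_trans (le_max_left _ _) ht)
  have ht0 : ∀ t : ℝ, T ≤ t → (0:ℝ) ≤ t := fun t ht => le_trans (by linarith) ht
  have hzneT : ∀ t, T ≤ t → z t ≠ 0 := fun t ht => hzne t (ht0 t ht)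
  have hrpos : ∀ t, T ≤ t → 0 < ‖z t‖ := fun t ht => norm_pos_iff.mpr (hzneT t ht)
  have hrlt1 : ∀ t, T ≤ t → ‖z t‖ < 1 :=
    fun t ht => lt_of_lt_of_le (hTfacts t ht).1.2 (min_le_right _ _)
  -- derivative functions
  set zd : ℝ → EuclideanSpace ℝ (Fin J) := fun t => G t - gradient f (z t) with hzddef
  set rd : ℝ → ℝ := fun t => ⟪z t, zd t⟫ / ‖z t‖ with hrddef
  set θd : ℝ → EuclideanSpace ℝ (Fin J) :=
    fun t => ‖z t‖⁻¹ • zd t + (-(⟪z t, zd t⟫ / ‖z t‖) / ‖z t‖ ^ 2) • z t with hθddef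
  have hzd : ∀ t, T ≤ t → HasDerivAt z (zd t) t := fun t ht => hODE t (ht0 t ht)
  have hrd : ∀ t, T ≤ t → HasDerivAt (fun s => ‖z s‖) (rd t) t := fun t ht =>
    hasDerivAt_norm (hzd t ht) (hzneT t ht)
  have hθd : ∀ t, T ≤ t → HasDerivAt θ (θd t) t := by
    intro t ht
    have h1 : HasDerivAt (fun s => ‖z s‖⁻¹) (-rd t / ‖z t‖ ^ 2) t :=
      (hrd t ht).inv (ne_of_gt (hrpos t ht))
    have h2 := h1.smul (hzd t ht)
    exact h2
  -- z t = r • θ t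
  have hzθ : ∀ t, T ≤ t → z t = ‖z t‖ • θ t := by
    intro t ht
    rw [hθdef]
    simp only
    rw [smul_smul, mul_inv_cancel₀ (ne_of_gt (hrpos t ht)), one_smul]
  -- gradient homogeneity
  have hghom : ∀ t, T ≤ t → gradient fp (z t) = ‖z t‖ ^ (k + 1) • gradient fp (θ t) := by
    intro t ht
    conv_lhs => rw [hzθ t ht]
    exact gradient_fp_homog hsm (hrpos t ht) (θ t)
  -- zd decomposition
  have hzdec : ∀ t, T ≤ t → zd t = G t - (gradient f (z t) - gradient fp (z t))
      - ‖z t‖ ^ (k + 1) • gradient fp (θ t) := by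
    intro t ht
    rw [hzddef]
    simp only
    rw [← hghom t ht]
    abel
  -- G bounds
  have hGsplit : ∀ t, T ≤ t → ‖G t‖ ≤ ε₁ * ‖z t‖ ^ (k + 1) := by
    intro t ht
    have h1 := hG t (ht0 t ht)
    have h2 : ‖z t‖ ^ (((1 + (k + 1) : ℕ) : ℝ) - ε)
        = ‖z t‖ ^ ((1:ℝ) - ε) * ‖z t‖ ^ (k + 1) := by
      rw [← Real.rpow_natCast (‖z t‖) (k + 1), ← Real.rpow_add (hrpos t ht)]
      congr 1
      push_cast; ring
    have h3 : (0:ℝ) ≤ ‖z t‖ ^ (k + 1) := le_of_lt (pow_pos (hrpos t ht) _)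
    calc ‖G t‖ ≤ C * ‖z t‖ ^ (((1 + (k + 1) : ℕ) : ℝ) - ε) := h1
      _ = (C * ‖z t‖ ^ ((1:ℝ) - ε)) * ‖z t‖ ^ (k + 1) := by rw [h2]; ring
      _ ≤ ε₁ * ‖z t‖ ^ (k + 1) :=
          mul_le_mul_of_nonneg_right (le_of_lt (hTfacts t ht).2) h3
  have hGcoarse : ∀ t, T ≤ t → ‖G t‖ ≤ C * ‖z t‖ ^ (k + 1) := by
    intro t ht
    have h1 := hG t (ht0 t ht)
    have h2 : ‖z t‖ ^ (((1 + (k + 1) : ℕ) : ℝ) - ε) ≤ ‖z t‖ ^ (((k + 1 : ℕ)) : ℝ) := by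
      apply Real.rpow_le_rpow_of_exponent_ge (hrpos t ht) (le_of_lt (hrlt1 t ht))
      push_cast; linarith
    calc ‖G t‖ ≤ C * ‖z t‖ ^ (((1 + (k + 1) : ℕ) : ℝ) - ε) := h1
      _ ≤ C * ‖z t‖ ^ (k + 1) := by
          rw [← Real.rpow_natCast (‖z t‖) (k + 1)]
          exact mul_le_mul_of_nonneg_left h2 hC0
  -- R bound
  have hRt : ∀ t, T ≤ t → ‖gradient f (z t) - gradient fp (z t)‖ ≤ ε₁ * ‖z t‖ ^ (k + 1) :=
    fun t ht => hRbnd (z t) (hTfacts t ht).1.2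
  -- derivative of fp ∘ θ
  have hfpθ : ∀ t, T ≤ t → HasDerivAt (fun s => fp (θ s)) (⟪gradient fp (θ t), θd t⟫) t := by
    intro t ht
    have hdiff : DifferentiableAt ℝ fp (θ t) := (fp_hasFDerivAt hsm (θ t)).differentiableAt
    have hgrad := hdiff.hasGradientAt
    rw [hasGradientAt_iff_hasFDerivAt] at hgrad
    have h2 := hgrad.comp_hasDerivAt t (hθd t ht)
    have h4 := hdiff.hasFDerivAt.comp_hasDerivAt t (hθd t ht)
    have h3 : ⟪gradient fp (θ t), θd t⟫ = fderiv ℝ fp (θ t) (θd t) := by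
      unfold gradient; exact InnerProductSpace.toDual_symm_apply
    rw [h3]; exact h4
  have hFb : ∀ t, T ≤ t → ⟪gradient fp (θ t), θd t⟫ ≤ -(δ ^ 2 / 2) * ‖z t‖ ^ k := by
    intro t ht
    exact key_ineq (gradient fp (θ t)) (θ t) (G t)
      (gradient f (z t) - gradient fp (z t)) (z t) (zd t) (‖z t‖) δ U0 ε₁ k
      (hrpos t ht) (hθunit t (hzneT t ht)) (hzθ t ht) (hzdec t ht)
      (hu_le t) (le_of_lt (hTfacts t ht).1.1)
      hδ (hGsplit t ht) (hRt t ht) hsmall (le_of_lt hε₁)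
  -- rd bound
  have hrdb : ∀ t, T ≤ t → |rd t| ≤ (C + ε₁ + Mg) * ‖z t‖ ^ (k + 1) := by
    intro t ht
    exact rd_bound (gradient fp (θ t)) (θ t) (G t)
      (gradient f (z t) - gradient fp (z t)) (z t) (zd t) (‖z t‖) C Mg ε₁ (k + 1)
      (hrpos t ht) (hθunit t (hzneT t ht)) (hzθ t ht) (hzdec t ht)
      (hGcoarse t ht) (hRt t ht) (hMgb _ (hθle t))
  -- the comparison function φ
  set A : ℝ := C + ε₁ + Mg with hAdef
  have hA : 0 < A := by rw [hAdef]; linarith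
  set A₂ : ℝ := k * A with hA₂def
  have hA₂ : 0 < A₂ := by
    rw [hA₂def]
    have h1 : (1:ℝ) ≤ (k : ℝ) := by exact_mod_cast hk1
    nlinarith
  set φ : ℝ → ℝ := fun t => ‖z t‖ ^ (-(k:ℝ)) with hφdef
  have hφd : ∀ t, T ≤ t → HasDerivAt φ (-(k:ℝ) * ‖z t‖ ^ (-(k:ℝ) - 1) * rd t) t := by
    intro t ht
    have h1 := (Real.hasDerivAt_rpow_const
      (p := -(k:ℝ)) (Or.inl (ne_of_gt (hrpos t ht)))).comp t (hrd t ht)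
    exact h1
  have hφb : ∀ t, T ≤ t → -(k:ℝ) * ‖z t‖ ^ (-(k:ℝ) - 1) * rd t ≤ A₂ := by
    intro t ht
    have hr := hrpos t ht
    have h2 : ‖z t‖ ^ (-(k:ℝ) - 1) * ‖z t‖ ^ (k + 1) = 1 := by
      rw [← Real.rpow_natCast (‖z t‖) (k + 1), ← Real.rpow_add hr]
      rw [show (-(k:ℝ) - 1 + ((k + 1 : ℕ) : ℝ)) = 0 by push_cast; ring, Real.rpow_zero]
    have h3 : 0 < ‖z t‖ ^ (-(k:ℝ) - 1) := Real.rpow_pos_of_pos hr _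
    have h4 : (0:ℝ) ≤ (k:ℝ) * ‖z t‖ ^ (-(k:ℝ) - 1) := by positivity
    calc -(k:ℝ) * ‖z t‖ ^ (-(k:ℝ) - 1) * rd t
        ≤ (k:ℝ) * ‖z t‖ ^ (-(k:ℝ) - 1) * |rd t| := by
          have h5 : -(k:ℝ) * ‖z t‖ ^ (-(k:ℝ) - 1) * rd t
              ≤ |(-(k:ℝ)) * ‖z t‖ ^ (-(k:ℝ) - 1) * rd t| := le_abs_self _
          have h6 : |(-(k:ℝ)) * ‖z t‖ ^ (-(k:ℝ) - 1) * rd t|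
              = (k:ℝ) * ‖z t‖ ^ (-(k:ℝ) - 1) * |rd t| := by
            rw [abs_mul, abs_mul, abs_neg, abs_of_nonneg (Nat.cast_nonneg k),
              abs_of_pos h3]
          linarith
      _ ≤ (k:ℝ) * ‖z t‖ ^ (-(k:ℝ) - 1) * ((C + ε₁ + Mg) * ‖z t‖ ^ (k + 1)) :=
          mul_le_mul_of_nonneg_left (hrdb t ht) h4
      _ = ((k:ℝ) * (C + ε₁ + Mg)) * (‖z t‖ ^ (-(k:ℝ) - 1) * ‖z t‖ ^ (k + 1)) := by ring
      _ = A₂ := by rw [h2, mul_one, hA₂def, hAdef]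
  have hφlin : ∀ t, T ≤ t → φ t ≤ φ T + A₂ * (t - T) := by
    intro t ht
    have hψd : ∀ s, T ≤ s → HasDerivAt (fun y => φ T + A₂ * (y - T) - φ y)
        (A₂ - (-(k:ℝ) * ‖z s‖ ^ (-(k:ℝ) - 1) * rd s)) s := by
      intro s hs
      have h2 : HasDerivAt (fun y : ℝ => y - T) 1 s := (hasDerivAt_id s).sub_const T
      have h3 := h2.const_mul A₂
      rw [mul_one] at h3
      exact (h3.const_add (φ T)).sub (hφd s hs)
    have hmono : MonotoneOn (fun y => φ T + A₂ * (y - T) - φ y) (Set.Ici T) := by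
      apply monotoneOn_of_deriv_nonneg (convex_Ici T)
      · intro s hs
        exact (hψd s hs).continuousAt.continuousWithinAt
      · intro s hs
        rw [interior_Ici] at hs
        exact (hψd s (le_of_lt hs)).differentiableAt.differentiableWithinAt
      · intro s hs
        rw [interior_Ici] at hs
        rw [(hψd s (le_of_lt hs)).deriv]
        have := hφb s (le_of_lt hs)
        linarith
    have h4 := hmono (Set.self_mem_Ici) (Set.mem_Ici.mpr ht) ht
    simp only at h4
    linarith
  have hφpos : ∀ t, T ≤ t → 0 < φ t := fun t ht => Real.rpow_pos_of_pos (hrpos t ht) _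
  set Df : ℝ → ℝ := fun t => φ T + A₂ * (t - T) with hDdef
  have hDpos : ∀ t, T ≤ t → 0 < Df t := by
    intro t ht
    have h1 : 0 ≤ A₂ * (t - T) := mul_nonneg (le_of_lt hA₂) (by linarith)
    have h2 := hφpos T le_rfl
    rw [hDdef]
    simp only
    linarith
  have hrk_low : ∀ t, T ≤ t → (Df t)⁻¹ ≤ ‖z t‖ ^ k := by
    intro t ht
    have h1 : φ t = (‖z t‖ ^ k)⁻¹ := by
      rw [hφdef]
      simp only
      rw [← Real.rpow_natCast (‖z t‖) k, ← Real.rpow_neg (le_of_lt (hrpos t ht))]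
    have h2 : (‖z t‖ ^ k)⁻¹ ≤ Df t := by rw [← h1]; exact hφlin t ht
    have h3 : (0:ℝ) < (‖z t‖ ^ k)⁻¹ := by
      rw [← h1]; exact hφpos t ht
    calc (Df t)⁻¹ ≤ ((‖z t‖ ^ k)⁻¹)⁻¹ := inv_anti₀ h3 h2
      _ = ‖z t‖ ^ k := inv_inv _
  -- the Lyapunov function ω
  set ω : ℝ → ℝ := fun t => fp (θ t) + δ ^ 2 / 2 * A₂⁻¹ * Real.log (Df t) with hωdef
  have hωd : ∀ t, T ≤ t → HasDerivAt ω
      (⟪gradient fp (θ t), θd t⟫ + δ ^ 2 / 2 * A₂⁻¹ * (A₂ / Df t)) t := by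
    intro t ht
    have h1 : HasDerivAt Df A₂ t := by
      rw [hDdef]
      have h2 := ((hasDerivAt_id t).sub_const T).const_mul A₂
      rw [mul_one] at h2
      exact h2.const_add (φ T)
    have h3 : HasDerivAt (fun s => Real.log (Df s)) (A₂ / Df t) t := by
      exact h1.log (ne_of_gt (hDpos t ht))
    exact (hfpθ t ht).add (h3.const_mul (δ ^ 2 / 2 * A₂⁻¹))
  have hωmono : AntitoneOn ω (Set.Ici T) := by
    apply antitoneOn_of_deriv_nonpos (convex_Ici T)
    · intro s hs
      exact (hωd s hs).continuousAt.continuousWithinAt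
    · intro s hs
      rw [interior_Ici] at hs
      exact (hωd s (le_of_lt hs)).differentiableAt.differentiableWithinAt
    · intro s hs
      rw [interior_Ici] at hs
      have hsT : T ≤ s := le_of_lt hs
      rw [(hωd s hsT).deriv]
      have h1 := hFb s hsT
      have h2 : δ ^ 2 / 2 * A₂⁻¹ * (A₂ / Df s) = δ ^ 2 / 2 * (Df s)⁻¹ := by
        field_simp [ne_of_gt hA₂]
      have h3 : δ ^ 2 / 2 * (Df s)⁻¹ ≤ δ ^ 2 / 2 * ‖z s‖ ^ k :=
        mul_le_mul_of_nonneg_left (hrk_low s hsT) (by positivity)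
      rw [h2]
      linarith
  -- lower bound for fp ∘ θ
  have hfp_lb : ∀ t, T ≤ t → -(|c| * ‖M‖) ≤ fp (θ t) := by
    intro t ht
    have h1 := abs_fp_le hsm (θ t)
    rw [hθunit t (hzneT t ht), one_pow, mul_one] at h1
    have h2 := neg_abs_le (fp (θ t))
    linarith
  have hbnd : ∀ t, T ≤ t → δ ^ 2 / 2 * A₂⁻¹ * Real.log (Df t) ≤ ω T + |c| * ‖M‖ := by
    intro t ht
    have h1 := hωmono (Set.self_mem_Ici) (Set.mem_Ici.mpr ht) ht
    rw [hωdef] at h1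
    simp only at h1
    have h2 := hfp_lb t ht
    rw [hωdef]
    simp only
    linarith
  have htends : Tendsto (fun t => δ ^ 2 / 2 * A₂⁻¹ * Real.log (Df t)) atTop atTop := by
    have h1 : Tendsto Df atTop atTop := by
      rw [hDdef]
      apply tendsto_atTop_add_const_left
      have h2 : Tendsto (fun t : ℝ => t - T) atTop atTop := by
        simpa [sub_eq_add_neg] using tendsto_atTop_add_const_right atTop (-T) tendsto_id
      exact h2.const_mul_atTop hA₂
    have h3 := Real.tendsto_log_atTop.comp h1
    exact h3.const_mul_atTop (by positivity : (0:ℝ) < δ ^ 2 / 2 * A₂⁻¹)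
  obtain ⟨t, ht1, ht2⟩ :=
    ((htends.eventually_gt_atTop (ω T + |c| * ‖M‖)).and (eventually_ge_atTop T)).exists
  exact absurd (hbnd t ht2) (not_le.mpr ht1)
end

section
/- (Lemma 7.2, sign part) In the setting of Lemma 7.1 (perturbed gradient flow z′ + ∇f(z) = G with ‖G(t)‖ ≤ C‖z(t)‖^{p−ε}, z(t) → 0, z(t) ≠ 0), suppose θ(t_i) → θ* for some sequence t_i → ∞, where θ* is a critical point of f̂_p. Then f̂_p(θ*) ≥ 0. (If f̂_p(θ*) < 0, then ‖z(t)‖ would be strictly increasing for large t, contradicting z(t) → 0.) -/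
open Real Filter
open scoped RealInnerProductSpace ENNReal NNReal

set_option maxHeartbeats 2000000 in
lemma aux_taylor {E : Type*} [NormedAddCommGroup E] [NormedSpace ℝ E] [CompleteSpace E]
    (f : E → ℝ) (p : ℕ) (hp : 1 ≤ p) (hf0 : AnalyticAt ℝ f 0)
    (hlow : ∀ j < p, iteratedFDeriv ℝ j f 0 = 0) :
    ∃ ρ K : ℝ, 0 < ρ ∧ ρ ≤ 1 ∧ 0 ≤ K ∧ ∀ y : E, ‖y‖ ≤ ρ →
      |f y - (p.factorial : ℝ)⁻¹ * iteratedFDeriv ℝ p f 0 (fun _ => y)| ≤ K * ‖y‖ ^ (p + 1) ∧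
      |fderiv ℝ f y y - p * f y| ≤ K * ‖y‖ ^ (p + 1) := by
  obtain ⟨ps, hpsAt⟩ := hf0
  obtain ⟨r, hball⟩ := hpsAt
  obtain ⟨ρ', hρ'0, hρ'r⟩ := ENNReal.lt_iff_exists_nnreal_btwn.mp hball.r_pos
  set ρ : NNReal := min ρ' 1 with hρdef
  have hρ0 : 0 < ρ := lt_min (ENNReal.coe_pos.mp hρ'0) one_pos
  have hρ0' : (0:ℝ) < (ρ:ℝ) := hρ0
  have hρ1 : (ρ:ℝ) ≤ 1 := by exact_mod_cast min_le_right ρ' 1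
  have hρr : (ρ : ℝ≥0∞) < r :=
    lt_of_le_of_lt (ENNReal.coe_le_coe.mpr (min_le_left _ _)) hρ'r
  have S0 : Summable fun n => ‖ps n‖ * (ρ:ℝ) ^ n :=
    ps.summable_norm_mul_pow (hρr.trans_le hball.r_le)
  have S1 : Summable fun n => ‖ps.derivSeries n‖ * (ρ:ℝ) ^ n :=
    ps.derivSeries.summable_norm_mul_pow (hρr.trans_le hball.fderiv.r_le)
  have S0s : Summable fun n => ‖ps (n+1)‖ * (ρ:ℝ) ^ (n+1) :=
    (summable_nat_add_iff 1).mpr S0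
  have hdiag : ∀ (n : ℕ) (y : E),
      (n.factorial : ℝ) * ps n (fun _ => y) = iteratedFDeriv ℝ n f 0 (fun _ => y) := by
    intro n y
    have h1 := hball.factorial_smul y n
    rwa [nsmul_eq_mul] at h1
  have ha0 : ∀ n < p, ∀ y : E, ps n (fun _ => y) = 0 := by
    intro n hn y
    have h1 := hdiag n y
    rw [hlow n hn] at h1
    simp only [ContinuousMultilinearMap.zero_apply] at h1
    have := mul_eq_zero.mp h1
    rcases this with h | h
    · exact absurd h (by exact_mod_cast n.factorial_ne_zero)
    · exact h
  have hap : ∀ y : E,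
      ps p (fun _ => y) = (p.factorial : ℝ)⁻¹ * iteratedFDeriv ℝ p f 0 (fun _ => y) := by
    intro y
    rw [← hdiag p y, inv_mul_cancel_left₀ (by exact_mod_cast p.factorial_ne_zero)]
  have hmem : ∀ y : E, ‖y‖ ≤ (ρ:ℝ) → y ∈ Metric.eball (0 : E) r := by
    intro y hy
    rw [EMetric.mem_ball, edist_zero_right]
    refine lt_of_le_of_lt ?_ hρr
    exact_mod_cast hy
  have hsum : ∀ y : E, ‖y‖ ≤ (ρ:ℝ) → HasSum (fun n => ps n (fun _ => y)) (f y) := by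
    intro y hy
    simpa using hball.hasSum (hmem y hy)
  have hsum' : ∀ y : E, ‖y‖ ≤ (ρ:ℝ) →
      HasSum (fun n => ps.derivSeries n (fun _ => y) y) (fderiv ℝ f y y) := by
    intro y hy
    have h1 := hball.fderiv.hasSum (hmem y hy)
    have h2 := (ContinuousLinearMap.apply ℝ ℝ y).hasSum h1
    simpa using h2
  have hdiag' : ∀ (n : ℕ) (y : E),
      ps.derivSeries n (fun _ => y) y = ((n:ℝ) + 1) * ps (n+1) (fun _ => y) := by
    intro n y
    rw [ps.derivSeries_apply_diag n y, nsmul_eq_mul]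
    push_cast; ring

  set e₁ : ℕ → ℝ := fun n => if n ≤ p then 0 else (‖ps n‖ * (ρ:ℝ) ^ n) * ((ρ:ℝ) ^ (p+1))⁻¹
    with he₁
  set e₂ : ℕ → ℝ := fun n => if n < p then 0 else
      (‖ps.derivSeries n‖ * (ρ:ℝ) ^ n) * ((ρ:ℝ) ^ p)⁻¹ +
        ((p:ℝ) * ((ρ:ℝ) ^ (p+1))⁻¹) * (‖ps (n+1)‖ * (ρ:ℝ) ^ (n+1)) with he₂
  have he₁nn : ∀ n, 0 ≤ e₁ n := by
    intro n; rw [he₁]; dsimp only; split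
    · exact le_refl 0
    · positivity
  have he₂nn : ∀ n, 0 ≤ e₂ n := by
    intro n; rw [he₂]; dsimp only; split
    · exact le_refl 0
    · positivity
  have hS₁ : Summable e₁ := by
    refine Summable.of_nonneg_of_le he₁nn (fun n => ?_) (S0.mul_right (((ρ:ℝ) ^ (p+1))⁻¹))
    rw [he₁]; dsimp only; split
    · positivity
    · exact le_refl _
  have hS₂ : Summable e₂ := by
    refine Summable.of_nonneg_of_le he₂nn (fun n => ?_)
      ((S1.mul_right (((ρ:ℝ) ^ p)⁻¹)).add
        (S0s.mul_left ((p:ℝ) * ((ρ:ℝ) ^ (p+1))⁻¹)))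
    rw [he₂]; dsimp only; split
    · positivity
    · exact le_refl _
  refine ⟨(ρ:ℝ), (∑' n, e₁ n) + (∑' n, e₂ n), hρ0', hρ1,
    add_nonneg (tsum_nonneg he₁nn) (tsum_nonneg he₂nn), ?_⟩
  intro y hy
  have hynn : (0:ℝ) ≤ ‖y‖ := norm_nonneg y
  have happly : ∀ n, ‖ps n (fun _ => y)‖ ≤ ‖ps n‖ * ‖y‖ ^ n := by
    intro n
    have := (ps n).le_opNorm (fun _ => y)
    simpa [Finset.prod_const] using this
  have hypow : ∀ n, p + 1 ≤ n → ‖y‖ ^ n ≤ (ρ:ℝ) ^ (n - (p+1)) * ‖y‖ ^ (p+1) := by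
    intro n hn
    calc ‖y‖ ^ n = ‖y‖ ^ (n - (p+1)) * ‖y‖ ^ (p+1) := by
          rw [← pow_add, Nat.sub_add_cancel hn]
      _ ≤ (ρ:ℝ) ^ (n - (p+1)) * ‖y‖ ^ (p+1) := by gcongr
  have hpowsub : ∀ m n : ℕ, m ≤ n → (ρ:ℝ) ^ (n - m) = (ρ:ℝ) ^ n * ((ρ:ℝ) ^ m)⁻¹ := by
    intro m n h
    rw [pow_sub₀ _ (ne_of_gt hρ0') h]
  have h1 : |f y - (p.factorial:ℝ)⁻¹ * iteratedFDeriv ℝ p f 0 (fun _ => y)|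
      ≤ (∑' n, e₁ n) * ‖y‖ ^ (p+1) := by
    rw [← hap y]
    set c : ℕ → ℝ := fun n => ps n (fun _ => y) - (if n = p then ps p (fun _ => y) else 0)
      with hc
    have hcs : HasSum c (f y - ps p (fun _ => y)) := (hsum y hy).sub (hasSum_ite_eq p _)
    have hbd : ∀ n, ‖c n‖ ≤ e₁ n * ‖y‖ ^ (p+1) := by
      intro n
      rcases lt_trichotomy n p with h | h | h
      · have hz : c n = 0 := by simp [hc, ha0 n h y, h.ne]
        rw [hz, norm_zero]
        exact mul_nonneg (he₁nn n) (by positivity)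
      · subst h
        have hz : c n = 0 := by simp [hc]
        rw [hz, norm_zero]
        exact mul_nonneg (he₁nn n) (by positivity)
      · have hcn : c n = ps n (fun _ => y) := by simp [hc, h.ne']
        have he : e₁ n = (‖ps n‖ * (ρ:ℝ) ^ n) * ((ρ:ℝ) ^ (p+1))⁻¹ := by
          rw [he₁]; dsimp only; rw [if_neg (not_le.mpr h)]
        rw [hcn, he]
        calc ‖ps n (fun _ => y)‖ ≤ ‖ps n‖ * ‖y‖ ^ n := happly n
          _ ≤ ‖ps n‖ * ((ρ:ℝ) ^ (n - (p+1)) * ‖y‖ ^ (p+1)) := by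
              gcongr; exact hypow n h
          _ = ‖ps n‖ * (ρ:ℝ) ^ n * ((ρ:ℝ) ^ (p+1))⁻¹ * ‖y‖ ^ (p+1) := by
              rw [hpowsub (p+1) n h]; ring
    have hsummable : Summable fun n => ‖c n‖ :=
      Summable.of_nonneg_of_le (fun n => norm_nonneg _) hbd (hS₁.mul_right _)
    have habs : |f y - ps p (fun _ => y)| = ‖∑' n, c n‖ := by
      rw [hcs.tsum_eq]; rfl
    rw [habs]
    calc ‖∑' n, c n‖ ≤ ∑' n, ‖c n‖ := norm_tsum_le_tsum_norm hsummable
      _ ≤ ∑' n, e₁ n * ‖y‖ ^ (p+1) := Summable.tsum_le_tsum hbd hsummable (hS₁.mul_right _)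
      _ = (∑' n, e₁ n) * ‖y‖ ^ (p+1) := by rw [tsum_mul_right]
  have h2 : |fderiv ℝ f y y - p * f y| ≤ (∑' n, e₂ n) * ‖y‖ ^ (p+1) := by
    have hshift : HasSum (fun n => (p:ℝ) * ps (n+1) (fun _ => y)) ((p:ℝ) * f y) := by
      have hbase : HasSum (fun n => (p:ℝ) * ps n (fun _ => y)) ((p:ℝ) * f y) :=
        (hsum y hy).mul_left _
      refine (hasSum_nat_add_iff (f := fun n => (p:ℝ) * ps n (fun _ => y)) 1).mpr ?_
      simpa [Finset.sum_range_one, ha0 0 hp y] using hbase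
    set c : ℕ → ℝ := fun n => ps.derivSeries n (fun _ => y) y - (p:ℝ) * ps (n+1) (fun _ => y)
      with hc
    have hcs : HasSum c (fderiv ℝ f y y - (p:ℝ) * f y) := (hsum' y hy).sub hshift
    have happly' : ∀ n, ‖ps.derivSeries n (fun _ => y) y‖ ≤ ‖ps.derivSeries n‖ * ‖y‖ ^ (n+1) := by
      intro n
      calc ‖ps.derivSeries n (fun _ => y) y‖
          ≤ ‖ps.derivSeries n (fun _ => y)‖ * ‖y‖ := ContinuousLinearMap.le_opNorm _ _
        _ ≤ (‖ps.derivSeries n‖ * ‖y‖ ^ n) * ‖y‖ := by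
            gcongr
            simpa [Finset.prod_const] using (ps.derivSeries n).le_opNorm (fun _ => y)
        _ = ‖ps.derivSeries n‖ * ‖y‖ ^ (n+1) := by ring
    have hbd : ∀ n, ‖c n‖ ≤ e₂ n * ‖y‖ ^ (p+1) := by
      intro n
      rcases lt_or_ge n p with h | h
      · have hz : c n = 0 := by
          have hron : c n = ((n:ℝ) + 1 - (p:ℝ)) * ps (n+1) (fun _ => y) := by
            rw [hc]; dsimp only; rw [hdiag' n y]; ring
          rcases lt_or_eq_of_le (Nat.succ_le_of_lt h) with h' | h'
          · rw [hron, ha0 (n+1) h' y, mul_zero]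
          · rw [hron, ← h']
            push_cast
            ring
        rw [hz, norm_zero]
        exact mul_nonneg (he₂nn n) (by positivity)
      · have he : e₂ n = (‖ps.derivSeries n‖ * (ρ:ℝ) ^ n) * ((ρ:ℝ) ^ p)⁻¹ +
            ((p:ℝ) * ((ρ:ℝ) ^ (p+1))⁻¹) * (‖ps (n+1)‖ * (ρ:ℝ) ^ (n+1)) := by
          rw [he₂]; dsimp only; rw [if_neg (not_lt.mpr h)]
        have hb1 : ‖c n‖ ≤ (‖ps.derivSeries n‖ + (p:ℝ) * ‖ps (n+1)‖) * ‖y‖ ^ (n+1) := by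
          rw [hc]; dsimp only
          calc ‖ps.derivSeries n (fun _ => y) y - (p:ℝ) * ps (n+1) (fun _ => y)‖
              ≤ ‖ps.derivSeries n (fun _ => y) y‖ + ‖(p:ℝ) * ps (n+1) (fun _ => y)‖ :=
                norm_sub_le _ _
            _ ≤ ‖ps.derivSeries n‖ * ‖y‖ ^ (n+1) + (p:ℝ) * (‖ps (n+1)‖ * ‖y‖ ^ (n+1)) := by
                refine add_le_add (happly' n) ?_
                rw [norm_mul, Real.norm_natCast]
                exact mul_le_mul_of_nonneg_left (happly (n+1)) (by positivity)
            _ = (‖ps.derivSeries n‖ + (p:ℝ) * ‖ps (n+1)‖) * ‖y‖ ^ (n+1) := by ring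
        have hyb : ‖y‖ ^ (n+1) ≤ (ρ:ℝ) ^ (n+1) * ((ρ:ℝ) ^ (p+1))⁻¹ * ‖y‖ ^ (p+1) := by
          have := hypow (n+1) (by omega)
          rwa [hpowsub (p+1) (n+1) (by omega)] at this
        calc ‖c n‖ ≤ (‖ps.derivSeries n‖ + (p:ℝ) * ‖ps (n+1)‖) * ‖y‖ ^ (n+1) := hb1
          _ ≤ (‖ps.derivSeries n‖ + (p:ℝ) * ‖ps (n+1)‖) *
              ((ρ:ℝ) ^ (n+1) * ((ρ:ℝ) ^ (p+1))⁻¹ * ‖y‖ ^ (p+1)) := by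
              refine mul_le_mul_of_nonneg_left hyb (by positivity)
          _ = e₂ n * ‖y‖ ^ (p+1) := by
              rw [he]
              have hρne : (ρ:ℝ) ≠ 0 := ne_of_gt hρ0'
              field_simp
              ring
    have hsummable : Summable fun n => ‖c n‖ :=
      Summable.of_nonneg_of_le (fun n => norm_nonneg _) hbd (hS₂.mul_right _)
    have habs : |fderiv ℝ f y y - (p:ℝ) * f y| = ‖∑' n, c n‖ := by
      rw [hcs.tsum_eq]; rfl
    rw [habs]
    calc ‖∑' n, c n‖ ≤ ∑' n, ‖c n‖ := norm_tsum_le_tsum_norm hsummable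
      _ ≤ ∑' n, e₂ n * ‖y‖ ^ (p+1) := Summable.tsum_le_tsum hbd hsummable (hS₂.mul_right _)
      _ = (∑' n, e₂ n) * ‖y‖ ^ (p+1) := by rw [tsum_mul_right]
  constructor
  · refine h1.trans ?_
    have h9 : (0:ℝ) ≤ (∑' n, e₂ n) * ‖y‖ ^ (p+1) :=
      mul_nonneg (tsum_nonneg he₂nn) (by positivity)
    linarith
  · refine h2.trans ?_
    have h9 : (0:ℝ) ≤ (∑' n, e₁ n) * ‖y‖ ^ (p+1) :=
      mul_nonneg (tsum_nonneg he₁nn) (by positivity)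
    linarith

lemma decomp_aux {E : Type*} [NormedAddCommGroup E] [InnerProductSpace ℝ E]
    (V zt Gt : E) (R : ℝ) (hR : ‖zt‖ = R) (hR0 : 0 < R) :
    ∃ a b : ℝ, 0 ≤ b ∧ a ≤ b * ‖Gt‖ ∧
      (inner ℝ V Gt : ℝ) = a + ((inner ℝ V zt : ℝ)/R^2) * (inner ℝ zt Gt : ℝ) ∧
      ‖V‖^2 = b^2 + (inner ℝ V zt : ℝ)^2/R^2 := by
  have hRne : R ≠ 0 := hR0.ne'
  set D : ℝ := inner ℝ V zt with hD
  set w₀ : E := V - (D / R^2) • zt with hw₀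
  have hVdec : V = w₀ + (D / R^2) • zt := by rw [hw₀]; abel
  have hzz : (inner ℝ zt zt : ℝ) = R^2 := by
    rw [real_inner_self_eq_norm_sq, hR]
  have fact1 : (inner ℝ w₀ zt : ℝ) = 0 := by
    rw [hw₀, inner_sub_left, real_inner_smul_left, hzz, ← hD]
    field_simp
    ring
  refine ⟨inner ℝ w₀ Gt, ‖w₀‖, norm_nonneg _, real_inner_le_norm _ _, ?_, ?_⟩
  · conv_lhs => rw [hVdec]
    rw [inner_add_left, real_inner_smul_left]
  · conv_lhs => rw [hVdec]
    rw [norm_add_sq_real, real_inner_smul_right, fact1, mul_zero, mul_zero, add_zero,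
      norm_smul, Real.norm_eq_abs, mul_pow, sq_abs, hR]
    field_simp

set_option maxHeartbeats 4000000 in
/-- Lemma 7.2, sign part: in the perturbed-gradient-flow setting,
if the secant `θ(t) = z(t)/‖z(t)‖` subconverges along `t_i → ∞` to a critical
point `θ*` of the sphere restriction of the lowest-order homogeneous part
`f_p`, then `f_p(θ*) ≥ 0`. -/
theorem limit_critical_value_nonneg
    (J p : ℕ) (hp : 3 ≤ p)
    (f fp : EuclideanSpace ℝ (Fin J) → ℝ)
    (hf : ∀ x, AnalyticAt ℝ f x)
    (hfp : fp = fun z => (p.factorial : ℝ)⁻¹ *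
      iteratedFDeriv ℝ p f 0 (fun _ => z))
    (hlow : ∀ j < p, iteratedFDeriv ℝ j f 0 = 0)
    (hfp_ne : fp ≠ 0)
    (z G : ℝ → EuclideanSpace ℝ (Fin J))
    (C ε : ℝ) (hε : 0 < ε) (hε' : ε < 1 / 2)
    (hODE : ∀ t : ℝ, 0 ≤ t → HasDerivAt z (G t - gradient f (z t)) t)
    (hG : ∀ t : ℝ, 0 ≤ t → ‖G t‖ ≤ C * ‖z t‖ ^ ((p : ℝ) - ε))
    (hzne : ∀ t : ℝ, 0 ≤ t → z t ≠ 0)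
    (hz0 : Tendsto z atTop (nhds 0))
    (θstar : EuclideanSpace ℝ (Fin J)) (hθstar : ‖θstar‖ = 1)
    (hcrit : gradient fp θstar - ⟪gradient fp θstar, θstar⟫ • θstar = 0)
    (tseq : ℕ → ℝ) (htseq_nonneg : ∀ n, 0 ≤ tseq n)
    (htseq : Tendsto tseq atTop atTop)
    (hconv : Tendsto (fun n => ‖z (tseq n)‖⁻¹ • z (tseq n)) atTop (nhds θstar)) :
    0 ≤ fp θstar := by
  by_contra hneg
  push_neg at hneg
  obtain ⟨m, rfl⟩ : ∃ m : ℕ, p = m + 3 := ⟨p - 3, by omega⟩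
  set c : ℝ := -fp θstar with hcdef
  have hc0 : 0 < c := by simp only [hcdef]; linarith
  have hε1 : (0:ℝ) < 1 - ε := by linarith
  have hpR : (0:ℝ) < ((m+3:ℕ):ℝ) := by positivity
  -- Taylor estimates
  obtain ⟨ρ, K, hρ0, hρ1, hK0, hEst⟩ := aux_taylor f (m+3) (by omega) (hf 0) hlow
  have hEst1 : ∀ y : EuclideanSpace ℝ (Fin J), ‖y‖ ≤ ρ →
      |f y - fp y| ≤ K * ‖y‖ ^ (m+4) := fun y hy => by
    have h1 := (hEst y hy).1
    rw [hfp]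
    exact h1
  have hEst2 : ∀ y : EuclideanSpace ℝ (Fin J), ‖y‖ ≤ ρ →
      |fderiv ℝ f y y - ((m+3:ℕ):ℝ) * f y| ≤ K * ‖y‖ ^ (m+4) :=
    fun y hy => (hEst y hy).2
  set Λ : ℝ := ((m+3).factorial : ℝ)⁻¹ * ‖iteratedFDeriv ℝ (m+3) f 0‖ with hΛdef
  have hΛ0 : 0 ≤ Λ := by positivity
  have hfp_bound : ∀ y : EuclideanSpace ℝ (Fin J), |fp y| ≤ Λ * ‖y‖ ^ (m+3) := by
    intro y
    rw [hfp]
    simp only [abs_mul, abs_inv, Nat.abs_cast, hΛdef]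
    rw [mul_assoc]
    refine mul_le_mul_of_nonneg_left ?_ (by positivity)
    have h1 := (iteratedFDeriv ℝ (m+3) f 0).le_opNorm (fun _ => y)
    have h2 : |(iteratedFDeriv ℝ (m+3) f 0) (fun _ => y)|
        = ‖(iteratedFDeriv ℝ (m+3) f 0) (fun _ => y)‖ := rfl
    rw [h2]
    simpa [Finset.prod_const] using h1
  have hfp_hom : ∀ (a : ℝ) (y : EuclideanSpace ℝ (Fin J)), fp (a • y) = a ^ (m+3) * fp y := by
    intro a y
    rw [hfp]
    simp only
    have h0 : (fun _ : Fin (m+3) => a • y)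
        = (fun i : Fin (m+3) => (fun _ : Fin (m+3) => a) i • (fun _ : Fin (m+3) => y) i) := rfl
    rw [h0, ContinuousMultilinearMap.map_smul_univ]
    simp only [Finset.prod_const, Finset.card_univ, Fintype.card_fin, smul_eq_mul]
    ring
  have hfp_cont : Continuous fp := by
    rw [hfp]
    exact continuous_const.mul
      ((iteratedFDeriv ℝ (m+3) f 0).cont.comp (continuous_pi fun _ => continuous_id))
  have hgrad : ∀ x v : EuclideanSpace ℝ (Fin J), ⟪gradient f x, v⟫ = fderiv ℝ f x v := by
    intro x v
    exact InnerProductSpace.toDual_symm_apply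
  set C' : ℝ := max C 0 with hC'def
  have hC'0 : 0 ≤ C' := le_max_right _ _
  set M₁ : ℝ := Λ + K with hM₁def
  have hM₁0 : 0 ≤ M₁ := by positivity
  set B : ℝ := C'^2/4 + K*C' + (((m+3:ℕ):ℝ)*M₁ + K)*K + 1 with hBdef
  have hB0 : 0 < B := by positivity
  set lam : ℝ := 4*B/(((m+3:ℕ):ℝ)*c*(1-ε)) with hlamdef
  have hlam0 : 0 < lam := by positivity
  have hlamB : lam * (1-ε) * (((m+3:ℕ):ℝ)*c/4) = B := by
    have h1 : ((m+3:ℕ):ℝ)*c*(1-ε) ≠ 0 := by positivity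
    rw [hlamdef]
    field_simp
  -- choice of δ
  obtain ⟨δ, hδ0, hδρ, hδ1, hδcond1, hδcond2⟩ :
      ∃ δ : ℝ, 0 < δ ∧ δ ≤ ρ ∧ δ ≤ 1 ∧
        K*δ + C'*δ^(1-ε) ≤ ((m+3:ℕ):ℝ)*c/4 ∧ lam * δ^(1-ε) ≤ c/8 := by
    have h1 : ContinuousAt (fun d : ℝ => d^(1-ε)) 0 :=
      Real.continuousAt_rpow_const 0 (1-ε) (Or.inr hε1.le)
    have hcont : ContinuousAt (fun d : ℝ => K*d + C'*d^(1-ε) + lam*d^(1-ε)) 0 := by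
      exact ((continuousAt_id.const_mul K).add (h1.const_mul C')).add (h1.const_mul lam)
    have hval : K*(0:ℝ) + C'*(0:ℝ)^(1-ε) + lam*(0:ℝ)^(1-ε) = 0 := by
      rw [Real.zero_rpow (ne_of_gt hε1)]
      ring
    set mm : ℝ := min (((m+3:ℕ):ℝ)*c/4) (c/8) with hmm_def
    have hmm : 0 < mm := lt_min (by positivity) (by positivity)
    have hev : ∀ᶠ d in nhds (0:ℝ), K*d + C'*d^(1-ε) + lam*d^(1-ε) < mm := by
      have h2 := hcont.tendsto
      rw [hval] at h2
      exact h2.eventually_lt_const hmm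
    obtain ⟨η, hη0, hη⟩ := Metric.eventually_nhds_iff.mp hev
    set δ : ℝ := min (min ρ 1) (η/2) with hδdef
    have hδ0 : 0 < δ := lt_min (lt_min hρ0 one_pos) (half_pos hη0)
    have hδη : dist δ 0 < η := by
      rw [Real.dist_eq, sub_zero, abs_of_pos hδ0]
      calc δ ≤ η/2 := min_le_right _ _
        _ < η := by linarith
    have hbig := hη hδη
    have hd1 : 0 ≤ lam * δ^(1-ε) := by positivity
    have hd2 : 0 ≤ K*δ + C'*δ^(1-ε) := by positivity
    refine ⟨δ, hδ0, (min_le_left _ _).trans (min_le_left _ _),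
      (min_le_left _ _).trans (min_le_right _ _), ?_, ?_⟩
    · have := min_le_left (((m+3:ℕ):ℝ)*c/4) (c/8)
      linarith
    · have := min_le_right (((m+3:ℕ):ℝ)*c/4) (c/8)
      linarith
  -- choice of T₀
  obtain ⟨T₀, hT₀0, hT₀⟩ : ∃ T₀ : ℝ, 0 ≤ T₀ ∧ ∀ t, T₀ ≤ t → ‖z t‖ ≤ δ := by
    have h1 : ∀ᶠ t in atTop, ‖z t‖ < δ := by
      have h2 := hz0.eventually (Metric.ball_mem_nhds (0 : EuclideanSpace ℝ (Fin J)) hδ0)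
      filter_upwards [h2] with t ht
      simpa [dist_eq_norm] using ht
    obtain ⟨T₁, hT₁⟩ := (eventually_atTop).mp h1
    exact ⟨max T₁ 0, le_max_right _ _,
      fun t ht => (hT₁ t ((le_max_left _ _).trans ht)).le⟩
  have hrpos : ∀ t : ℝ, 0 ≤ t → 0 < ‖z t‖ := fun t ht => norm_pos_iff.mpr (hzne t ht)
  -- derivative data
  set qq : ℝ → ℝ := fun t => f (z t) / ‖z t‖ ^ (m+3) with hqq
  set DD : ℝ → ℝ := fun t => fderiv ℝ f (z t) (z t) with hDD
  set hd : ℝ → ℝ := fun t => ⟪gradient f (z t), G t⟫ - ‖gradient f (z t)‖^2 with hhd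
  set rd : ℝ → ℝ := fun t => (⟪z t, G t⟫ - DD t) / ‖z t‖ with hrd
  set qd : ℝ → ℝ := fun t =>
    (hd t * ‖z t‖^(m+3) - f (z t) * (((m+3:ℕ):ℝ) * ‖z t‖^(m+3-1) * rd t)) / (‖z t‖^(m+3))^2
    with hqd
  have key_r : ∀ t, 0 ≤ t → HasDerivAt (fun s => ‖z s‖) (rd t) t := by
    intro t ht
    have hz' := hODE t ht
    have hu : HasDerivAt (fun s => ⟪z s, z s⟫)
        (⟪z t, G t - gradient f (z t)⟫ + ⟪G t - gradient f (z t), z t⟫) t :=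
      HasDerivAt.inner (𝕜 := ℝ) hz' hz'
    have hune : ⟪z t, z t⟫ ≠ 0 := by
      rw [real_inner_self_eq_norm_sq]
      exact pow_ne_zero 2 (hrpos t ht).ne'
    have hs := hu.sqrt hune
    have hfun : (fun s => Real.sqrt ⟪z s, z s⟫) = (fun s => ‖z s‖) := by
      funext s
      rw [real_inner_self_eq_norm_sq, Real.sqrt_sq (norm_nonneg _)]
    rw [hfun] at hs
    convert hs using 1
    rw [hrd]
    simp only
    rw [real_inner_self_eq_norm_sq, Real.sqrt_sq (norm_nonneg _)]
    have h1 : ⟪G t - gradient f (z t), z t⟫ = ⟪z t, G t - gradient f (z t)⟫ :=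
      real_inner_comm _ _
    have h2 : ⟪z t, G t - gradient f (z t)⟫ = ⟪z t, G t⟫ - DD t := by
      rw [inner_sub_right, hDD]
      simp only
      rw [← hgrad (z t) (z t)]
      rw [real_inner_comm (z t) (gradient f (z t))]
    rw [h1, h2]
    have hr0 := hrpos t ht
    field_simp
    ring
  have key_h : ∀ t, 0 ≤ t → HasDerivAt (fun s => f (z s)) (hd t) t := by
    intro t ht
    have h1 := ((hf (z t)).differentiableAt.hasFDerivAt).comp_hasDerivAt t (hODE t ht)
    refine h1.congr_deriv ?_
    rw [hhd]
    simp only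
    rw [← hgrad (z t) (G t - gradient f (z t)), inner_sub_right, real_inner_self_eq_norm_sq]
  have key_q : ∀ t, 0 ≤ t → HasDerivAt qq (qd t) t := by
    intro t ht
    exact (key_h t ht).div ((key_r t ht).pow (m+3)) (pow_ne_zero _ (hrpos t ht).ne')
  -- bound on the perturbation
  have hGbd : ∀ t, T₀ ≤ t → ‖G t‖ ≤ C' * (‖z t‖^(m+2) * ‖z t‖^(1-ε)) := by
    intro t htT
    have ht0 : (0:ℝ) ≤ t := hT₀0.trans htT
    have hr0 : 0 < ‖z t‖ := hrpos t ht0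
    have h2 : ‖z t‖ ^ (((m+3:ℕ):ℝ) - ε) = ‖z t‖^(m+2) * ‖z t‖^(1-ε) := by
      have h3 : (((m+3:ℕ):ℝ) - ε) = ((m+2 : ℕ) : ℝ) + (1 - ε) := by
        push_cast
        ring
      rw [h3, Real.rpow_add hr0, Real.rpow_natCast]
    calc ‖G t‖ ≤ C * ‖z t‖ ^ (((m+3:ℕ):ℝ) - ε) := hG t ht0
      _ ≤ C' * ‖z t‖ ^ (((m+3:ℕ):ℝ) - ε) := by
          refine mul_le_mul_of_nonneg_right (le_max_left _ _) ?_
          positivity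
      _ = C' * (‖z t‖^(m+2) * ‖z t‖^(1-ε)) := by rw [h2]
  -- region estimate for the radial derivative
  have est_r : ∀ t, T₀ ≤ t → qq t ≤ -c/2 → ((m+3:ℕ):ℝ)*c/4 * ‖z t‖^(m+2) ≤ rd t := by
    intro t htT hqt
    have ht0 : (0:ℝ) ≤ t := hT₀0.trans htT
    have hr0 : 0 < ‖z t‖ := hrpos t ht0
    have hrδ : ‖z t‖ ≤ δ := hT₀ t htT
    have hrρ : ‖z t‖ ≤ ρ := hrδ.trans hδρ
    have habs2 : |DD t - ((m+3:ℕ):ℝ) * f (z t)| ≤ K * ‖z t‖^(m+4) := by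
      rw [hDD]
      simpa using hEst2 (z t) hrρ
    have hDle : DD t ≤ ((m+3:ℕ):ℝ) * f (z t) + K * ‖z t‖^(m+4) := by
      linarith [(abs_le.mp habs2).2]
    have hfzle : f (z t) ≤ -c/2 * ‖z t‖^(m+3) := by
      rw [hqq] at hqt
      simp only at hqt
      calc f (z t) = f (z t) / ‖z t‖^(m+3) * ‖z t‖^(m+3) := by field_simp
        _ ≤ -c/2 * ‖z t‖^(m+3) := mul_le_mul_of_nonneg_right hqt (by positivity)
    have hZg : -(C' * δ^(1-ε)) * ‖z t‖^(m+3) ≤ ⟪z t, G t⟫ := by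
      have h1 : |⟪z t, G t⟫| ≤ ‖z t‖ * ‖G t‖ := abs_real_inner_le_norm _ _
      have h2 : ‖z t‖ * ‖G t‖ ≤ ‖z t‖ * (C' * (‖z t‖^(m+2) * ‖z t‖^(1-ε))) :=
        mul_le_mul_of_nonneg_left (hGbd t htT) (norm_nonneg _)
      have h4 : ‖z t‖^(1-ε) ≤ δ^(1-ε) :=
        Real.rpow_le_rpow (norm_nonneg _) hrδ hε1.le
      have h3 : ‖z t‖ * (C' * (‖z t‖^(m+2) * ‖z t‖^(1-ε))) ≤ C' * δ^(1-ε) * ‖z t‖^(m+3) := by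
        have h5 : ‖z t‖ * (C' * (‖z t‖^(m+2) * ‖z t‖^(1-ε)))
            = C' * ‖z t‖^(1-ε) * ‖z t‖^(m+3) := by ring
        rw [h5]
        refine mul_le_mul_of_nonneg_right ?_ (by positivity)
        exact mul_le_mul_of_nonneg_left h4 hC'0
      linarith [neg_abs_le (⟪z t, G t⟫ : ℝ)]
    have hK3 : K * ‖z t‖^(m+4) ≤ K*δ * ‖z t‖^(m+3) := by
      have h6 : K * ‖z t‖^(m+4) = K * ‖z t‖ * ‖z t‖^(m+3) := by ring
      rw [h6]
      refine mul_le_mul_of_nonneg_right ?_ (by positivity)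
      exact mul_le_mul_of_nonneg_left hrδ hK0
    have hpf : ((m+3:ℕ):ℝ) * f (z t) ≤ ((m+3:ℕ):ℝ) * (-c/2 * ‖z t‖^(m+3)) :=
      mul_le_mul_of_nonneg_left hfzle hpR.le
    have hfac : 0 ≤ (((m+3:ℕ):ℝ)*c/4 - (K*δ + C'*δ^(1-ε))) * ‖z t‖^(m+3) :=
      mul_nonneg (by linarith) (by positivity)
    have hmain : ((m+3:ℕ):ℝ)*c/4 * ‖z t‖^(m+3) ≤ ⟪z t, G t⟫ - DD t := by
      linarith [hZg, hDle, hpf, hK3, hfac]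
    rw [hrd]
    simp only
    rw [le_div_iff₀ hr0]
    calc ((m+3:ℕ):ℝ)*c/4 * ‖z t‖^(m+2) * ‖z t‖ = ((m+3:ℕ):ℝ)*c/4 * ‖z t‖^(m+3) := by ring
      _ ≤ _ := hmain
  -- region estimate for the derivative of q
  have est_q : ∀ t, T₀ ≤ t → qq t ≤ -c/2 →
      qd t ≤ lam * ((1-ε) * ‖z t‖^((1-ε)-1) * rd t) := by
    intro t htT hqt
    have ht0 : (0:ℝ) ≤ t := hT₀0.trans htT
    have hr0 : 0 < ‖z t‖ := hrpos t ht0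
    have hrδ : ‖z t‖ ≤ δ := hT₀ t htT
    have hrρ : ‖z t‖ ≤ ρ := hrδ.trans hδρ
    have hr1 : ‖z t‖ ≤ 1 := hrδ.trans hδ1
    have hrne : ‖z t‖ ≠ 0 := hr0.ne'
    obtain ⟨a, b, hb0, hab, hVG, hV2⟩ :=
      decomp_aux (gradient f (z t)) (z t) (G t) ‖z t‖ rfl hr0
    have hDinner : (inner ℝ (gradient f (z t)) (z t) : ℝ) = DD t := by
      rw [hDD]
      simp only
      rw [hgrad]
    rw [hDinner] at hVG hV2
    have habs2 : |DD t - ((m+3:ℕ):ℝ) * f (z t)| ≤ K * ‖z t‖^(m+4) := by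
      rw [hDD]
      simpa using hEst2 (z t) hrρ
    have hfz : |f (z t)| ≤ M₁ * ‖z t‖^(m+3) := by
      have h1 := hEst1 (z t) hrρ
      have h2 := hfp_bound (z t)
      have h3 : ‖z t‖^(m+4) ≤ ‖z t‖^(m+3) :=
        pow_le_pow_of_le_one (norm_nonneg _) hr1 (by omega)
      have h4 := abs_sub_abs_le_abs_sub (f (z t)) (fp (z t))
      have h5 : K * ‖z t‖^(m+4) ≤ K * ‖z t‖^(m+3) :=
        mul_le_mul_of_nonneg_left h3 hK0
      rw [hM₁def]
      have h6 : (Λ + K) * ‖z t‖ ^ (m + 3) = Λ * ‖z t‖ ^ (m + 3) + K * ‖z t‖ ^ (m + 3) := by ring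
      rw [h6]
      linarith
    have hGt := hGbd t htT
    have hZgabs : |(⟪z t, G t⟫ : ℝ)| ≤ C' * (‖z t‖^(m+3) * ‖z t‖^(1-ε)) := by
      calc |(⟪z t, G t⟫ : ℝ)| ≤ ‖z t‖ * ‖G t‖ := abs_real_inner_le_norm _ _
        _ ≤ ‖z t‖ * (C' * (‖z t‖^(m+2) * ‖z t‖^(1-ε))) :=
            mul_le_mul_of_nonneg_left hGt (norm_nonneg _)
        _ = C' * (‖z t‖^(m+3) * ‖z t‖^(1-ε)) := by ring
    -- |D| bound
    have hDabs : |DD t| ≤ (((m+3:ℕ):ℝ)*M₁ + K) * ‖z t‖^(m+3) := by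
      have h1 : |DD t| ≤ |DD t - ((m+3:ℕ):ℝ) * f (z t)| + ((m+3:ℕ):ℝ) * |f (z t)| := by
        have h2 := abs_add_le (DD t - ((m+3:ℕ):ℝ) * f (z t)) (((m+3:ℕ):ℝ) * f (z t))
        rw [sub_add_cancel] at h2
        rw [abs_mul, Nat.abs_cast] at h2
        exact h2
      have h3 : ‖z t‖^(m+4) ≤ ‖z t‖^(m+3) :=
        pow_le_pow_of_le_one (norm_nonneg _) hr1 (by omega)
      have h5 : ((m+3:ℕ):ℝ) * |f (z t)| ≤ ((m+3:ℕ):ℝ) * (M₁ * ‖z t‖^(m+3)) :=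
        mul_le_mul_of_nonneg_left hfz hpR.le
      have h6 : K * ‖z t‖^(m+4) ≤ K * ‖z t‖^(m+3) :=
        mul_le_mul_of_nonneg_left h3 hK0
      have h7 : (((m+3:ℕ):ℝ)*M₁ + K) * ‖z t‖^(m+3)
          = ((m+3:ℕ):ℝ) * (M₁ * ‖z t‖^(m+3)) + K * ‖z t‖^(m+3) := by ring
      rw [h7]
      linarith
    -- rpow facts
    have hw0 : 0 < ‖z t‖^(1-ε) := Real.rpow_pos_of_pos hr0 _
    have hw1 : ‖z t‖^(1-ε) ≤ 1 := Real.rpow_le_one (norm_nonneg _) hr1 hε1.le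
    have hRle : ‖z t‖ ≤ ‖z t‖^(1-ε) := by
      calc ‖z t‖ = ‖z t‖^(1:ℝ) := (Real.rpow_one _).symm
        _ ≤ ‖z t‖^(1-ε) := Real.rpow_le_rpow_of_exponent_ge hr0 hr1 (by linarith)
    -- numerator identity
    set N : ℝ := ‖z t‖^2 * (a - b^2)
        + (DD t - ((m+3:ℕ):ℝ) * f (z t)) * (⟪z t, G t⟫ : ℝ)
        - DD t * (DD t - ((m+3:ℕ):ℝ) * f (z t)) with hN
    have hqd_eq : qd t = N / ‖z t‖^(m+5) := by
      rw [hqd, hrd, hhd, hN]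
      simp only
      rw [hVG, hV2]
      rw [show m+3-1 = m+2 from rfl]
      field_simp
      ring
    -- three bounds
    have hbound1 : ‖z t‖^2 * (a - b^2)
        ≤ C'^2/4 * (‖z t‖^(2*m+6) * ‖z t‖^(1-ε)) := by
      have h1 : a ≤ b * (C' * (‖z t‖^(m+2) * ‖z t‖^(1-ε))) :=
        hab.trans (mul_le_mul_of_nonneg_left hGt hb0)
      have h2 : a - b^2 ≤ C'^2/4 * (‖z t‖^(m+2) * ‖z t‖^(1-ε))^2 := by
        have hsq := sq_nonneg (b - C' * (‖z t‖^(m+2) * ‖z t‖^(1-ε)) / 2)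
        linarith [h1, hsq]
      have h3 : ‖z t‖^2 * (a - b^2)
          ≤ ‖z t‖^2 * (C'^2/4 * (‖z t‖^(m+2) * ‖z t‖^(1-ε))^2) :=
        mul_le_mul_of_nonneg_left h2 (by positivity)
      have h4 : ‖z t‖^2 * (C'^2/4 * (‖z t‖^(m+2) * ‖z t‖^(1-ε))^2)
          = C'^2/4 * (‖z t‖^(2*m+6) * (‖z t‖^(1-ε) * ‖z t‖^(1-ε))) := by ring
      have h5 : C'^2/4 * (‖z t‖^(2*m+6) * (‖z t‖^(1-ε) * ‖z t‖^(1-ε)))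
          ≤ C'^2/4 * (‖z t‖^(2*m+6) * (‖z t‖^(1-ε) * 1)) := by
        gcongr
      calc ‖z t‖^2 * (a - b^2) ≤ _ := h3
        _ = _ := h4
        _ ≤ C'^2/4 * (‖z t‖^(2*m+6) * (‖z t‖^(1-ε) * 1)) := h5
        _ = C'^2/4 * (‖z t‖^(2*m+6) * ‖z t‖^(1-ε)) := by ring
    have hbound2 : (DD t - ((m+3:ℕ):ℝ) * f (z t)) * (⟪z t, G t⟫ : ℝ)
        ≤ K*C' * (‖z t‖^(2*m+6) * ‖z t‖^(1-ε)) := by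
      have h1 : (DD t - ((m+3:ℕ):ℝ) * f (z t)) * (⟪z t, G t⟫ : ℝ)
          ≤ |DD t - ((m+3:ℕ):ℝ) * f (z t)| * |(⟪z t, G t⟫ : ℝ)| := by
        calc _ ≤ |(DD t - ((m+3:ℕ):ℝ) * f (z t)) * (⟪z t, G t⟫ : ℝ)| := le_abs_self _
          _ = _ := abs_mul _ _
      have h2 : |DD t - ((m+3:ℕ):ℝ) * f (z t)| * |(⟪z t, G t⟫ : ℝ)|
          ≤ (K * ‖z t‖^(m+4)) * (C' * (‖z t‖^(m+3) * ‖z t‖^(1-ε))) :=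
        mul_le_mul habs2 hZgabs (abs_nonneg _) (by positivity)
      have h3 : (K * ‖z t‖^(m+4)) * (C' * (‖z t‖^(m+3) * ‖z t‖^(1-ε)))
          = K*C' * ((‖z t‖^(2*m+6) * ‖z t‖) * ‖z t‖^(1-ε)) := by ring
      have h4 : K*C' * ((‖z t‖^(2*m+6) * ‖z t‖) * ‖z t‖^(1-ε))
          ≤ K*C' * ((‖z t‖^(2*m+6) * 1) * ‖z t‖^(1-ε)) := by
        gcongr
      calc _ ≤ _ := h1
        _ ≤ _ := h2
        _ = _ := h3
        _ ≤ K*C' * ((‖z t‖^(2*m+6) * 1) * ‖z t‖^(1-ε)) := h4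
        _ = K*C' * (‖z t‖^(2*m+6) * ‖z t‖^(1-ε)) := by ring
    have hbound3 : -(DD t * (DD t - ((m+3:ℕ):ℝ) * f (z t)))
        ≤ (((m+3:ℕ):ℝ)*M₁ + K)*K * (‖z t‖^(2*m+6) * ‖z t‖^(1-ε)) := by
      have h1 : -(DD t * (DD t - ((m+3:ℕ):ℝ) * f (z t)))
          ≤ |DD t| * |DD t - ((m+3:ℕ):ℝ) * f (z t)| := by
        calc _ ≤ |DD t * (DD t - ((m+3:ℕ):ℝ) * f (z t))| := neg_le_abs _
          _ = _ := abs_mul _ _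
      have h2 : |DD t| * |DD t - ((m+3:ℕ):ℝ) * f (z t)|
          ≤ ((((m+3:ℕ):ℝ)*M₁ + K) * ‖z t‖^(m+3)) * (K * ‖z t‖^(m+4)) :=
        mul_le_mul hDabs habs2 (abs_nonneg _) (by positivity)
      have h3 : ((((m+3:ℕ):ℝ)*M₁ + K) * ‖z t‖^(m+3)) * (K * ‖z t‖^(m+4))
          = (((m+3:ℕ):ℝ)*M₁ + K)*K * (‖z t‖^(2*m+6) * ‖z t‖) := by ring
      have h4 : (((m+3:ℕ):ℝ)*M₁ + K)*K * (‖z t‖^(2*m+6) * ‖z t‖)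
          ≤ (((m+3:ℕ):ℝ)*M₁ + K)*K * (‖z t‖^(2*m+6) * ‖z t‖^(1-ε)) := by
        refine mul_le_mul_of_nonneg_left ?_ (by positivity)
        exact mul_le_mul_of_nonneg_left hRle (by positivity)
      calc _ ≤ _ := h1
        _ ≤ _ := h2
        _ = _ := h3
        _ ≤ _ := h4
    have hNbound : N ≤ B * (‖z t‖^(2*m+6) * ‖z t‖^(1-ε)) := by
      rw [hN, hBdef]
      set P : ℝ := ‖z t‖^(2*m+6) * ‖z t‖^(1-ε) with hPdef
      have hpos : (0:ℝ) ≤ P := by rw [hPdef]; positivity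
      set T1 : ℝ := ‖z t‖^2 * (a - b^2) with hT1
      set T2 : ℝ := (DD t - ((m+3:ℕ):ℝ) * f (z t)) * (⟪z t, G t⟫ : ℝ) with hT2
      set T3 : ℝ := DD t * (DD t - ((m+3:ℕ):ℝ) * f (z t)) with hT3
      have hexpand : (C'^2/4 + K*C' + (((m+3:ℕ):ℝ)*M₁ + K)*K + 1) * P
          = C'^2/4 * P + K*C' * P + (((m+3:ℕ):ℝ)*M₁ + K)*K * P + P := by ring
      rw [hexpand]
      clear_value P T1 T2 T3
      calc T1 + T2 - T3 = T1 + T2 + -T3 := by ring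
        _ ≤ C'^2/4 * P + K*C' * P + (((m+3:ℕ):ℝ)*M₁ + K)*K * P :=
            add_le_add (add_le_add hbound1 hbound2) hbound3
        _ ≤ C'^2/4 * P + K*C' * P + (((m+3:ℕ):ℝ)*M₁ + K)*K * P + P :=
            le_add_of_nonneg_right hpos
    -- conclude
    have hrdlb := est_r t htT hqt
    have hqd_le : qd t ≤ B * (‖z t‖^(m+1) * ‖z t‖^(1-ε)) := by
      rw [hqd_eq]
      rw [div_le_iff₀ (by positivity : (0:ℝ) < ‖z t‖^(m+5))]
      calc N ≤ B * (‖z t‖^(2*m+6) * ‖z t‖^(1-ε)) := hNbound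
        _ = B * (‖z t‖^(m+1) * ‖z t‖^(1-ε)) * ‖z t‖^(m+5) := by ring
    have hRHS : B * (‖z t‖^(m+1) * ‖z t‖^(1-ε))
        ≤ lam * ((1-ε) * ‖z t‖^((1-ε)-1) * rd t) := by
      have hexp : ‖z t‖^((1-ε)-1) = ‖z t‖^(1-ε) / ‖z t‖ := by
        rw [show ((1-ε)-1 : ℝ) = (1-ε) + (-1) from by ring, Real.rpow_add hr0,
          Real.rpow_neg_one]
        ring
      rw [hexp]
      have h1 : lam * ((1-ε) * (‖z t‖^(1-ε) / ‖z t‖) * rd t)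
          ≥ lam * ((1-ε) * (‖z t‖^(1-ε) / ‖z t‖) * (((m+3:ℕ):ℝ)*c/4 * ‖z t‖^(m+2))) := by
        refine mul_le_mul_of_nonneg_left ?_ hlam0.le
        refine mul_le_mul_of_nonneg_left hrdlb ?_
        positivity
      have h2 : lam * ((1-ε) * (‖z t‖^(1-ε) / ‖z t‖) * (((m+3:ℕ):ℝ)*c/4 * ‖z t‖^(m+2)))
          = (lam * (1-ε) * (((m+3:ℕ):ℝ)*c/4)) * (‖z t‖^(m+1) * ‖z t‖^(1-ε)) := by
        field_simp
        ring
      rw [h2, hlamB] at h1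
      exact h1
    exact hqd_le.trans hRHS
  -- convergence of q along the sequence
  have hq_seq : Tendsto (fun n => qq (tseq n)) atTop (nhds (fp θstar)) := by
    have hr_seq : Tendsto (fun n => ‖z (tseq n)‖) atTop (nhds 0) := by
      have h1 : Tendsto (fun n => z (tseq n)) atTop (nhds 0) := hz0.comp htseq
      have h2 := (continuous_norm.tendsto (0 : EuclideanSpace ℝ (Fin J))).comp h1
      simpa [Function.comp_def] using h2
    have hθ_seq : Tendsto (fun n => fp (‖z (tseq n)‖⁻¹ • z (tseq n))) atTop
        (nhds (fp θstar)) := (hfp_cont.tendsto θstar).comp hconv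
    have hdiff : Tendsto (fun n => qq (tseq n) - fp (‖z (tseq n)‖⁻¹ • z (tseq n)))
        atTop (nhds 0) := by
      have hbound : ∀ᶠ n in atTop,
          ‖qq (tseq n) - fp (‖z (tseq n)‖⁻¹ • z (tseq n))‖ ≤ K * ‖z (tseq n)‖ := by
        filter_upwards [hr_seq.eventually_lt_const hρ0] with n hn
        have h0 : 0 ≤ tseq n := htseq_nonneg n
        have hrn : 0 < ‖z (tseq n)‖ := hrpos _ h0
        have h1 := hEst1 (z (tseq n)) hn.le
        have h2 : fp (‖z (tseq n)‖⁻¹ • z (tseq n))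
            = (‖z (tseq n)‖⁻¹)^(m+3) * fp (z (tseq n)) := hfp_hom _ _
        rw [hqq]
        simp only
        rw [h2, Real.norm_eq_abs]
        have h3 : f (z (tseq n)) / ‖z (tseq n)‖^(m+3)
            - (‖z (tseq n)‖⁻¹)^(m+3) * fp (z (tseq n))
            = (f (z (tseq n)) - fp (z (tseq n))) / ‖z (tseq n)‖^(m+3) := by
          field_simp
          have hne : ‖z (tseq n)‖ ^ (m+3) ≠ 0 := pow_ne_zero _ hrn.ne'
          rw [one_div, inv_pow, mul_inv_cancel₀ hne, one_mul]
        rw [h3, abs_div, abs_pow, abs_of_pos hrn]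
        rw [div_le_iff₀ (by positivity : (0:ℝ) < ‖z (tseq n)‖^(m+3))]
        calc |f (z (tseq n)) - fp (z (tseq n))| ≤ K * ‖z (tseq n)‖^(m+4) := h1
          _ = K * ‖z (tseq n)‖ * ‖z (tseq n)‖^(m+3) := by ring
      have hKr : Tendsto (fun n => K * ‖z (tseq n)‖) atTop (nhds 0) := by
        have := hr_seq.const_mul K
        simpa using this
      exact squeeze_zero_norm' hbound hKr
    have h4 := hdiff.add hθ_seq
    simpa using h4
  -- pick starting time
  have hq_ev : ∀ᶠ n in atTop, qq (tseq n) < -(3*c/4) := by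
    apply hq_seq.eventually_lt_const
    simp only [hcdef]
    linarith
  obtain ⟨i, hiT, hiq⟩ := ((htseq.eventually_ge_atTop T₀).and hq_ev).exists
  set t₀ : ℝ := tseq i with ht₀def
  have ht₀0 : (0:ℝ) ≤ t₀ := htseq_nonneg i
  -- everything after t₀ stays in the region
  have hcont_q : ∀ t : ℝ, 0 ≤ t → ContinuousAt qq t := fun t ht =>
    (key_q t ht).continuousAt
  have hreg : ∀ s, t₀ ≤ s → qq s ≤ -c/2 := by
    by_contra hbad
    push_neg at hbad
    obtain ⟨s₀, hs₀t, hs₀q⟩ := hbad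
    set Bad : Set ℝ := {s | t₀ ≤ s ∧ -c/2 < qq s} with hBad
    have hBadne : Bad.Nonempty := ⟨s₀, hs₀t, hs₀q⟩
    have hBadbdd : BddBelow Bad := ⟨t₀, fun x hx => hx.1⟩
    set T : ℝ := sInf Bad with hTdef
    have hTt₀ : t₀ ≤ T := le_csInf hBadne (fun x hx => hx.1)
    have hT0 : (0:ℝ) ≤ T := ht₀0.trans hTt₀
    have hTq : -c/2 ≤ qq T := by
      by_contra hlt
      push_neg at hlt
      have hcq : ContinuousAt qq T := hcont_q T hT0
      have hpre : qq ⁻¹' (Set.Iio (-c/2)) ∈ nhds T :=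
        hcq.preimage_mem_nhds (Iio_mem_nhds hlt)
      obtain ⟨η, hη0, hη⟩ := Metric.mem_nhds_iff.mp hpre
      obtain ⟨u, huBad, hu⟩ := Real.lt_sInf_add_pos hBadne hη0
      have hTu : T ≤ u := csInf_le hBadbdd huBad
      have humem : u ∈ Metric.ball T η := by
        rw [Metric.mem_ball, Real.dist_eq, abs_of_nonneg (by linarith)]
        rw [← hTdef] at hu
        linarith
      have := hη humem
      simp only [Set.mem_preimage, Set.mem_Iio] at this
      linarith [huBad.2]
    have hIco : ∀ u, u ∈ Set.Ico t₀ T → qq u ≤ -c/2 := by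
      intro u hu
      by_contra hq'
      push_neg at hq'
      have humem : u ∈ Bad := ⟨hu.1, hq'⟩
      exact absurd (csInf_le hBadbdd humem) (not_le.mpr hu.2)
    have ht₀T : t₀ < T := by
      rcases lt_or_eq_of_le hTt₀ with h | h
      · exact h
      · exfalso
        rw [← h] at hTq
        linarith [hiq]
    set φ : ℝ → ℝ := fun s => qq s - lam * ‖z s‖^(1-ε) with hφ
    have hφderiv : ∀ s : ℝ, 0 ≤ s →
        HasDerivAt φ (qd s - lam * (rd s * (1-ε) * ‖z s‖^((1-ε)-1))) s := by
      intro s hs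
      exact (key_q s hs).sub
        (((key_r s hs).rpow_const (p := 1-ε) (Or.inl (hrpos s hs).ne')).const_mul lam)
    have hanti : AntitoneOn φ (Set.Icc t₀ T) := by
      refine antitoneOn_of_deriv_nonpos (convex_Icc _ _) ?_ ?_ ?_
      · intro s hs
        exact (hφderiv s (ht₀0.trans hs.1)).continuousAt.continuousWithinAt
      · intro s hs
        rw [interior_Icc] at hs
        exact ((hφderiv s (ht₀0.trans hs.1.le)).differentiableAt).differentiableWithinAt
      · intro s hs
        rw [interior_Icc] at hs
        have hsT₀ : T₀ ≤ s := hiT.trans hs.1.le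
        have hsq : qq s ≤ -c/2 := hIco s ⟨hs.1.le, hs.2⟩
        rw [(hφderiv s (ht₀0.trans hs.1.le)).deriv]
        have h9 := est_q s hsT₀ hsq
        have h10 : lam * ((1-ε) * ‖z s‖^((1-ε)-1) * rd s)
            = lam * (rd s * (1-ε) * ‖z s‖^((1-ε)-1)) := by ring
        rw [h10] at h9
        linarith
    have hφt₀T := hanti (Set.left_mem_Icc.mpr ht₀T.le)
      (Set.right_mem_Icc.mpr ht₀T.le) ht₀T.le
    have hrT : ‖z T‖^(1-ε) ≤ δ^(1-ε) :=
      Real.rpow_le_rpow (norm_nonneg _) (hT₀ T (hiT.trans hTt₀)) hε1.le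
    have hrt₀ : 0 ≤ ‖z t₀‖^(1-ε) := Real.rpow_nonneg (norm_nonneg _) _
    have hqT : qq T ≤ qq t₀ + lam * δ^(1-ε) := by
      simp only [hφ] at hφt₀T
      linarith [mul_le_mul_of_nonneg_left hrT hlam0.le,
        mul_nonneg hlam0.le hrt₀]
    linarith [hiq, hδcond2, hTq]
  -- final contradiction: the norm increases at a linear rate
  have hrd_pos : ∀ s, t₀ ≤ s → ((m+3:ℕ):ℝ)*c/4 * ‖z s‖^(m+2) ≤ rd s := fun s hs =>
    est_r s (hiT.trans hs) (hreg s hs)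
  have hmono : StrictMonoOn (fun s => ‖z s‖) (Set.Ici t₀) := by
    refine strictMonoOn_of_deriv_pos (convex_Ici _) ?_ ?_
    · intro s hs
      exact (key_r s (ht₀0.trans hs)).continuousAt.continuousWithinAt
    · intro s hs
      rw [interior_Ici] at hs
      have h0 : (0:ℝ) ≤ s := ht₀0.trans hs.le
      rw [(key_r s h0).deriv]
      have h1 := hrd_pos s hs.le
      have h2 : (0:ℝ) < ((m+3:ℕ):ℝ)*c/4 * ‖z s‖^(m+2) :=
        mul_pos (by positivity) (pow_pos (hrpos s h0) _)
      linarith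
  have hrge : ∀ s, t₀ ≤ s → ‖z t₀‖ ≤ ‖z s‖ := by
    intro s hs
    rcases eq_or_lt_of_le hs with h | h
    · rw [← h]
    · exact (hmono Set.self_mem_Ici (Set.mem_Ici.mpr hs) h).le
  set κ : ℝ := ((m+3:ℕ):ℝ)*c/4 * ‖z t₀‖^(m+2) with hκdef
  have hκ0 : 0 < κ := mul_pos (by positivity) (pow_pos (hrpos t₀ ht₀0) _)
  have hψ : MonotoneOn (fun s => ‖z s‖ - κ * s) (Set.Ici t₀) := by
    refine monotoneOn_of_deriv_nonneg (convex_Ici _) ?_ ?_ ?_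
    · intro s hs
      have h0 : (0:ℝ) ≤ s := ht₀0.trans hs
      exact ((key_r s h0).sub ((hasDerivAt_id s).const_mul κ)).continuousAt.continuousWithinAt
    · intro s hs
      rw [interior_Ici] at hs
      have h0 : (0:ℝ) ≤ s := ht₀0.trans hs.le
      exact ((key_r s h0).sub
        ((hasDerivAt_id s).const_mul κ)).differentiableAt.differentiableWithinAt
    · intro s hs
      rw [interior_Ici] at hs
      have h0 : (0:ℝ) ≤ s := ht₀0.trans hs.le
      have hder : HasDerivAt (fun s => ‖z s‖ - κ * s) (rd s - κ * 1) s :=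
        (key_r s h0).sub ((hasDerivAt_id s).const_mul κ)
      rw [hder.deriv]
      have h1 := hrd_pos s hs.le
      have h2 : κ ≤ ((m+3:ℕ):ℝ)*c/4 * ‖z s‖^(m+2) := by
        rw [hκdef]
        refine mul_le_mul_of_nonneg_left ?_ (by positivity)
        exact pow_le_pow_left₀ (norm_nonneg _) (hrge s hs.le) _
      linarith
  set s₁ : ℝ := t₀ + (δ+1)/κ with hs₁def
  have hs₁t₀ : t₀ ≤ s₁ := by
    have h0 : 0 ≤ (δ+1)/κ := by positivity
    simp only [hs₁def]
    linarith
  have hψs₁ := hψ Set.self_mem_Ici (Set.mem_Ici.mpr hs₁t₀) hs₁t₀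
  simp only at hψs₁
  have hκs : κ * s₁ - κ * t₀ = δ + 1 := by
    simp only [hs₁def]
    field_simp
    ring
  have hfin : ‖z t₀‖ + (δ + 1) ≤ ‖z s₁‖ := by linarith
  have hzs₁ : ‖z s₁‖ ≤ δ := hT₀ s₁ (hiT.trans hs₁t₀)
  have hzt₀pos : 0 < ‖z t₀‖ := hrpos t₀ ht₀0
  linarith
end

section
/- (Theorem 7.1, rate in the positive case) In the setting of Lemma 7.1, if α₀ = lim f̂_p(θ(t)) > 0, then lim_{t→∞} t^{1/(p−2)} ‖z(t)‖ = (α₀ p(p−2))^{−1/(p−2)}. -/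
open Real Filter
open scoped RealInnerProductSpace

set_option maxHeartbeats 1000000 in
lemma key_taylor {E : Type*} [NormedAddCommGroup E] [NormedSpace ℝ E] [CompleteSpace E]
    (f : E → ℝ) (p : ℕ) (hp : 1 ≤ p)
    (hf : AnalyticAt ℝ f 0)
    (hlow : ∀ j < p, iteratedFDeriv ℝ j f 0 = 0) :
    ∃ δ : ℝ, 0 < δ ∧ ∃ A : ℝ, 0 ≤ A ∧ ∀ x : E, ‖x‖ ≤ δ →
      |fderiv ℝ f x x - (p : ℝ) * ((p.factorial : ℝ)⁻¹ * iteratedFDeriv ℝ p f 0 (fun _ => x))|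
        ≤ A * ‖x‖ ^ (p + 1) := by
  obtain ⟨ps, r, hr⟩ := hf
  obtain ⟨ρ, hρ0, hρr⟩ : ∃ ρ : NNReal, 0 < ρ ∧ (ρ : ENNReal) < r := by
    rcases ENNReal.lt_iff_exists_nnreal_btwn.1 hr.r_pos with ⟨ρ, h1, h2⟩
    exact ⟨ρ, by exact_mod_cast h1, h2⟩
  have hρ0' : (0 : ℝ) < ρ := hρ0
  have hρrad : (ρ : ENNReal) < ps.radius := hρr.trans_le hr.r_le
  have hsum : Summable fun n => ‖ps n‖ * (ρ : ℝ) ^ n := ps.summable_norm_mul_pow hρrad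
  set δ : ℝ := (ρ : ℝ) / 2 with hδ
  have hδ0 : 0 < δ := by positivity
  -- diagonal values of low coefficients vanish
  have hdiag : ∀ (y : E) (n : ℕ), n < p → ps n (fun _ => y) = 0 := by
    intro y n hn
    have h1 := hr.factorial_smul y n
    rw [hlow n hn] at h1
    simp only [ContinuousMultilinearMap.zero_apply, smul_eq_zero] at h1
    exact h1.resolve_left (by exact_mod_cast n.factorial_ne_zero)
  have hdiagp : ∀ y : E, ((p.factorial : ℝ)⁻¹ * iteratedFDeriv ℝ p f 0 (fun _ => y))
      = ps p (fun _ => y) := by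
    intro y
    rw [← hr.factorial_smul y p, nsmul_eq_mul]
    rw [← mul_assoc, inv_mul_cancel₀ (by exact_mod_cast p.factorial_ne_zero), one_mul]
  -- summable coefficient series
  set c : ℕ → ℝ := fun n => ((n + p + 1 : ℕ) : ℝ) * ‖ps (n + p + 1)‖ * δ ^ n with hc
  have hcnonneg : ∀ n, 0 ≤ c n := fun n => by positivity
  have hcsum : Summable c := by
    have hshift : Summable fun n => ‖ps (n + (p + 1))‖ * (ρ : ℝ) ^ (n + (p + 1)) :=
      (summable_nat_add_iff (p + 1)).2 hsum
    refine Summable.of_nonneg_of_le hcnonneg (fun n => ?_)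
      (hshift.mul_left (((p : ℝ) + 1) / (ρ : ℝ) ^ (p + 1)))
    have h1 : (n : ℝ) + 1 ≤ 2 ^ n := by
      exact_mod_cast Nat.succ_le_of_lt (Nat.lt_two_pow_self (n := n))
    have h2 : (1 : ℝ) ≤ 2 ^ n := one_le_pow₀ one_le_two
    have hnum : ((n + p + 1 : ℕ) : ℝ) ≤ ((p : ℝ) + 1) * 2 ^ n := by
      push_cast
      nlinarith [Nat.cast_nonneg (α := ℝ) p]
    have hδn : δ ^ n = (ρ : ℝ) ^ n / 2 ^ n := by rw [hδ, div_pow]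
    have hpos : (0 : ℝ) < 2 ^ n := by positivity
    have key : ((n + p + 1 : ℕ) : ℝ) * δ ^ n ≤ ((p : ℝ) + 1) * (ρ : ℝ) ^ n := by
      rw [hδn, ← mul_div_assoc, div_le_iff₀ hpos]
      calc ((n + p + 1 : ℕ) : ℝ) * (ρ : ℝ) ^ n ≤ (((p : ℝ) + 1) * 2 ^ n) * (ρ : ℝ) ^ n := by
            apply mul_le_mul_of_nonneg_right hnum (by positivity)
        _ = ((p : ℝ) + 1) * (ρ : ℝ) ^ n * 2 ^ n := by ring
    have hρpow : (ρ : ℝ) ^ (n + (p + 1)) = (ρ : ℝ) ^ n * (ρ : ℝ) ^ (p + 1) := pow_add _ _ _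
    calc c n = (((n + p + 1 : ℕ) : ℝ) * δ ^ n) * ‖ps (n + p + 1)‖ := by rw [hc]; ring
      _ ≤ (((p : ℝ) + 1) * (ρ : ℝ) ^ n) * ‖ps (n + p + 1)‖ :=
          mul_le_mul_of_nonneg_right key (norm_nonneg _)
      _ = ((p : ℝ) + 1) / (ρ : ℝ) ^ (p + 1) * (‖ps (n + (p + 1))‖ * (ρ : ℝ) ^ (n + (p + 1))) := by
          rw [hρpow, show n + (p + 1) = n + p + 1 from by ring]
          field_simp
  refine ⟨δ, hδ0, ∑' n, c n, tsum_nonneg hcnonneg, fun x hx => ?_⟩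
  have hxball : x ∈ Metric.eball (0 : E) r := by
    rw [Metric.mem_eball, edist_zero_right]
    calc (‖x‖₊ : ENNReal) ≤ (ρ : ENNReal) := by
          rw [ENNReal.coe_le_coe]
          have : ‖x‖ ≤ (ρ : ℝ) := hx.trans (by rw [hδ]; linarith)
          exact this
      _ < r := hρr
  -- the sum for the derivative applied at x
  have h1 : HasSum (fun n => ps.derivSeries n (fun _ => x) x) (fderiv ℝ f x x) := by
    have h0 := (hr.fderiv).hasSum hxball
    rw [zero_add] at h0
    exact h0.mapL (ContinuousLinearMap.apply ℝ ℝ x)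
  set a : ℕ → ℝ := fun m => (m : ℝ) * ps m (fun _ => x) with ha
  have h2 : HasSum (fun n => a (n + 1)) (fderiv ℝ f x x) := by
    refine h1.congr_fun fun n => ?_
    rw [ps.derivSeries_apply_diag n x, ha]
    push_cast [nsmul_eq_mul]
    ring
  have h3 : HasSum a (fderiv ℝ f x x) := by
    have := (hasSum_nat_add_iff (f := a) 1).1 h2
    simpa [ha] using this
  have hsumfin : ∑ i ∈ Finset.range (p + 1), a i = (p : ℝ) * ps p (fun _ => x) := by
    rw [Finset.sum_range_succ]
    have : ∑ i ∈ Finset.range p, a i = 0 := by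
      apply Finset.sum_eq_zero
      intro i hi
      rw [ha]
      simp [hdiag x i (Finset.mem_range.1 hi)]
    rw [this, zero_add, ha]
  have h4 : HasSum (fun n => a (n + (p + 1)))
      (fderiv ℝ f x x - (p : ℝ) * ps p (fun _ => x)) := by
    refine (hasSum_nat_add_iff (f := a) (p + 1)).2 ?_
    rw [hsumfin, sub_add_cancel]
    exact h3
  -- termwise bound
  have hbound : ∀ n, |a (n + (p + 1))| ≤ c n * ‖x‖ ^ (p + 1) := by
    intro n
    have hle : ‖ps (n + (p + 1)) (fun _ => x)‖ ≤ ‖ps (n + (p + 1))‖ * ‖x‖ ^ (n + (p + 1)) := by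
      have := (ps (n + (p + 1))).le_opNorm (fun _ => x)
      simpa [Finset.prod_const] using this
    have hxn : ‖x‖ ^ (n + (p + 1)) ≤ δ ^ n * ‖x‖ ^ (p + 1) := by
      rw [pow_add]
      have h0 : ‖x‖ ^ (p+1) ≤ δ ^ (p+1) := pow_le_pow_left₀ (norm_nonneg _) hx _
      exact mul_le_mul (pow_le_pow_left₀ (norm_nonneg _) hx n) le_rfl (by positivity) (by positivity)
    have : |a (n + (p + 1))| = ((n + (p + 1) : ℕ) : ℝ) * ‖ps (n + (p + 1)) (fun _ => x)‖ := by
      rw [ha, abs_mul, Real.norm_eq_abs, Nat.abs_cast]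
    rw [this, hc]
    have e1 : ((n + (p + 1) : ℕ) : ℝ) * ‖ps (n + (p + 1)) (fun _ => x)‖
        ≤ ((n + (p + 1) : ℕ) : ℝ) * (‖ps (n + (p + 1))‖ * (δ ^ n * ‖x‖ ^ (p + 1))) := by
      apply mul_le_mul_of_nonneg_left _ (by positivity)
      exact hle.trans (mul_le_mul_of_nonneg_left hxn (norm_nonneg _))
    refine e1.trans (le_of_eq ?_)
    rw [show n + (p + 1) = n + p + 1 from by ring]
    ring
  have habs : Summable fun n => |a (n + (p + 1))| :=
    Summable.of_nonneg_of_le (fun n => abs_nonneg _) hbound (hcsum.mul_right _)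
  have h5 : |fderiv ℝ f x x - (p : ℝ) * ps p (fun _ => x)| ≤ (∑' n, c n) * ‖x‖ ^ (p + 1) := by
    rw [← h4.tsum_eq]
    calc |∑' n, a (n + (p + 1))| ≤ ∑' n, |a (n + (p + 1))| := by
          have := norm_tsum_le_tsum_norm (f := fun n => a (n + (p + 1)))
            (by simpa [Real.norm_eq_abs] using habs)
          simpa [Real.norm_eq_abs] using this
      _ ≤ ∑' n, c n * ‖x‖ ^ (p + 1) := Summable.tsum_le_tsum hbound habs (hcsum.mul_right _)
      _ = (∑' n, c n) * ‖x‖ ^ (p + 1) := tsum_mul_right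
  rw [hdiagp x]
  exact h5


lemma deriv_tendsto_div (u v : ℝ → ℝ) (L : ℝ)
    (hu : ∀ t : ℝ, 0 ≤ t → HasDerivAt u (v t) t)
    (hv : Tendsto v atTop (nhds L)) :
    Tendsto (fun t => u t / t) atTop (nhds L) := by
  rw [Metric.tendsto_atTop]
  intro ε hε
  have hε2 : 0 < ε / 2 := by linarith
  obtain ⟨T, hT⟩ := (Metric.tendsto_atTop.1 hv) (ε / 2) hε2
  set T' : ℝ := max T 1 with hT'
  have hT'1 : (1 : ℝ) ≤ T' := le_max_right _ _
  have hT'0 : (0 : ℝ) ≤ T' := by linarith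
  -- mean value bound on [T', t]
  have key : ∀ t, T' ≤ t → |u t - L * t - (u T' - L * T')| ≤ ε / 2 * (t - T') := by
    intro t ht
    have := norm_image_sub_le_of_norm_deriv_le_segment'
      (f := fun s => u s - L * s) (f' := fun s => v s - L) (a := T') (b := t) (C := ε / 2)
      (fun s hs => by
        have hs0 : 0 ≤ s := le_trans hT'0 hs.1
        exact ((hu s hs0).sub ((hasDerivAt_id s).const_mul L)).hasDerivWithinAt.congr_deriv
          (by ring))
      (fun s hs => by
        have hsT : T ≤ s := le_trans (le_max_left _ _) hs.1
        have := hT s hsT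
        rw [Real.dist_eq] at this
        simpa [Real.norm_eq_abs] using this.le)
      t (by constructor <;> [exact ht; exact le_refl t])
    simpa [Real.norm_eq_abs] using this
  set K : ℝ := |u T' - L * T'| with hK
  obtain ⟨M, hM1, hM2⟩ : ∃ M : ℝ, T' ≤ M ∧ 2 * K / ε < M := ⟨max T' (2 * K / ε + 1), le_max_left _ _, by
    have := le_max_right T' (2 * K / ε + 1); linarith⟩
  refine ⟨M, fun t ht => ?_⟩
  have htT' : T' ≤ t := le_trans hM1 ht
  have ht0 : (0 : ℝ) < t := lt_of_lt_of_le (by linarith) htT'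
  have h1 := key t htT'
  have hKt : 2 * K < ε * t := by
    have h2 : 2 * K / ε < t := lt_of_lt_of_le hM2 ht
    calc 2 * K = (2 * K / ε) * ε := by field_simp
      _ < t * ε := by apply mul_lt_mul_of_pos_right h2 hε
      _ = ε * t := by ring
  have habs : |u t - L * t| ≤ K + ε / 2 * (t - T') := by
    have := abs_sub_abs_le_abs_sub (u t - L * t) (u T' - L * T')
    have h3 : |u t - L * t| - K ≤ ε / 2 * (t - T') := le_trans (by rw [hK]; linarith [this]) h1
    linarith
  rw [Real.dist_eq]
  have heq : u t / t - L = (u t - L * t) / t := by field_simp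
  rw [heq, abs_div, abs_of_pos ht0]
  rw [div_lt_iff₀ ht0]
  have hKnn : 0 ≤ K := abs_nonneg _
  nlinarith [habs, hKt, hT'1, htT']


set_option maxHeartbeats 1000000 in
/-- Theorem 7.1, rate in the positive case: in the
perturbed-gradient-flow setting, if `f_p(θ(t)) → α₀ > 0`, then
`t^{1/(p-2)} ‖z(t)‖ → (α₀ p (p-2))^{-1/(p-2)}`. -/
theorem decay_rate_positive_case
    (J p : ℕ) (hp : 3 ≤ p)
    (f fp : EuclideanSpace ℝ (Fin J) → ℝ)
    (hf : ∀ x, AnalyticAt ℝ f x)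
    (hfp : fp = fun z => (p.factorial : ℝ)⁻¹ *
      iteratedFDeriv ℝ p f 0 (fun _ => z))
    (hlow : ∀ j < p, iteratedFDeriv ℝ j f 0 = 0)
    (hfp_ne : fp ≠ 0)
    (z G : ℝ → EuclideanSpace ℝ (Fin J))
    (C ε : ℝ) (hε : 0 < ε) (hε' : ε < 1 / 2)
    (hODE : ∀ t : ℝ, 0 ≤ t → HasDerivAt z (G t - gradient f (z t)) t)
    (hG : ∀ t : ℝ, 0 ≤ t → ‖G t‖ ≤ C * ‖z t‖ ^ ((p : ℝ) - ε))
    (hzne : ∀ t : ℝ, 0 ≤ t → z t ≠ 0)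
    (hz0 : Tendsto z atTop (nhds 0))
    (α₀ : ℝ) (hα₀ : 0 < α₀)
    (hlim : Tendsto (fun t => fp (‖z t‖⁻¹ • z t)) atTop (nhds α₀)) :
    Tendsto (fun t : ℝ => t ^ ((1 : ℝ) / ((p : ℝ) - 2)) * ‖z t‖) atTop
      (nhds ((α₀ * (p : ℝ) * ((p : ℝ) - 2)) ^ (-(1 : ℝ) / ((p : ℝ) - 2)))) := by
  have hp3 : (3 : ℝ) ≤ (p : ℝ) := by exact_mod_cast hp
  have hp2 : (0 : ℝ) < (p : ℝ) - 2 := by linarith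
  have hp2ne : ((p : ℝ) - 2) ≠ 0 := ne_of_gt hp2
  have hC : 0 ≤ C := by
    by_contra h
    push_neg at h
    have hz0pos : (0 : ℝ) < ‖z 0‖ := norm_pos_iff.2 (hzne 0 le_rfl)
    have hpow : (0 : ℝ) < ‖z 0‖ ^ ((p : ℝ) - ε) := Real.rpow_pos_of_pos hz0pos _
    have := (hG 0 le_rfl).trans_lt (mul_neg_of_neg_of_pos h hpow)
    exact absurd this (not_lt.2 (norm_nonneg _))
  obtain ⟨δ, hδ0, A, hA0, hTay⟩ := key_taylor f p (by omega) (hf 0) hlow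
  set e : ℝ := -(((p : ℝ) - 2) / 2) with he
  set u : ℝ → ℝ := fun t => (⟪z t, z t⟫ : ℝ) ^ e with hu_def
  set v : ℝ → ℝ := fun t =>
    (⟪z t, G t - gradient f (z t)⟫ + ⟪G t - gradient f (z t), z t⟫) * e *
      (⟪z t, z t⟫ : ℝ) ^ (e - 1) with hv_def
  have hRpos : ∀ t : ℝ, 0 ≤ t → (0 : ℝ) < ‖z t‖ := fun t ht => norm_pos_iff.2 (hzne t ht)
  have hqpos : ∀ t : ℝ, 0 ≤ t → (0 : ℝ) < (⟪z t, z t⟫ : ℝ) := by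
    intro t ht
    rw [real_inner_self_eq_norm_sq]
    exact pow_pos (hRpos t ht) 2
  have hu : ∀ t : ℝ, 0 ≤ t → HasDerivAt u (v t) t := by
    intro t ht
    have hq : HasDerivAt (fun s => (⟪z s, z s⟫ : ℝ))
        (⟪z t, G t - gradient f (z t)⟫ + ⟪G t - gradient f (z t), z t⟫) t :=
      HasDerivAt.inner ℝ (hODE t ht) (hODE t ht)
    exact hq.rpow_const (Or.inl (ne_of_gt (hqpos t ht)))
  -- rewrite u t in terms of norm
  have hnorm0 : Tendsto (fun t => ‖z t‖) atTop (nhds 0) := by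
    simpa using hz0.norm
  set L : ℝ := α₀ * (p : ℝ) * ((p : ℝ) - 2) with hL
  have hLpos : 0 < L := by
    rw [hL]
    exact mul_pos (mul_pos hα₀ (by linarith)) hp2
  set w : ℝ → ℝ := fun t => ((p : ℝ) - 2) * (p : ℝ) * fp (‖z t‖⁻¹ • z t) with hw_def
  have hwlim : Tendsto w atTop (nhds L) := by
    have := (hlim.const_mul (((p : ℝ) - 2) * (p : ℝ)))
    have heq : (((p : ℝ) - 2) * (p : ℝ)) * α₀ = L := by rw [hL]; ring
    rw [heq] at this
    exact this.congr (fun t => by rw [hw_def])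
  -- the key pointwise estimate
  set g : ℝ → ℝ := fun t => ((p : ℝ) - 2) * (A * ‖z t‖ + C * ‖z t‖ ^ ((1 : ℝ) - ε)) with hg_def
  have hglim : Tendsto g atTop (nhds 0) := by
    have h1 : Tendsto (fun t => ‖z t‖ ^ ((1 : ℝ) - ε)) atTop (nhds 0) := by
      have hc : ContinuousAt (fun x : ℝ => x ^ ((1 : ℝ) - ε)) 0 :=
        Real.continuousAt_rpow_const 0 _ (Or.inr (by linarith))
      have := hc.tendsto.comp hnorm0
      simpa [Function.comp_def, Real.zero_rpow (show (1 : ℝ) - ε ≠ 0 by linarith)] using this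
    have h2 : Tendsto (fun t => A * ‖z t‖ + C * ‖z t‖ ^ ((1 : ℝ) - ε)) atTop
        (nhds (A * 0 + C * 0)) := (hnorm0.const_mul A).add (h1.const_mul C)
    have := h2.const_mul (((p : ℝ) - 2))
    simpa [hg_def] using this
  have hvw : ∀ᶠ t in atTop, |v t - w t| ≤ g t := by
    filter_upwards [eventually_ge_atTop (0 : ℝ),
      hnorm0.eventually (gt_mem_nhds hδ0)] with t ht hδt
    set R : ℝ := ‖z t‖ with hR
    have hR0 : 0 < R := hRpos t ht
    set θ : EuclideanSpace ℝ (Fin J) := R⁻¹ • z t with hθ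
    have hzθ : z t = R • θ := by
      rw [hθ, smul_inv_smul₀ (ne_of_gt hR0)]
    -- homogeneity
    have hfph : fp (z t) = R ^ p * fp θ := by
      have hmap := (iteratedFDeriv ℝ p f 0).map_smul_univ (fun _ : Fin p => R) (fun _ => θ)
      rw [hfp]
      simp only
      rw [hzθ]
      rw [show (fun _ : Fin p => R • θ) = (fun i : Fin p => (fun _ : Fin p => R) i • (fun _ : Fin p => θ) i) from rfl, hmap]
      simp [Finset.prod_const, smul_eq_mul]
      ring
    -- gradient identity
    have hgrad : (⟪z t, gradient f (z t)⟫ : ℝ) = fderiv ℝ f (z t) (z t) := by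
      rw [real_inner_comm]
      exact InnerProductSpace.toDual_symm_apply
    -- Taylor bound
    have hT : |fderiv ℝ f (z t) (z t) - (p : ℝ) * fp (z t)| ≤ A * R ^ (p + 1) := by
      have := hTay (z t) (le_of_lt hδt)
      rw [hfp]
      simpa using this
    -- rewrite q powers
    have hq2 : (⟪z t, z t⟫ : ℝ) = R ^ 2 := real_inner_self_eq_norm_sq (z t)
    have hqe1 : (⟪z t, z t⟫ : ℝ) ^ (e - 1) = R ^ (-(p : ℝ)) := by
      rw [hq2, ← Real.rpow_natCast R 2, ← Real.rpow_mul (le_of_lt hR0)]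
      congr 1
      rw [he]
      push_cast
      ring
    -- the inner product sum
    have hsum2 : (⟪z t, G t - gradient f (z t)⟫ + ⟪G t - gradient f (z t), z t⟫ : ℝ)
        = 2 * (⟪z t, G t⟫ - fderiv ℝ f (z t) (z t)) := by
      have h1 : (⟪G t - gradient f (z t), z t⟫ : ℝ) = ⟪z t, G t⟫ - fderiv ℝ f (z t) (z t) := by
        rw [inner_sub_left, real_inner_comm (z t) (G t),
          real_inner_comm (z t) (gradient f (z t)), hgrad]
      rw [real_inner_comm (G t - gradient f (z t)) (z t), h1]
      ring
    -- now compute v t - w t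
    have hv_eq : v t = -((p : ℝ) - 2) * (R ^ (-(p : ℝ)) * (⟪z t, G t⟫ - fderiv ℝ f (z t) (z t))) := by
      rw [hv_def]
      simp only
      rw [hsum2, hqe1, he]
      ring
    -- fderiv = p fp z + T, fp z = R^p fp θ
    set T : ℝ := fderiv ℝ f (z t) (z t) - (p : ℝ) * fp (z t) with hTdef
    have hfd : fderiv ℝ f (z t) (z t) = (p : ℝ) * (R ^ p * fp θ) + T := by
      rw [hTdef, hfph]; ring
    have hRcancel : R ^ (-(p : ℝ)) * R ^ p = 1 := by
      rw [← Real.rpow_natCast R p, ← Real.rpow_add hR0]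
      simp
    have hvt : v t - w t = -((p : ℝ) - 2) * (R ^ (-(p : ℝ)) * ⟪z t, G t⟫)
        + ((p : ℝ) - 2) * (R ^ (-(p : ℝ)) * T) := by
      rw [hv_eq, hfd, hw_def]
      simp only
      linear_combination (((p : ℝ) - 2) * (p : ℝ) * fp (R⁻¹ • z t)) * hRcancel
    -- bounds
    have hb1 : |R ^ (-(p : ℝ)) * T| ≤ A * R := by
      rw [abs_mul, abs_of_pos (Real.rpow_pos_of_pos hR0 _)]
      calc R ^ (-(p : ℝ)) * |T| ≤ R ^ (-(p : ℝ)) * (A * R ^ (p + 1)) := by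
            apply mul_le_mul_of_nonneg_left hT (le_of_lt (Real.rpow_pos_of_pos hR0 _))
        _ = A * R := by
            rw [← Real.rpow_natCast R (p + 1), ← mul_assoc, mul_comm (R ^ (-(p:ℝ))) A,
              mul_assoc, ← Real.rpow_add hR0]
            push_cast
            rw [show -(p : ℝ) + ((p : ℝ) + 1) = 1 by ring, Real.rpow_one]
    have hb2 : |R ^ (-(p : ℝ)) * ⟪z t, G t⟫| ≤ C * R ^ ((1 : ℝ) - ε) := by
      rw [abs_mul, abs_of_pos (Real.rpow_pos_of_pos hR0 _)]
      have hig : |(⟪z t, G t⟫ : ℝ)| ≤ R * (C * R ^ ((p : ℝ) - ε)) := by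
        calc |(⟪z t, G t⟫ : ℝ)| ≤ ‖z t‖ * ‖G t‖ := abs_real_inner_le_norm _ _
          _ ≤ R * (C * R ^ ((p : ℝ) - ε)) :=
            mul_le_mul_of_nonneg_left (hG t ht) (norm_nonneg _)
      calc R ^ (-(p : ℝ)) * |(⟪z t, G t⟫ : ℝ)|
          ≤ R ^ (-(p : ℝ)) * (R * (C * R ^ ((p : ℝ) - ε))) :=
            mul_le_mul_of_nonneg_left hig (le_of_lt (Real.rpow_pos_of_pos hR0 _))
        _ = C * R ^ ((1 : ℝ) - ε) := by
            rw [show R * (C * R ^ ((p : ℝ) - ε)) = C * (R ^ (1:ℝ) * R ^ ((p : ℝ) - ε)) by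
              rw [Real.rpow_one]; ring]
            rw [← Real.rpow_add hR0, ← mul_assoc, mul_comm (R ^ (-(p:ℝ))) C, mul_assoc,
              ← Real.rpow_add hR0]
            congr 1
            ring
    rw [hvt, hg_def]
    have hX : |-((p : ℝ) - 2) * (R ^ (-(p : ℝ)) * ⟪z t, G t⟫)|
        = ((p : ℝ) - 2) * |R ^ (-(p : ℝ)) * ⟪z t, G t⟫| := by
      rw [abs_mul, abs_neg, abs_of_pos hp2]
    have hY : |((p : ℝ) - 2) * (R ^ (-(p : ℝ)) * T)|
        = ((p : ℝ) - 2) * |R ^ (-(p : ℝ)) * T| := by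
      rw [abs_mul, abs_of_pos hp2]
    calc |-((p : ℝ) - 2) * (R ^ (-(p : ℝ)) * ⟪z t, G t⟫)
        + ((p : ℝ) - 2) * (R ^ (-(p : ℝ)) * T)|
        ≤ |-((p : ℝ) - 2) * (R ^ (-(p : ℝ)) * ⟪z t, G t⟫)|
          + |((p : ℝ) - 2) * (R ^ (-(p : ℝ)) * T)| := abs_add_le _ _
      _ = ((p : ℝ) - 2) * |R ^ (-(p : ℝ)) * ⟪z t, G t⟫|
          + ((p : ℝ) - 2) * |R ^ (-(p : ℝ)) * T| := by rw [hX, hY]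
      _ ≤ ((p : ℝ) - 2) * (C * R ^ ((1 : ℝ) - ε)) + ((p : ℝ) - 2) * (A * R) := by
          gcongr
      _ = ((p : ℝ) - 2) * (A * ‖z t‖ + C * ‖z t‖ ^ ((1 : ℝ) - ε)) := by
          rw [hR]; ring
  -- v tends to L
  have hvlim : Tendsto v atTop (nhds L) := by
    have h0 : Tendsto (fun t => v t - w t) atTop (nhds 0) :=
      squeeze_zero_norm' (by simpa [Real.norm_eq_abs] using hvw) hglim
    have := h0.add hwlim
    rw [zero_add] at this
    exact this.congr (fun t => by ring)
  -- apply the division lemma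
  have hudiv : Tendsto (fun t => u t / t) atTop (nhds L) := deriv_tendsto_div u v L hu hvlim
  -- final conversion
  set m : ℝ := -(1 : ℝ) / ((p : ℝ) - 2) with hm
  have hcont : ContinuousAt (fun x : ℝ => x ^ m) L :=
    Real.continuousAt_rpow_const L m (Or.inl (ne_of_gt hLpos))
  have hcomp : Tendsto (fun t => (u t / t) ^ m) atTop (nhds (L ^ m)) :=
    hcont.tendsto.comp hudiv
  refine hcomp.congr' ?_
  filter_upwards [eventually_ge_atTop (1 : ℝ)] with t ht1
  have ht0 : (0 : ℝ) < t := by linarith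
  have hR0 : 0 < ‖z t‖ := hRpos t (by linarith)
  have hue : u t = ‖z t‖ ^ (-((p : ℝ) - 2)) := by
    rw [hu_def]
    simp only
    rw [real_inner_self_eq_norm_sq, ← Real.rpow_natCast (‖z t‖) 2,
      ← Real.rpow_mul (norm_nonneg _)]
    congr 1
    rw [he]
    push_cast
    ring
  rw [hue]
  rw [div_eq_mul_inv, ← Real.rpow_neg_one t]
  rw [Real.mul_rpow (Real.rpow_nonneg (norm_nonneg _) _) (Real.rpow_nonneg (le_of_lt ht0) _)]
  rw [← Real.rpow_mul (norm_nonneg _), ← Real.rpow_mul (le_of_lt ht0)]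
  have h1 : (-((p : ℝ) - 2)) * m = 1 := by rw [hm]; field_simp
  have h2 : (-1 : ℝ) * m = 1 / ((p : ℝ) - 2) := by rw [hm]; field_simp
  rw [h1, h2, Real.rpow_one, mul_comm]
end

section
/- (Lower bound on decay rate, Lemma 5.4(1)) Let z : [1,∞) → ℝ^J be C¹ with z(t) → 0 as t → ∞, z(t) ≠ 0 for all t, and suppose ‖z′(t)‖ ≤ C‖z(t)‖² for all t ≥ 1 and some constant C > 0. Then there exists C′ > 0 such that ‖z(t)‖ ≥ C′^{−1} t^{−1} for all t ≥ 1. -/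
open Real Filter

/-- Lemma 5.4(1): a `C¹` curve `z` in `ℝ^J` with quadratic speed
bound `‖z'‖ ≤ C‖z‖²`, converging to `0` and never zero on `[1,∞)`, satisfies
`‖z(t)‖ ≥ C'⁻¹ t⁻¹` for some `C' > 0`. -/
theorem decay_lower_bound
    (J : ℕ) (z z' : ℝ → EuclideanSpace ℝ (Fin J)) (C : ℝ) (hC : 0 < C)
    (hderiv : ∀ t, 1 ≤ t → HasDerivAt z (z' t) t)
    (hbound : ∀ t, 1 ≤ t → ‖z' t‖ ≤ C * ‖z t‖ ^ 2)
    (hz0 : Tendsto z atTop (nhds 0))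
    (hzne : ∀ t, 1 ≤ t → z t ≠ 0) :
    ∃ C' > (0 : ℝ), ∀ t, 1 ≤ t → C'⁻¹ * t⁻¹ ≤ ‖z t‖ := by
  set g : ℝ → ℝ := fun t => ‖z t‖⁻¹ with hg
  set g' : ℝ → ℝ := fun t => -((inner ℝ (z t) (z' t) : ℝ) / ‖z t‖ / ‖z t‖ ^ 2) with hg'
  have hnpos : ∀ t, 1 ≤ t → 0 < ‖z t‖ := fun t ht => norm_pos_iff.mpr (hzne t ht)
  -- derivative of g on Ici 1
  have hgdiff : ∀ t ∈ Set.Ici (1:ℝ), HasDerivWithinAt g (g' t) (Set.Ici 1) t := by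
    intro t ht
    have ht' : (1:ℝ) ≤ t := ht
    have hn := hnpos t ht'
    have hq : HasDerivAt (fun s => (inner ℝ (z s) (z s) : ℝ))
        ((inner ℝ (z t) (z' t) : ℝ) + (inner ℝ (z' t) (z t) : ℝ)) t :=
      (hderiv t ht').inner ℝ (hderiv t ht')
    have hq2 : HasDerivAt (fun s => (inner ℝ (z s) (z s) : ℝ))
        (2 * (inner ℝ (z t) (z' t) : ℝ)) t := by
      convert hq using 1
      rw [real_inner_comm (z' t) (z t)]; ring
    have hsq : HasDerivAt (fun s => Real.sqrt (inner ℝ (z s) (z s) : ℝ))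
        (2 * (inner ℝ (z t) (z' t) : ℝ) / (2 * Real.sqrt ((inner ℝ (z t) (z t) : ℝ)))) t := by
      have := (Real.hasDerivAt_sqrt (x := (inner ℝ (z t) (z t) : ℝ)) ?_).comp t hq2
      · exact this.congr_deriv (by ring)
      have : (inner ℝ (z t) (z t) : ℝ) = ‖z t‖ ^ 2 := real_inner_self_eq_norm_sq (z t)
      rw [this]; positivity
    have hnorm : HasDerivAt (fun s => ‖z s‖) ((inner ℝ (z t) (z' t) : ℝ) / ‖z t‖) t := by
      have heq : (fun s => Real.sqrt (inner ℝ (z s) (z s) : ℝ)) = fun s => ‖z s‖ := by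
        funext s; rw [real_inner_self_eq_norm_sq, Real.sqrt_sq (norm_nonneg _)]
      have hval : 2 * (inner ℝ (z t) (z' t) : ℝ) / (2 * Real.sqrt ((inner ℝ (z t) (z t) : ℝ)))
          = (inner ℝ (z t) (z' t) : ℝ) / ‖z t‖ := by
        rw [real_inner_self_eq_norm_sq, Real.sqrt_sq (norm_nonneg _)]
        ring
      rw [← heq, ← hval]; exact hsq
    have := (hnorm.inv hn.ne').hasDerivWithinAt (s := Set.Ici 1)
    refine this.congr_deriv ?_
    rw [hg']; field_simp
  -- bound on g'
  have hgbound : ∀ t ∈ Set.Ici (1:ℝ), ‖g' t‖ ≤ C := by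
    intro t ht
    have ht' : (1:ℝ) ≤ t := ht
    have hn := hnpos t ht'
    have h1 : |(inner ℝ (z t) (z' t) : ℝ)| ≤ ‖z t‖ * ‖z' t‖ := abs_real_inner_le_norm _ _
    have h2 : ‖z t‖ * ‖z' t‖ ≤ ‖z t‖ * (C * ‖z t‖ ^ 2) :=
      mul_le_mul_of_nonneg_left (hbound t ht') (norm_nonneg _)
    rw [hg', Real.norm_eq_abs, abs_neg, abs_div, abs_div, abs_of_pos hn,
      abs_of_pos (pow_pos hn 2)]
    rw [div_div, div_le_iff₀ (by positivity)]
    calc |(inner ℝ (z t) (z' t) : ℝ)| ≤ ‖z t‖ * (C * ‖z t‖ ^ 2) := h1.trans h2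
      _ = C * (‖z t‖ * ‖z t‖ ^ 2) := by ring
  -- mean value inequality
  have key : ∀ t, 1 ≤ t → g t ≤ g 1 + C * (t - 1) := by
    intro t ht
    have := (convex_Ici (1:ℝ)).norm_image_sub_le_of_norm_hasDerivWithin_le
      hgdiff hgbound Set.self_mem_Ici (by exact ht)
    have h := (abs_le.mp (by simpa [Real.norm_eq_abs, abs_of_nonneg (sub_nonneg.mpr ht)] using this)).2
    linarith
  refine ⟨g 1 + C, by positivity, fun t ht => ?_⟩
  have hn := hnpos t ht
  have hg1 : 0 < g 1 := by
    have := hnpos 1 le_rfl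
    rw [hg]; positivity
  have hC't : 0 < (g 1 + C) * t := by positivity
  have hgt : g t ≤ (g 1 + C) * t := by
    have := key t ht
    nlinarith [hg1]
  rw [← mul_inv]
  have := inv_anti₀ (by positivity : (0:ℝ) < ‖z t‖⁻¹) hgt
  rwa [inv_inv] at this
end

section
/- (Almost-monotonicity, Lemma 5.4(2)) Let z : [0,∞) → ℝ^J ∖ {0} be C¹ with ‖z′(t)‖ ≤ C‖z(t)‖² and ‖z(t)‖ → 0 as t → ∞. Then for every ε > 0 there exists t₀ such that on [t₀,∞) the function e^{−εt}‖z(t)‖ is non-increasing and the function e^{εt}‖z(t)‖ is non-decreasing. -/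
open Real Filter

/-- Lemma 5.4(2), almost-monotonicity: a never-vanishing `C¹`
curve `z` with `‖z'‖ ≤ C‖z‖²` and `‖z‖ → 0` satisfies: for every `ε > 0`
there is `t₀` such that `e^{-εt}‖z(t)‖` is non-increasing and `e^{εt}‖z(t)‖`
is non-decreasing on `[t₀,∞)`. -/
theorem almost_monotonicity
    (J : ℕ) (z z' : ℝ → EuclideanSpace ℝ (Fin J)) (C : ℝ) (hC : 0 < C)
    (hderiv : ∀ t, 0 ≤ t → HasDerivAt z (z' t) t)
    (hbound : ∀ t, 0 ≤ t → ‖z' t‖ ≤ C * ‖z t‖ ^ 2)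
    (hzne : ∀ t, 0 ≤ t → z t ≠ 0)
    (hz0 : Tendsto (fun t => ‖z t‖) atTop (nhds 0)) :
    ∀ ε > (0 : ℝ), ∃ t₀ ≥ (0 : ℝ),
      AntitoneOn (fun t => Real.exp (-ε * t) * ‖z t‖) (Set.Ici t₀) ∧
      MonotoneOn (fun t => Real.exp (ε * t) * ‖z t‖) (Set.Ici t₀) := by
  intro ε hε
  -- choose t₀ with C * ‖z t‖ ≤ ε for t ≥ t₀
  obtain ⟨a, ha⟩ := (Filter.eventually_atTop.1
    (hz0.eventually_lt_const (show (0:ℝ) < ε / C by positivity)))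
  refine ⟨max a 0, le_max_right _ _, ?_, ?_⟩
  all_goals {
    have ht0 : (0:ℝ) ≤ max a 0 := le_max_right _ _
    have hsmall : ∀ t ∈ Set.Ici (max a 0), C * ‖z t‖ ≤ ε := by
      intro t ht
      have := ha t (le_trans (le_max_left a 0) ht)
      calc C * ‖z t‖ ≤ C * (ε / C) := by
            exact mul_le_mul_of_nonneg_left this.le hC.le
        _ = ε := by field_simp
    have hnn : ∀ t ∈ Set.Ici (max a 0), (0:ℝ) ≤ t := fun t ht => le_trans ht0 ht
    -- squared versions
    have key : ∀ (s : ℝ), s = ε ∨ s = -ε →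
        ∀ t ∈ Set.Ici (max a 0), HasDerivAt
          (fun t => Real.exp (2 * s * t) * ‖z t‖ ^ 2)
          (Real.exp (2 * s * t) * (2 * s) * ‖z t‖ ^ 2
            + Real.exp (2 * s * t) * (2 * inner ℝ (z t) (z' t))) t := by
      intro s _ t ht
      have h1 : HasDerivAt (fun t : ℝ => Real.exp (2 * s * t))
          (Real.exp (2 * s * t) * (2 * s)) t :=
        by simpa using ((hasDerivAt_id t).const_mul (2 * s)).exp
      have h2 : HasDerivAt (fun t => ‖z t‖ ^ 2)
          (2 * inner ℝ (z t) (z' t)) t := (hderiv t (hnn t ht)).norm_sq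
      exact h1.mul h2
    have hinner : ∀ t ∈ Set.Ici (max a 0),
        |2 * inner ℝ (z t) (z' t)| ≤ 2 * ε * ‖z t‖ ^ 2 := by
      intro t ht
      have hn := hnn t ht
      have h1 : |(inner ℝ (z t) (z' t) : ℝ)| ≤ ‖z t‖ * ‖z' t‖ :=
        abs_real_inner_le_norm _ _
      have h2 : ‖z t‖ * ‖z' t‖ ≤ ‖z t‖ * (C * ‖z t‖ ^ 2) :=
        mul_le_mul_of_nonneg_left (hbound t hn) (norm_nonneg _)
      have h3 : C * ‖z t‖ ≤ ε := hsmall t ht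
      have hz := norm_nonneg (z t)
      rw [abs_mul, abs_two]
      nlinarith [sq_nonneg (‖z t‖)]
    first
    | · -- Antitone case
        have hsqA : AntitoneOn (fun t => Real.exp (2 * (-ε) * t) * ‖z t‖ ^ 2)
            (Set.Ici (max a 0)) := by
          apply antitoneOn_of_hasDerivWithinAt_nonpos (convex_Ici _)
          · intro t ht
            exact ((key (-ε) (Or.inr rfl) t ht).continuousAt).continuousWithinAt
          · intro t ht
            rw [interior_Ici] at ht
            exact ((key (-ε) (Or.inr rfl) t (Set.mem_Ici.2 (le_of_lt (Set.mem_Ioi.1 ht)))).hasDerivWithinAt)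
          · intro t ht
            rw [interior_Ici] at ht
            have := hinner t (Set.mem_Ici.2 (le_of_lt (Set.mem_Ioi.1 ht)))
            have he : (0:ℝ) < Real.exp (2 * (-ε) * t) := Real.exp_pos _
            have h4 : 2 * inner ℝ (z t) (z' t) ≤ 2 * ε * ‖z t‖ ^ 2 :=
              (abs_le.1 this).2
            nlinarith
        intro x hx y hy hxy
        have := hsqA hx hy hxy
        have hx' : (0:ℝ) ≤ Real.exp (-ε * x) * ‖z x‖ := by positivity
        have hy' : (0:ℝ) ≤ Real.exp (-ε * y) * ‖z y‖ := by positivity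
        have hsq : (Real.exp (-ε * y) * ‖z y‖) ^ 2
            ≤ (Real.exp (-ε * x) * ‖z x‖) ^ 2 := by
          have ex : ∀ u : ℝ, (Real.exp (-ε * u) * ‖z u‖) ^ 2
              = Real.exp (2 * (-ε) * u) * ‖z u‖ ^ 2 := by
            intro u
            rw [mul_pow, ← Real.exp_nat_mul]
            ring_nf
          rw [ex, ex]; exact this
        have := Real.sqrt_le_sqrt hsq
        rwa [Real.sqrt_sq hy', Real.sqrt_sq hx'] at this
    | · -- Monotone case
        have hsqM : MonotoneOn (fun t => Real.exp (2 * ε * t) * ‖z t‖ ^ 2)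
            (Set.Ici (max a 0)) := by
          apply monotoneOn_of_hasDerivWithinAt_nonneg (convex_Ici _)
          · intro t ht
            exact ((key ε (Or.inl rfl) t ht).continuousAt).continuousWithinAt
          · intro t ht
            rw [interior_Ici] at ht
            exact ((key ε (Or.inl rfl) t (Set.mem_Ici.2 (le_of_lt (Set.mem_Ioi.1 ht)))).hasDerivWithinAt)
          · intro t ht
            rw [interior_Ici] at ht
            have := hinner t (Set.mem_Ici.2 (le_of_lt (Set.mem_Ioi.1 ht)))
            have he : (0:ℝ) < Real.exp (2 * ε * t) := Real.exp_pos _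
            have h4 : -(2 * ε * ‖z t‖ ^ 2) ≤ 2 * inner ℝ (z t) (z' t) :=
              (abs_le.1 this).1
            nlinarith
        intro x hx y hy hxy
        have := hsqM hx hy hxy
        have hx' : (0:ℝ) ≤ Real.exp (ε * x) * ‖z x‖ := by positivity
        have hy' : (0:ℝ) ≤ Real.exp (ε * y) * ‖z y‖ := by positivity
        have hsq : (Real.exp (ε * x) * ‖z x‖) ^ 2
            ≤ (Real.exp (ε * y) * ‖z y‖) ^ 2 := by
          have ex : ∀ u : ℝ, (Real.exp (ε * u) * ‖z u‖) ^ 2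
              = Real.exp (2 * ε * u) * ‖z u‖ ^ 2 := by
            intro u
            rw [mul_pow, ← Real.exp_nat_mul]
            ring_nf
          rw [ex, ex]; exact this
        have := Real.sqrt_le_sqrt hsq
        rwa [Real.sqrt_sq hx', Real.sqrt_sq hy'] at this
  }
end
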